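/- arXiv:1611.09536 — 7 statements merged into one kernel-verified Lean document; each statement's English description precedes it below -/
import Mathlib

section
/- For any graph G of order n with restraint r, and for all x greater than or equal to the maximum restrained colour M_{G,r}, the function x ↦ π_r(G,x) agrees with a monic polynomial of degree n with integer coefficients that alternate in sign. -/
/-- The number of proper `x`-colourings of `G` (colours `1,…,x`) permitted by the restraint `r`,
i.e. proper colourings `c` with `c v ∉ r v` for all `v`. -/
noncomputable def rcount {V : Type} [Fintype V] (G : SimpleGraph V) (r : V → Finset ℕ)
    (x : ℕ) : ℕ := by
  classical
  exact ((Fintype.piFinset fun _ : V => Finset.Icc 1 x).filter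
    (fun c => (∀ v w, G.Adj v w → c v ≠ c w) ∧ ∀ v, c v ∉ r v)).card

/-!
Deletion–contraction: for an edge `uw`, a restrained colouring of `G - uw` either separates `u`
and `w`, and is then a restrained colouring of `G`, or gives them the same colour, and is then a
restrained colouring of `G / uw` in which the merged vertex carries `r u ∪ r w`. Hence
`π_r(G) = π_r(G - uw) - π_r(G / uw)` for `x ≥ M_{G,r}`, and by induction on vertices and edges
this is the difference of a monic sign-alternating polynomial of degree `n` and one of degree
`n - 1`, which is again monic and sign-alternating of degree `n`. For the edgeless graph,
`π_r = ∏ v, (x - #(r v \ {0}))`, since colour `0` is never available.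
-/

open Polynomial Finset

namespace Polynomial

/-- The exponent `n + i` stands for `n - i`: same parity, but no truncated subtraction. -/
def IsMonicSignAlternating (n : ℕ) (p : ℤ[X]) : Prop :=
  p.Monic ∧ p.natDegree = n ∧ ∀ i, 0 ≤ (-1) ^ (n + i) * p.coeff i

namespace IsMonicSignAlternating

variable {n : ℕ} {p q : ℤ[X]}

theorem neg_one_pow_sub_mul_coeff_nonneg (hp : IsMonicSignAlternating n p) {i : ℕ}
    (hi : i ≤ n) :
    0 ≤ (-1) ^ (n - i) * p.coeff i := by
  have h := hp.2.2 i
  rwa [show n + i = n - i + 2 * i by omega, pow_add, pow_mul, neg_one_sq, one_pow, mul_one] at h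

theorem one : IsMonicSignAlternating 0 (1 : ℤ[X]) :=
  ⟨monic_one, natDegree_one, fun i => by cases i <;> simp [coeff_one]⟩

theorem X_sub_C_mul {a : ℤ} (ha : 0 ≤ a) (hp : IsMonicSignAlternating n p) :
    IsMonicSignAlternating (n + 1) ((X - C a) * p) := by
  obtain ⟨hm, hd, hc⟩ := hp
  refine ⟨(monic_X_sub_C a).mul hm, ?_, fun i => ?_⟩
  · rw [(monic_X_sub_C a).natDegree_mul hm, natDegree_X_sub_C, hd, add_comm]
  rcases i with _ | i
  · have h0 := hc 0
    simp only [mul_coeff_zero, coeff_sub, coeff_X_zero, coeff_C_zero, add_zero] at h0 ⊢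
    rw [pow_succ]
    nlinarith [mul_nonneg ha h0]
  · have h1 := hc i
    have h2 := hc (i + 1)
    rw [mul_comm (X - C a), coeff_mul_X_sub_C, show n + 1 + (i + 1) = n + i + 2 by ring, pow_add]
    rw [← add_assoc, pow_succ] at h2
    nlinarith [mul_nonneg ha h2]

theorem sub (hp : IsMonicSignAlternating (n + 1) p) (hq : IsMonicSignAlternating n q) :
    IsMonicSignAlternating (n + 1) (p - q) := by
  obtain ⟨hpm, hpd, hpc⟩ := hp
  obtain ⟨-, hqd, hqc⟩ := hq
  have hdeg : q.natDegree < p.natDegree := by omega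
  refine ⟨hpm.sub_of_left (degree_lt_degree hdeg), ?_, fun i => ?_⟩
  · rw [natDegree_sub_eq_left_of_natDegree_lt hdeg, hpd]
  have h1 := hpc i
  have h2 := hqc i
  rw [coeff_sub, show n + 1 + i = n + i + 1 by ring, pow_succ] at *
  nlinarith

theorem prod_X_sub_C {ι : Type*} [DecidableEq ι] (s : Finset ι) {a : ι → ℤ}
    (ha : ∀ i, 0 ≤ a i) :
    IsMonicSignAlternating #s (∏ i ∈ s, (X - C (a i))) := by
  induction s using Finset.induction_on with
  | empty => simpa using one
  | insert i s his ih =>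
    rw [prod_insert his, card_insert_of_notMem his]
    exact ih.X_sub_C_mul (ha i)

end IsMonicSignAlternating

end Polynomial

section Restraint

variable {V W : Type}

def maxRestraint [Fintype V] (r : V → Finset ℕ) : ℕ :=
  univ.sup fun v => (r v).sup id

def IsRestrainedColouring (G : SimpleGraph V) (r : V → Finset ℕ) (x : ℕ) (c : V → ℕ) :
    Prop :=
  (∀ v, c v ∈ Icc 1 x) ∧ (∀ v w, G.Adj v w → c v ≠ c w) ∧ ∀ v, c v ∉ r v

def fiberUnion [Fintype V] [DecidableEq W] (f : V → W) (r : V → Finset ℕ) (a : W) :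
    Finset ℕ :=
  (univ.filter fun v => f v = a).biUnion r

variable (G : SimpleGraph V) (r : V → Finset ℕ) (x : ℕ)

theorem rcount_eq_ncard [Fintype V] :
    rcount G r x = {c | IsRestrainedColouring G r x c}.ncard := by
  classical
  rw [rcount, ← Set.ncard_coe_finset]
  congr
  ext c
  simp [IsRestrainedColouring]

theorem finite_setOf_isRestrainedColouring [Fintype V] :
    {c | IsRestrainedColouring G r x c}.Finite := by
  classical
  exact (Fintype.piFinset fun _ => Icc 1 x).finite_toSet.subset
    fun c hc => Fintype.mem_piFinset.2 hc.1

theorem le_maxRestraint [Fintype V] (v : V) : (r v).sup id ≤ maxRestraint r :=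
  le_sup (f := fun v => (r v).sup id) (mem_univ v)

theorem cast_card_Icc_sdiff {s : Finset ℕ} (h : s.sup id ≤ x) :
    (#(Icc 1 x \ s) : ℤ) = x - #(s.erase 0) := by
  have hsub : s.erase 0 ⊆ Icc 1 x := fun c hc =>
    mem_Icc.2 ⟨Nat.pos_of_ne_zero (ne_of_mem_erase hc),
      (le_sup (f := id) (mem_of_mem_erase hc)).trans h⟩
  have hIcc : Icc 1 x \ s = Icc 1 x \ s.erase 0 := by
    ext c
    by_cases hc : c = 0 <;> simp [hc]
  rw [hIcc, card_sdiff_of_subset hsub, Nat.cast_sub (card_le_card hsub), Nat.card_Icc,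
    Nat.add_sub_cancel]

theorem cast_rcount_bot [Fintype V] (hx : maxRestraint r ≤ x) :
    (rcount (⊥ : SimpleGraph V) r x : ℤ) = ∏ v, ((x : ℤ) - #((r v).erase 0)) := by
  classical
  have hset :
      {c | IsRestrainedColouring ⊥ r x c} = ↑(Fintype.piFinset fun v => Icc 1 x \ r v) := by
    ext c
    simp [IsRestrainedColouring, forall_and]
  rw [rcount_eq_ncard, hset, Set.ncard_coe_finset, Fintype.card_piFinset, Nat.cast_prod]
  exact prod_congr rfl fun v _ => cast_card_Icc_sdiff x ((le_maxRestraint r v).trans hx)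

theorem maxRestraint_fiberUnion_le [Fintype V] [Fintype W] [DecidableEq W] (f : V → W) :
    maxRestraint (fiberUnion f r) ≤ maxRestraint r :=
  Finset.sup_le fun a _ => by
    rw [fiberUnion, sup_biUnion]
    exact Finset.sup_mono (subset_univ _)

theorem isRestrainedColouring_map_iff [Fintype V] [DecidableEq W] {f : V → W} (hf : f.Surjective)
    (hG : ∀ v v', G.Adj v v' → f v ≠ f v') (d : W → ℕ) :
    IsRestrainedColouring (G.map f) (fiberUnion f r) x d ↔
      IsRestrainedColouring G r x (d ∘ f) := by
  refine and_congr hf.forall (and_congr ⟨fun h v v' hvv' => ?_, ?_⟩ ?_)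
  · exact h _ _ ⟨hG v v' hvv', v, v', hvv', rfl, rfl⟩
  · rintro h a b ⟨-, v, v', hvv', rfl, rfl⟩
    exact h v v' hvv'
  · simp only [fiberUnion, mem_biUnion, mem_filter, mem_univ, true_and, not_exists, not_and]
    exact ⟨fun h v => h _ v rfl, fun h _ v hv => hv ▸ h v⟩

theorem isRestrainedColouring_iff_deleteEdges {u w : V} (huw : G.Adj u w) (c : V → ℕ) :
    IsRestrainedColouring G r x c ↔
      IsRestrainedColouring (G.deleteEdges {s(u, w)}) r x c ∧ c u ≠ c w := by
  simp only [IsRestrainedColouring, SimpleGraph.deleteEdges_adj, Set.mem_singleton_iff]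
  constructor
  · rintro ⟨hx, hc, hr⟩
    exact ⟨⟨hx, fun v v' h => hc v v' h.1, hr⟩, hc u w huw⟩
  · rintro ⟨⟨hx, hc, hr⟩, hne⟩
    refine ⟨hx, fun v v' h => ?_, hr⟩
    by_cases he : s(v, v') = s(u, w)
    · rcases Sym2.eq_iff.mp he with ⟨rfl, rfl⟩ | ⟨rfl, rfl⟩
      exacts [hne, hne.symm]
    · exact hc v v' ⟨h, he⟩

end Restraint

section Contraction

variable {V : Type} [DecidableEq V] {u w : V}

def mergeInto (huw : u ≠ w) (v : V) : {a : V // a ≠ w} :=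
  if h : v = w then ⟨u, huw⟩ else ⟨v, h⟩

variable (huw : u ≠ w)

theorem mergeInto_val (a : {a : V // a ≠ w}) : mergeInto huw a.1 = a :=
  dif_neg a.2

theorem mergeInto_surjective : (mergeInto huw).Surjective :=
  fun a => ⟨a.1, mergeInto_val huw a⟩

theorem mergeInto_ne_of_adj (G : SimpleGraph V) {v v' : V}
    (h : (G.deleteEdges {s(u, w)}).Adj v v') : mergeInto huw v ≠ mergeInto huw v' := by
  rw [SimpleGraph.deleteEdges_adj, Set.mem_singleton_iff] at h
  obtain ⟨hadj, he⟩ := h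
  unfold mergeInto
  split_ifs with hv hv' hv'
  · exact absurd (hv.trans hv'.symm) hadj.ne
  · rintro ⟨⟩; exact he (by rw [hv, Sym2.eq_swap])
  · rintro ⟨⟩; exact he (by rw [hv'])
  · exact fun h => hadj.ne (congrArg Subtype.val h)

theorem exists_comp_mergeInto_eq_iff {α : Type*} (c : V → α) :
    (∃ d, d ∘ mergeInto huw = c) ↔ c u = c w := by
  constructor
  · rintro ⟨d, rfl⟩
    simp [mergeInto, huw]
  · intro h
    refine ⟨c ∘ Subtype.val, funext fun v => ?_⟩
    by_cases hv : v = w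
    · simp [mergeInto, hv, h]
    · simp [mergeInto, hv]

def contractEdge (G : SimpleGraph V) {u w : V} (huw : u ≠ w) : SimpleGraph {a : V // a ≠ w} :=
  (G.deleteEdges {s(u, w)}).map (mergeInto huw)

theorem rcount_deleteEdges [Fintype V] (G : SimpleGraph V) {u w : V} (huw : G.Adj u w)
    (r : V → Finset ℕ) (x : ℕ) :
    rcount (G.deleteEdges {s(u, w)}) r x =
      rcount G r x + rcount (contractEdge G huw.ne) (fiberUnion (mergeInto huw.ne) r) x := by
  set G' := G.deleteEdges {s(u, w)}
  set m := mergeInto huw.ne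
  set S := {d | IsRestrainedColouring (contractEdge G huw.ne) (fiberUnion m r) x d}
  have hdel := isRestrainedColouring_iff_deleteEdges G r x huw
  have hcontr : ∀ d, d ∈ S ↔ IsRestrainedColouring G' r x (d ∘ m) :=
    isRestrainedColouring_map_iff G' r x (mergeInto_surjective _) fun _ _ =>
      mergeInto_ne_of_adj _ G
  have hsplit : {c | IsRestrainedColouring G' r x c} =
      {c | IsRestrainedColouring G r x c} ∪ (· ∘ m) '' S := by
    ext c
    simp only [Set.mem_union, Set.mem_ofPred_eq, Set.mem_image, hdel, hcontr]
    constructor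
    · intro hc
      by_cases huv : c u = c w
      · obtain ⟨d, rfl⟩ := (exists_comp_mergeInto_eq_iff huw.ne c).2 huv
        exact Or.inr ⟨d, hc, rfl⟩
      · exact Or.inl ⟨hc, huv⟩
    · rintro (⟨hc, -⟩ | ⟨d, hd, rfl⟩)
      exacts [hc, hd]
  have hdisj : Disjoint {c | IsRestrainedColouring G r x c} ((· ∘ m) '' S) := by
    refine Set.disjoint_left.2 fun c hc ⟨d, _, hdc⟩ => ((hdel c).1 hc).2 ?_
    exact (exists_comp_mergeInto_eq_iff huw.ne c).1 ⟨d, hdc⟩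
  rw [rcount_eq_ncard, rcount_eq_ncard, rcount_eq_ncard, hsplit,
    Set.ncard_union_eq hdisj (finite_setOf_isRestrainedColouring G r x)
      ((finite_setOf_isRestrainedColouring _ _ x).image _),
    Set.ncard_image_of_injective _ (mergeInto_surjective _).injective_comp_right]

end Contraction

def IsRestrainedChromaticPoly {V : Type} [Fintype V] (G : SimpleGraph V) (r : V → Finset ℕ)
    (p : ℤ[X]) : Prop :=
  ∀ x : ℕ, maxRestraint r ≤ x → (rcount G r x : ℤ) = p.eval (x : ℤ)

theorem isRestrainedChromaticPoly_bot {V : Type} [Fintype V] (r : V → Finset ℕ) :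
    IsRestrainedChromaticPoly ⊥ r (∏ v, (X - C (#((r v).erase 0) : ℤ))) := by
  intro x hx
  simp [cast_rcount_bot r x hx, eval_prod]

theorem exists_isRestrainedChromaticPoly (n : ℕ) {V : Type} [Fintype V] (hV : Fintype.card V = n)
    (G : SimpleGraph V) (r : V → Finset ℕ) :
    ∃ p, p.IsMonicSignAlternating n ∧ IsRestrainedChromaticPoly G r p := by
  classical
  induction n using Nat.strong_induction_on generalizing V with | _ n ihn =>
  induction G using WellFoundedLT.induction generalizing r with | _ G ihG =>
  by_cases hG : G = ⊥
  · subst hG hV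
    exact ⟨_, IsMonicSignAlternating.prod_X_sub_C univ fun _ => by positivity,
      isRestrainedChromaticPoly_bot r⟩
  obtain ⟨u, w, huw⟩ := SimpleGraph.ne_bot_iff_exists_adj.1 hG
  obtain ⟨m, rfl⟩ : ∃ m, n = m + 1 :=
    Nat.exists_eq_succ_of_ne_zero (hV ▸ (Fintype.card_pos_iff.2 ⟨u⟩).ne')
  have hlt : G.deleteEdges {s(u, w)} < G :=
    (G.deleteEdges_le _).lt_of_ne <| by
      rw [Ne, SimpleGraph.deleteEdges_eq_self, Set.disjoint_singleton_right, not_not]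
      exact huw
  have hcard : Fintype.card {a : V // a ≠ w} = m := by
    rw [Fintype.card_subtype_compl, Fintype.card_subtype_eq, hV, Nat.add_sub_cancel]
  obtain ⟨p, hp, hpG⟩ := ihG _ hlt r
  obtain ⟨q, hq, hqG⟩ := ihn m m.lt_succ_self hcard (contractEdge G huw.ne)
    (fiberUnion (mergeInto huw.ne) r)
  refine ⟨p - q, hp.sub hq, fun x hx => ?_⟩
  rw [eval_sub, ← hpG x hx, ← hqG x ((maxRestraint_fiberUnion_le r _).trans hx),
    rcount_deleteEdges G huw r x]
  push_cast
  ring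

theorem stmt3_general {V : Type} [Fintype V] (G : SimpleGraph V) (r : V → Finset ℕ) :
    ∃ p : Polynomial ℤ, p.Monic ∧ p.natDegree = Fintype.card V ∧
      (∀ i ≤ Fintype.card V, 0 ≤ (-1 : ℤ) ^ (Fintype.card V - i) * p.coeff i) ∧
      ∀ x : ℕ, (Finset.univ.sup fun v : V => (r v).sup id) ≤ x →
        (rcount G r x : ℤ) = p.eval (x : ℤ) := by
  obtain ⟨p, hp, hpG⟩ := exists_isRestrainedChromaticPoly _ rfl G r
  exact ⟨p, hp.1, hp.2.1, fun i hi => hp.neg_one_pow_sub_mul_coeff_nonneg hi, hpG⟩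

theorem stmt3 {V : Type} [Fintype V] (G : SimpleGraph V) (r : V → Finset ℕ)
    (hpos : ∀ v : V, ∀ c ∈ r v, 1 ≤ c) :
    ∃ p : Polynomial ℤ, p.Monic ∧ p.natDegree = Fintype.card V ∧
      (∀ i ≤ Fintype.card V, 0 ≤ (-1 : ℤ) ^ (Fintype.card V - i) * p.coeff i) ∧
      ∀ x : ℕ, (Finset.univ.sup fun v : V => (r v).sup id) ≤ x →
        (rcount G r x : ℤ) = p.eval (x : ℤ) :=
  stmt3_general G r
end

section
/- Let G be a graph of order n with m edges and let r be a restraint on G. Write π_r(G,x) = Σ_{i=0}^{n} (−1)^{n−i} a_i x^i for x ≥ M_{G,r}. Then a_{n−1} = m + Σ_{u ∈ V(G)} |r(u)|. -/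
open Finset

theorem Finset.sum_card_le_card_biUnion_add_sum_card_inter {ι α : Type*} [DecidableEq ι]
    [DecidableEq α] (I : Finset ι) (B : ι → Finset α) :
    ∑ i ∈ I, #(B i) ≤ #(I.biUnion B) + ∑ i ∈ I, ∑ j ∈ I.erase i, #(B i ∩ B j) := by
  induction I using Finset.induction_on with
  | empty => simp
  | @insert a I ha ih =>
    have hunion := card_union_add_card_inter (B a) (I.biUnion B)
    have hinter : #(B a ∩ I.biUnion B) ≤ ∑ j ∈ I, #(B a ∩ B j) := by
      rw [inter_biUnion]
      exact card_biUnion_le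
    have hsplit : ∀ i ∈ I, ∑ j ∈ (insert a I).erase i, #(B i ∩ B j)
        = #(B i ∩ B a) + ∑ j ∈ I.erase i, #(B i ∩ B j) := fun i hi => by
      rw [erase_insert_of_ne (ne_of_mem_of_not_mem hi ha).symm,
        sum_insert fun h => ha (mem_of_mem_erase h)]
    rw [sum_insert ha, biUnion_insert, sum_insert ha, erase_insert ha, sum_congr rfl hsplit,
      sum_add_distrib]
    omega

section Asymptotics

open Filter Asymptotics Polynomial

theorem Polynomial.degree_lt_of_isLittleO_natCast {P : ℝ[X]} {k : ℕ}
    (h : (fun x : ℕ => P.eval (x : ℝ)) =o[atTop] fun x => (x : ℝ) ^ k) : P.degree < k := by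
  by_contra! hk
  have hbig : (fun x : ℕ => (x : ℝ) ^ k) =O[atTop] fun x : ℕ => P.eval (x : ℝ) := by
    have := (isBigO_atTop_of_degree_le (X ^ k) P (by simpa using hk)).comp_tendsto
      tendsto_natCast_atTop_atTop
    simpa [Function.comp_def] using this
  refine isLittleO_irrefl ?_ (hbig.trans_isLittleO h)
  exact (eventually_ge_atTop 1).frequently.mono fun x hx => pow_ne_zero _ (by positivity)

theorem isLittleO_pow_of_abs_mul_sq_le {f : ℕ → ℝ} {C : ℝ} {k : ℕ}
    (h : ∀ᶠ x : ℕ in atTop, |f x| * (x : ℝ) ^ 2 ≤ C * (x : ℝ) ^ (k + 1)) :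
    f =o[atTop] fun x => (x : ℝ) ^ k := by
  have hbig : f =O[atTop] fun x => (x : ℝ)⁻¹ * (x : ℝ) ^ k := by
    refine IsBigO.of_bound C ?_
    filter_upwards [h, eventually_ge_atTop 1] with x hx hx1
    have hxpos : (0 : ℝ) < x := by positivity
    rw [Real.norm_eq_abs, norm_mul, norm_inv, norm_pow, Real.norm_natCast]
    calc |f x| ≤ C * (x : ℝ) ^ (k + 1) / (x : ℝ) ^ 2 := by rwa [le_div_iff₀ (by positivity)]
      _ = C * ((x : ℝ)⁻¹ * (x : ℝ) ^ k) := by field_simp; ring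
  refine hbig.trans_isLittleO ?_
  simpa using ((isLittleO_one_iff ℝ).2 (tendsto_inv_atTop_zero.comp
    tendsto_natCast_atTop_atTop)).mul_isBigO (isBigO_refl (fun x : ℕ => (x : ℝ) ^ k) atTop)

end Asymptotics

namespace Sym2

variable {α : Type*}

theorem exists_eq_mk_ne_of_not_isDiag {e : Sym2 α} (he : ¬e.IsDiag) (w : α) :
    ∃ u v, e = s(u, v) ∧ u ≠ v ∧ v ≠ w := by
  induction e with | h a b => ?_
  rw [Sym2.mk_isDiag_iff] at he
  by_cases hb : b = w
  · exact ⟨b, a, Sym2.eq_swap, Ne.symm he, hb ▸ he⟩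
  · exact ⟨a, b, rfl, he, hb⟩

theorem exists_eq_mk_notMem_of_ne {e e' : Sym2 α} (he' : ¬e'.IsDiag) (hne : e ≠ e') :
    ∃ u v, e' = s(u, v) ∧ u ≠ v ∧ v ∉ e := by
  induction e' with | h a b => ?_
  rw [Sym2.mk_isDiag_iff] at he'
  by_cases hb : b ∈ e
  · refine ⟨b, a, Sym2.eq_swap, Ne.symm he', fun ha => hne ?_⟩
    exact (Sym2.mem_and_mem_iff he').1 ⟨ha, hb⟩
  · exact ⟨a, b, rfl, he', hb⟩

end Sym2

namespace RestrainedColouring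

section Colourings

variable {V : Type*} [Fintype V] [DecidableEq V]

def colourings (V : Type*) [Fintype V] [DecidableEq V] (x : ℕ) : Finset (V → ℕ) :=
  Fintype.piFinset fun _ => Icc 1 x

theorem card_colourings (x : ℕ) : #(colourings V x) = x ^ Fintype.card V := by
  simp [colourings]

theorem card_filter_apply_eq {x : ℕ} (w : V) (g : (V → ℕ) → ℕ)
    (hg : ∀ c k, g (Function.update c w k) = g c)
    (hmem : ∀ c, (∀ v ≠ w, c v ∈ Icc 1 x) → g c ∈ Icc 1 x) :
    #{c ∈ colourings V x | c w = g c} = x ^ (Fintype.card V - 1) := by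
  let zeroAt : V → Finset ℕ := Function.update (fun _ => Icc 1 x) w {0}
  have hcard : #(Fintype.piFinset zeroAt) = x ^ (Fintype.card V - 1) := by
    rw [Fintype.card_piFinset, prod_eq_mul_prod_sdiff_singleton_of_mem (mem_univ w),
      prod_congr rfl fun v hv => by
        rw [show zeroAt v = Icc 1 x from Function.update_of_ne (by simpa using hv) _ _]]
    simp [zeroAt, card_sdiff_of_subset]
  rw [← hcard]
  refine card_nbij' (fun c => Function.update c w 0) (fun c => Function.update c w (g c))
    (fun c hc => ?_) (fun c hc => ?_) (fun c hc => ?_) (fun c hc => ?_)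
  all_goals simp only [colourings, coe_filter, Fintype.mem_piFinset, Set.mem_ofPred_eq,
    Fintype.coe_piFinset, Set.mem_pi, Set.mem_univ, mem_coe, true_implies, zeroAt] at hc ⊢
  · intro v
    rcases eq_or_ne v w with rfl | hv
    · simp
    · simp [hv, hc.1 v]
  · have hoff : ∀ v ≠ w, c v ∈ Icc 1 x := fun v hv => by simpa [hv] using hc v
    refine ⟨fun v => ?_, by simp [hg]⟩
    rcases eq_or_ne v w with rfl | hv
    · simpa using hmem c hoff
    · simpa [hv] using hoff v hv
  · simp [hg, ← hc.2]
  · have hw := hc w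
    simp only [Function.update_self, mem_singleton] at hw
    simp [hw]

theorem card_le_pow_of_eqOn_compl {x : ℕ} {S : Finset (V → ℕ)} (hS : S ⊆ colourings V x)
    (s : Finset V) (hdet : ∀ c ∈ S, ∀ c' ∈ S, (∀ v ∉ s, c v = c' v) → c = c') :
    #S ≤ x ^ (Fintype.card V - #s) := by
  let restrict : (V → ℕ) → {v // v ∉ s} → ℕ := fun c v => c v
  have hinj : Set.InjOn restrict S := fun c hc c' hc' h =>
    hdet c hc c' hc' fun v hv => congrFun h ⟨v, hv⟩
  refine (card_le_card_of_injOn (t := Fintype.piFinset fun _ => Icc 1 x) restrict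
    (fun c hc => ?_) hinj).trans_eq ?_
  · have := hS hc
    simp only [colourings, Fintype.mem_piFinset] at this
    simp only [restrict, mem_coe, Fintype.mem_piFinset]
    exact fun v => this v
  · simp [Fintype.card_subtype_compl]

theorem sq_mul_card_le {x : ℕ} {S : Finset (V → ℕ)} (hS : S ⊆ colourings V x) {w w' : V}
    (hne : w ≠ w')
    (hdet : ∀ c ∈ S, ∀ c' ∈ S, (∀ v, v ≠ w → v ≠ w' → c v = c' v) →
      c w = c' w ∧ c w' = c' w') :
    x ^ 2 * #S ≤ x ^ Fintype.card V := by
  have htwo : 2 ≤ Fintype.card V := Fintype.one_lt_card_iff.2 ⟨w, w', hne⟩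
  have hS' := card_le_pow_of_eqOn_compl hS {w, w'} fun c hc c' hc' hagree => by
    obtain ⟨hw, hw'⟩ := hdet c hc c' hc' fun v hv hv' => hagree v (by simp [hv, hv'])
    funext v
    by_cases hv : v = w; · rwa [hv]
    by_cases hv' : v = w'; · rwa [hv']
    exact hagree v (by simp [hv, hv'])
  rw [card_pair hne] at hS'
  calc x ^ 2 * #S ≤ x ^ 2 * x ^ (Fintype.card V - 2) := Nat.mul_le_mul_left _ hS'
    _ = x ^ Fintype.card V := by rw [← pow_add]; congr 1; omega

section Constraints

variable (G : SimpleGraph V) [DecidableRel G.Adj] (r : V → Finset ℕ)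

def constraints : Finset (Sym2 V ⊕ Σ _ : V, ℕ) := G.edgeFinset.disjSum (univ.sigma r)

def violators (x : ℕ) : Sym2 V ⊕ (Σ _ : V, ℕ) → Finset (V → ℕ)
  | .inl e => {c ∈ colourings V x | (e.map c).IsDiag}
  | .inr ⟨v, k⟩ => {c ∈ colourings V x | c v = k}

variable {G r}

omit [DecidableEq V] in
theorem card_constraints : #(constraints G r) = #G.edgeFinset + ∑ u, #(r u) := by
  simp [constraints, card_sigma]

omit [DecidableEq V] in
theorem forall_subset_Icc_of_sup_le (hpos : ∀ v, ∀ k ∈ r v, 1 ≤ k)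
    {x : ℕ} (hx : (univ.sup fun v => (r v).sup id) ≤ x) : ∀ v, r v ⊆ Icc 1 x := fun v k hk =>
  mem_Icc.2 ⟨hpos v k hk,
    (le_sup (f := id) hk).trans ((le_sup (f := fun v => (r v).sup id) (mem_univ v)).trans hx)⟩

theorem mem_violators_inl {x : ℕ} {c : V → ℕ} {u v : V} :
    c ∈ violators x (.inl s(u, v)) ↔ c ∈ colourings V x ∧ c u = c v := by
  simp [violators]

theorem mem_violators_inr {x : ℕ} {c : V → ℕ} {v : V} {k : ℕ} :
    c ∈ violators x (.inr ⟨v, k⟩) ↔ c ∈ colourings V x ∧ c v = k := by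
  simp [violators]

theorem violators_subset_colourings (x : ℕ) : ∀ i, violators x i ⊆ colourings V x
  | .inl _ | .inr _ => filter_subset _ _

theorem card_violators {x : ℕ} (hr : ∀ v, r v ⊆ Icc 1 x) {i : Sym2 V ⊕ Σ _ : V, ℕ}
    (hi : i ∈ constraints G r) : #(violators x i) = x ^ (Fintype.card V - 1) := by
  rcases i with e | ⟨v, k⟩
  · induction e with | h u v => ?_
    have huv : u ≠ v := G.ne_of_adj (by simpa [constraints] using hi)
    have hfilter : violators x (.inl s(u, v)) = {c ∈ colourings V x | c v = c u} := by
      ext c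
      simp [mem_violators_inl, eq_comm]
    rw [hfilter]
    exact card_filter_apply_eq v (fun c => c u) (fun c _ => Function.update_of_ne huv _ _)
      fun c hc => hc u huv
  · have hk : k ∈ r v := by simpa [constraints] using hi
    exact card_filter_apply_eq v (fun _ => k) (fun _ _ => rfl) fun _ _ => hr v hk

theorem sq_mul_card_violators_inl_inter_inl_le {x : ℕ} {e e' : Sym2 V} (he : ¬e.IsDiag)
    (he' : ¬e'.IsDiag) (hne : e ≠ e') :
    x ^ 2 * #(violators x (.inl e) ∩ violators x (.inl e')) ≤ x ^ Fintype.card V := by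
  obtain ⟨u', v', rfl, hu'v', hv'⟩ := Sym2.exists_eq_mk_notMem_of_ne he' hne
  obtain ⟨u, v, rfl, huv, -⟩ := Sym2.exists_eq_mk_ne_of_not_isDiag he v'
  have hvv' : v ≠ v' := fun h => hv' (h ▸ Sym2.mem_mk_right u v)
  have huv' : u ≠ v' := fun h => hv' (h ▸ Sym2.mem_mk_left u v)
  refine sq_mul_card_le (inter_subset_left.trans (violators_subset_colourings x _)) hvv' ?_
  intro c hc c' hc' hagree
  simp only [mem_inter, mem_violators_inl] at hc hc'
  have hv : c v = c' v := by rw [← hc.1.2, ← hc'.1.2, hagree u huv huv']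
  have hu' : c u' = c' u' := by
    by_cases h : u' = v
    · rwa [h]
    · exact hagree u' h hu'v'
  exact ⟨hv, by rw [← hc.2.2, ← hc'.2.2, hu']⟩

theorem sq_mul_card_violators_inl_inter_inr_le {x : ℕ} {e : Sym2 V} (he : ¬e.IsDiag) (w : V)
    (k : ℕ) : x ^ 2 * #(violators x (.inl e) ∩ violators x (.inr ⟨w, k⟩)) ≤ x ^ Fintype.card V := by
  obtain ⟨u, v, rfl, huv, hvw⟩ := Sym2.exists_eq_mk_ne_of_not_isDiag he w
  refine sq_mul_card_le (inter_subset_left.trans (violators_subset_colourings x _)) hvw ?_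
  intro c hc c' hc' hagree
  simp only [mem_inter, mem_violators_inl, mem_violators_inr] at hc hc'
  have hw : c w = c' w := hc.2.2.trans hc'.2.2.symm
  have hu : c u = c' u := by
    by_cases h : u = w
    · rwa [h]
    · exact hagree u huv h
  exact ⟨by rw [← hc.1.2, ← hc'.1.2, hu], hw⟩

theorem sq_mul_card_violators_inr_inter_inr_le {x : ℕ} {v w : V} {k l : ℕ}
    (hne : (⟨v, k⟩ : Σ _ : V, ℕ) ≠ ⟨w, l⟩) :
    x ^ 2 * #(violators x (.inr ⟨v, k⟩) ∩ violators x (.inr ⟨w, l⟩)) ≤ x ^ Fintype.card V := by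
  by_cases hvw : v = w
  · subst hvw
    have hkl : k ≠ l := fun h => hne (h ▸ rfl)
    have hempty : violators x (.inr ⟨v, k⟩) ∩ violators x (.inr ⟨v, l⟩) = ∅ := by
      ext c
      simp only [mem_inter, mem_violators_inr, notMem_empty, iff_false]
      exact fun h => hkl (h.1.2.symm.trans h.2.2)
    simp [hempty]
  · refine sq_mul_card_le (inter_subset_left.trans (violators_subset_colourings x _)) hvw ?_
    intro c hc c' hc' _
    simp only [mem_inter, mem_violators_inr] at hc hc'
    exact ⟨hc.1.2.trans hc'.1.2.symm, hc.2.2.trans hc'.2.2.symm⟩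

theorem sq_mul_card_violators_inter_le {x : ℕ} {i j : Sym2 V ⊕ Σ _ : V, ℕ}
    (hi : i ∈ constraints G r) (hj : j ∈ constraints G r) (hij : i ≠ j) :
    x ^ 2 * #(violators x i ∩ violators x j) ≤ x ^ Fintype.card V := by
  have not_isDiag : ∀ e ∈ G.edgeFinset, ¬e.IsDiag := fun e he =>
    G.not_isDiag_of_mem_edgeSet (SimpleGraph.mem_edgeFinset.1 he)
  rcases i with e | ⟨v, k⟩ <;> rcases j with e' | ⟨w, l⟩ <;>
    simp only [constraints, inl_mem_disjSum, inr_mem_disjSum] at hi hj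
  · exact sq_mul_card_violators_inl_inter_inl_le (not_isDiag e hi) (not_isDiag e' hj)
      fun h => hij (h ▸ rfl)
  · exact sq_mul_card_violators_inl_inter_inr_le (not_isDiag e hi) w l
  · rw [inter_comm]
    exact sq_mul_card_violators_inl_inter_inr_le (not_isDiag e' hj) v k
  · exact sq_mul_card_violators_inr_inter_inr_le fun h => hij (h ▸ rfl)

end Constraints

end Colourings

section Bounds

variable {V : Type} [Fintype V] [DecidableEq V] (G : SimpleGraph V) [DecidableRel G.Adj]
  (r : V → Finset ℕ) (x : ℕ)

theorem rcount_add_card_biUnion_violators :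
    rcount G r x + #((constraints G r).biUnion (violators x)) = x ^ Fintype.card V := by
  have hsub : (constraints G r).biUnion (violators x) ⊆ colourings V x :=
    biUnion_subset.2 fun i _ => violators_subset_colourings x i
  have hrcount : rcount G r x = #(colourings V x \ (constraints G r).biUnion (violators x)) := by
    unfold rcount
    congr 1
    ext c
    simp only [mem_filter, mem_sdiff, mem_biUnion, constraints, Sum.exists, inl_mem_disjSum,
      inr_mem_disjSum, Sym2.exists, SimpleGraph.mem_edgeFinset, SimpleGraph.mem_edgeSet,
      mem_violators_inl, Sigma.exists, mem_sigma, mem_univ, true_and, mem_violators_inr, colourings]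
    grind
  rw [hrcount, card_sdiff_add_card_eq_card hsub, card_colourings]

variable {G r x}

theorem sum_card_violators (hr : ∀ v, r v ⊆ Icc 1 x) :
    ∑ i ∈ constraints G r, #(violators x i) = #(constraints G r) * x ^ (Fintype.card V - 1) := by
  rw [sum_congr rfl fun i hi => card_violators hr hi, sum_const, smul_eq_mul]

theorem pow_card_le_rcount_add (hr : ∀ v, r v ⊆ Icc 1 x) :
    x ^ Fintype.card V ≤ rcount G r x + #(constraints G r) * x ^ (Fintype.card V - 1) := by
  rw [← rcount_add_card_biUnion_violators G r x, ← sum_card_violators hr]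
  exact Nat.add_le_add_left card_biUnion_le _

theorem sq_mul_rcount_add_le (hr : ∀ v, r v ⊆ Icc 1 x) :
    x ^ 2 * (rcount G r x + #(constraints G r) * x ^ (Fintype.card V - 1)) ≤
      x ^ 2 * x ^ Fintype.card V + #(constraints G r) ^ 2 * x ^ Fintype.card V := by
  set I := constraints G r
  set pairs := ∑ i ∈ I, ∑ j ∈ I.erase i, #(violators x i ∩ violators x j)
  have hbonferroni := sum_card_le_card_biUnion_add_sum_card_inter I (violators x)
  rw [sum_card_violators hr] at hbonferroni
  have hpairs : x ^ 2 * pairs ≤ #I ^ 2 * x ^ Fintype.card V := calc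
    x ^ 2 * pairs = ∑ i ∈ I, ∑ j ∈ I.erase i, x ^ 2 * #(violators x i ∩ violators x j) := by
      simp only [pairs, mul_sum]
    _ ≤ ∑ i ∈ I, ∑ j ∈ I, x ^ Fintype.card V := sum_le_sum fun i hi =>
      (sum_le_sum fun j hj => sq_mul_card_violators_inter_le hi (mem_of_mem_erase hj)
        (ne_of_mem_erase hj).symm).trans (sum_le_sum_of_subset (erase_subset i I))
    _ = #I ^ 2 * x ^ Fintype.card V := by simp [sq, mul_assoc]
  calc x ^ 2 * (rcount G r x + #I * x ^ (Fintype.card V - 1))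
      ≤ x ^ 2 * (rcount G r x + (#(I.biUnion (violators x)) + pairs)) := by gcongr
    _ = x ^ 2 * x ^ Fintype.card V + x ^ 2 * pairs := by
      rw [← rcount_add_card_biUnion_violators G r x]; ring
    _ ≤ _ := by gcongr

theorem abs_rcount_sub_mul_sq_le (hr : ∀ v, r v ⊆ Icc 1 x) :
    |(rcount G r x : ℝ) - x ^ Fintype.card V + #(constraints G r) * x ^ (Fintype.card V - 1)| *
      x ^ 2 ≤ #(constraints G r) ^ 2 * x ^ Fintype.card V := by
  have hlower : (x : ℝ) ^ Fintype.card V ≤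
      rcount G r x + #(constraints G r) * x ^ (Fintype.card V - 1) := by
    exact_mod_cast pow_card_le_rcount_add hr
  have hupper : (x : ℝ) ^ 2 * (rcount G r x + #(constraints G r) * x ^ (Fintype.card V - 1)) ≤
      x ^ 2 * x ^ Fintype.card V + #(constraints G r) ^ 2 * x ^ Fintype.card V := by
    exact_mod_cast sq_mul_rcount_add_le hr
  rw [abs_of_nonneg (by linarith)]
  linarith

end Bounds

end RestrainedColouring

open Filter Polynomial RestrainedColouring in
theorem stmt4 {V : Type} [Fintype V] [DecidableEq V] (G : SimpleGraph V) [DecidableRel G.Adj]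
    (r : V → Finset ℕ) (hpos : ∀ v : V, ∀ c ∈ r v, 1 ≤ c)
    (hn : 1 ≤ Fintype.card V) (a : ℕ → ℤ)
    (ha : ∀ x : ℕ, (Finset.univ.sup fun v : V => (r v).sup id) ≤ x →
      (rcount G r x : ℤ) =
        ∑ i ∈ Finset.range (Fintype.card V + 1),
          (-1 : ℤ) ^ (Fintype.card V - i) * a i * (x : ℤ) ^ i) :
    a (Fintype.card V - 1) = (G.edgeFinset.card : ℤ) + ∑ u : V, ((r u).card : ℤ) := by
  set n := Fintype.card V
  set M := univ.sup fun v : V => (r v).sup id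
  set K := #(constraints G r)
  let P : ℝ[X] := ∑ i ∈ range (n + 1), C ((-1) ^ (n - i) * a i : ℝ) * X ^ i - X ^ n +
    C (K : ℝ) * X ^ (n - 1)
  have hP : ∀ x, M ≤ x → P.eval (x : ℝ) = rcount G r x - x ^ n + K * x ^ (n - 1) := by
    intro x hx
    have := congrArg (Int.cast : ℤ → ℝ) (ha x hx)
    push_cast at this
    simp [P, eval_finsetSum, this]
  have hdeg : P.degree < ↑(n - 1) := by
    refine degree_lt_of_isLittleO_natCast (isLittleO_pow_of_abs_mul_sq_le (C := K ^ 2) ?_)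
    filter_upwards [eventually_ge_atTop M] with x hx
    rw [hP x hx, Nat.sub_add_cancel hn]
    exact abs_rcount_sub_mul_sq_le (forall_subset_Icc_of_sup_le hpos hx)
  have hcoeff := coeff_eq_zero_of_degree_lt hdeg
  simp only [P, coeff_add, coeff_sub, finsetSum_coeff, coeff_C_mul_X_pow, coeff_X_pow,
    sum_ite_eq, mem_range, Nat.sub_sub_self hn, if_pos (show n - 1 < n + 1 by omega),
    if_neg (show n - 1 ≠ n by omega), if_true] at hcoeff
  have hK : (a (n - 1) : ℝ) = K := by linarith
  rw [← Nat.cast_sum, ← Nat.cast_add, ← card_constraints]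
  exact_mod_cast hK
end

section
/- Let G be a graph of order n with m edges, vertex set {u_1,…,u_n}, and let r be a restraint on G. Write π_r(G,x) = Σ_{i=0}^{n} (−1)^{n−i} a_i x^i for x ≥ M_{G,r}. Then a_{n−2} = C(m,2) − t(G) + Σ_{i<j} |r(u_i)||r(u_j)| + m·Σ_i |r(u_i)| − Σ_{u_iu_j ∈ E(G)} |r(u_i) ∩ r(u_j)|, where t(G) is the number of triangles in G. -/
set_option linter.unusedSectionVars false
set_option maxHeartbeats 1000000
open Finset Polynomial SimpleGraph


section Defs
variable {V : Type} [Fintype V] [DecidableEq V]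

/-- deletion of one edge -/
def Gdel (G : SimpleGraph V) (u w : V) : SimpleGraph V where
  Adj a b := G.Adj a b ∧ s(a,b) ≠ s(u,w)
  symm := ⟨fun a b h => ⟨h.1.symm, by rw [Sym2.eq_swap]; exact h.2⟩⟩
  loopless := ⟨fun a h => G.loopless.irrefl a h.1⟩

instance (G : SimpleGraph V) [DecidableRel G.Adj] (u w : V) : DecidableRel (Gdel G u w).Adj :=
  fun _ _ => instDecidableAnd

/-- contraction of the edge u w : w is merged into u -/
def Gcon (G : SimpleGraph V) (u w : V) : SimpleGraph {v : V // v ≠ w} where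
  Adj a b := a ≠ b ∧ (G.Adj a b ∨ (↑a = u ∧ G.Adj w ↑b) ∨ (↑b = u ∧ G.Adj ↑a w))
  symm := ⟨fun a b h => ⟨h.1.symm, by
    rcases h.2 with h | h | h
    · exact Or.inl h.symm
    · exact Or.inr (Or.inr ⟨h.1, h.2.symm⟩)
    · exact Or.inr (Or.inl ⟨h.1, h.2.symm⟩)⟩⟩
  loopless := ⟨fun a h => h.1 rfl⟩

instance (G : SimpleGraph V) [DecidableRel G.Adj] (u w : V) : DecidableRel (Gcon G u w).Adj :=
  fun _ _ => instDecidableAnd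

def rcon (r : V → Finset ℕ) (u w : V) : {v : V // v ≠ w} → Finset ℕ :=
  fun a => if ↑a = u then r u ∪ r w else r ↑a

lemma gdel_adj (G : SimpleGraph V) (u w a b : V) :
    (Gdel G u w).Adj a b ↔ G.Adj a b ∧ s(a,b) ≠ s(u,w) := Iff.rfl

lemma gcon_adj (G : SimpleGraph V) (u w : V) (a b : {v : V // v ≠ w}) :
    (Gcon G u w).Adj a b ↔
      a ≠ b ∧ (G.Adj ↑a ↑b ∨ (↑a = u ∧ G.Adj w ↑b) ∨ (↑b = u ∧ G.Adj ↑a w)) := Iff.rfl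

end Defs

section Bexpr
variable {V : Type} [Fintype V] [LinearOrder V]

noncomputable def Bexpr (G : SimpleGraph V) [DecidableRel G.Adj] (r : V → Finset ℕ) : ℤ :=
  (G.edgeFinset.card.choose 2 : ℤ) - ((G.cliqueFinset 3).card : ℤ) +
    (∑ u : V, ∑ v ∈ Finset.univ.filter (fun v => u < v), ((r u).card : ℤ) * ((r v).card : ℤ)) +
    (G.edgeFinset.card : ℤ) * ∑ u : V, ((r u).card : ℤ) -
    ∑ e ∈ G.edgeFinset,
      Sym2.lift ⟨fun b c => (((r b) ∩ (r c)).card : ℤ),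
        fun b c => by simp [Finset.inter_comm]⟩ e

end Bexpr

section Base
variable {V : Type} [Fintype V] [DecidableEq V]

lemma rsub {V : Type} [Fintype V] (r : V → Finset ℕ) (hpos : ∀ v : V, ∀ c ∈ r v, 1 ≤ c)
    {x : ℕ} (hx : (Finset.univ.sup fun v : V => (r v).sup id) ≤ x) (v : V) :
    r v ⊆ Finset.Icc 1 x := by
  intro c hc
  rw [Finset.mem_Icc]
  refine ⟨hpos v c hc, le_trans ?_ hx⟩
  exact le_trans (Finset.le_sup (f := id) hc)
    (Finset.le_sup (f := fun v => (r v).sup id) (Finset.mem_univ v))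

lemma rcount_bot (G : SimpleGraph V) (r : V → Finset ℕ)
    (hE : ∀ a b, ¬ G.Adj a b) (x : ℕ) (hr : ∀ v, r v ⊆ Finset.Icc 1 x) :
    rcount G r x = ∏ v, (x - (r v).card) := by
  classical
  have h2 : rcount G r x = #(Fintype.piFinset fun v => Finset.Icc 1 x \ r v) := by
    unfold rcount; congr 1
    ext c
    simp only [Finset.mem_filter, Fintype.mem_piFinset, Finset.mem_sdiff]
    constructor
    · rintro ⟨h2, -, h3⟩ v; exact ⟨h2 v, h3 v⟩
    · intro h2
      exact ⟨fun v => (h2 v).1, fun v w hadj => absurd hadj (hE v w), fun v => (h2 v).2⟩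
  rw [h2, Fintype.card_piFinset]
  refine Finset.prod_congr rfl fun v _ => ?_
  rw [Finset.card_sdiff_of_subset (hr v), Nat.card_Icc]
  omega

lemma rcount_bot_int (G : SimpleGraph V) (r : V → Finset ℕ)
    (hE : ∀ a b, ¬ G.Adj a b) (x : ℕ) (hr : ∀ v, r v ⊆ Finset.Icc 1 x) :
    (rcount G r x : ℤ) = ∏ v, ((x : ℤ) - ((r v).card : ℤ)) := by
  rw [rcount_bot G r hE x hr, Nat.cast_prod]
  congr 1; ext v
  have : (r v).card ≤ x := by
    have := Finset.card_le_card (hr v)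
    simpa [Nat.card_Icc] using this
  omega

end Base

section Prod
variable {V : Type} [LinearOrder V]

def pairSum (f : V → ℤ) (s : Finset V) : ℤ :=
  ∑ u ∈ s, ∑ v ∈ s.filter (fun v => u < v), f u * f v

lemma pairSum_insert (f : V → ℤ) (s : Finset V) (a : V) (ha : a ∉ s) :
    pairSum f (insert a s) = pairSum f s + f a * ∑ v ∈ s, f v := by
  unfold pairSum
  rw [Finset.sum_insert ha]
  have hfilt : ∀ u : V, (insert a s).filter (fun v => u < v) =
      if u < a then insert a (s.filter (fun v => u < v)) else s.filter (fun v => u < v) := by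
    intro u
    split_ifs with h
    · rw [Finset.filter_insert, if_pos h]
    · rw [Finset.filter_insert, if_neg h]
  have e1 : ∀ u ∈ s, ∑ v ∈ (insert a s).filter (fun v => u < v), f u * f v =
      (∑ v ∈ s.filter (fun v => u < v), f u * f v) + (if u < a then f u * f a else 0) := by
    intro u hu
    rw [hfilt u]
    split_ifs with h
    · rw [Finset.sum_insert (fun hmem => ha (Finset.mem_filter.mp hmem).1)]; ring
    · rw [add_zero]
  rw [Finset.sum_congr rfl e1, Finset.sum_add_distrib, ← Finset.sum_filter]
  have h2 : (∑ v ∈ (insert a s).filter (fun v => a < v), f a * f v) +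
      ∑ u ∈ s.filter (fun u => u < a), f u * f a = f a * ∑ v ∈ s, f v := by
    rw [hfilt a, if_neg (lt_irrefl a)]
    have hpart : s.filter (fun v => ¬ a < v) = s.filter (fun v => v < a) := by
      ext v
      simp only [Finset.mem_filter, and_congr_right_iff]
      intro hv
      constructor
      · intro h
        rcases lt_or_eq_of_le (not_lt.mp h) with h' | h'
        · exact h'
        · exact absurd h'.symm (fun heq => ha (heq ▸ hv))
      · intro h; exact not_lt.mpr h.le
    rw [← Finset.sum_filter_add_sum_filter_not s (fun v => a < v) f, mul_add, Finset.mul_sum,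
      Finset.mul_sum, hpart]
    congr 1
    refine Finset.sum_congr rfl fun v hv => mul_comm _ _
  rw [← h2]; ring

lemma prod_linear_coeffs (f : V → ℤ) (s : Finset V) :
    (∏ v ∈ s, (X - C (f v))).Monic ∧
    (∏ v ∈ s, (X - C (f v))).natDegree = s.card ∧
    (∀ d, s.card = d + 1 → (∏ v ∈ s, (X - C (f v))).coeff d = -∑ v ∈ s, f v) ∧
    (∀ d, s.card = d + 2 → (∏ v ∈ s, (X - C (f v))).coeff d = pairSum f s) := by
  classical
  induction s using Finset.induction with
  | empty => exact ⟨monic_one, by simp, fun d h => by simp at h, fun d h => by simp at h⟩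
  | @insert a s ha ih =>
    obtain ⟨hm, hdeg, h1, h2⟩ := ih
    have hprod : ∏ v ∈ insert a s, (X - C (f v)) = (∏ v ∈ s, (X - C (f v))) * (X - C (f a)) := by
      rw [Finset.prod_insert ha, mul_comm]
    have hm' : (∏ v ∈ insert a s, (X - C (f v))).Monic := by
      rw [hprod]; exact hm.mul (monic_X_sub_C (f a))
    have hdeg' : (∏ v ∈ insert a s, (X - C (f v))).natDegree = (insert a s).card := by
      rw [hprod, Finset.card_insert_of_notMem ha,
        natDegree_mul hm.ne_zero (monic_X_sub_C (f a)).ne_zero, hdeg, natDegree_X_sub_C]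
    refine ⟨hm', hdeg', ?_, ?_⟩
    · intro d hd
      rw [Finset.card_insert_of_notMem ha] at hd
      rcases Nat.eq_zero_or_pos d with rfl | hdpos
      · -- s empty
        have hs : s = ∅ := Finset.card_eq_zero.mp (by omega)
        subst hs
        simp [coeff_sub]
      · obtain ⟨e, rfl⟩ := Nat.exists_eq_add_of_le hdpos
        rw [hprod]
        rw [show 1 + e = e + 1 by ring, coeff_mul_X_sub_C]
        have hc1 : (∏ v ∈ s, (X - C (f v))).coeff e = -∑ v ∈ s, f v := h1 e (by omega)
        have hc2 : (∏ v ∈ s, (X - C (f v))).coeff (e + 1) = 1 := by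
          have : s.card = e + 1 := by omega
          rw [← this, ← hdeg]; exact hm.coeff_natDegree
        rw [hc1, hc2, Finset.sum_insert ha]; ring
    · intro d hd
      rw [Finset.card_insert_of_notMem ha] at hd
      rcases Nat.eq_zero_or_pos d with rfl | hdpos
      · -- s singleton
        obtain ⟨b, hb⟩ := Finset.card_eq_one.mp (show s.card = 1 by omega)
        subst hb
        rw [hprod, mul_coeff_zero]
        simp only [Finset.prod_singleton, coeff_sub, coeff_X_zero, coeff_C_zero, zero_sub]
        rw [pairSum_insert f {b} a (by simpa using ha)]
        unfold pairSum
        simp [Finset.filter_singleton, mul_comm]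
      · obtain ⟨e, rfl⟩ := Nat.exists_eq_add_of_le hdpos
        rw [hprod, show 1 + e = e + 1 by ring, coeff_mul_X_sub_C]
        rw [h2 e (by omega), h1 (e + 1) (by omega), pairSum_insert f s a ha]
        ring

end Prod

section Rec
variable {V : Type} [Fintype V] [DecidableEq V]

lemma rcount_rec (G : SimpleGraph V) [DecidableRel G.Adj] (r : V → Finset ℕ) {u w : V}
    (huw : G.Adj u w) (x : ℕ) :
    rcount (Gdel G u w) r x = rcount G r x + rcount (Gcon G u w) (rcon r u w) x := by
  classical
  have hne : u ≠ w := G.ne_of_adj huw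
  have e0 : rcount (Gdel G u w) r x = #((Fintype.piFinset fun _ : V => Finset.Icc 1 x).filter
      (fun c => (∀ v w', (Gdel G u w).Adj v w' → c v ≠ c w') ∧ ∀ v, c v ∉ r v)) := by
    unfold rcount
    exact congrArg Finset.card (by ext c; simp only [Finset.mem_filter, Fintype.mem_piFinset])
  have e1 : rcount G r x = #((Fintype.piFinset fun _ : V => Finset.Icc 1 x).filter
      (fun c => (∀ v w', G.Adj v w' → c v ≠ c w') ∧ ∀ v, c v ∉ r v)) := by
    unfold rcount
    exact congrArg Finset.card (by ext c; simp only [Finset.mem_filter, Fintype.mem_piFinset])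
  have e2 : rcount (Gcon G u w) (rcon r u w) x =
      #((Fintype.piFinset fun _ : {v : V // v ≠ w} => Finset.Icc 1 x).filter
      (fun c => (∀ v w', (Gcon G u w).Adj v w' → c v ≠ c w') ∧ ∀ v, c v ∉ rcon r u w v)) := by
    unfold rcount
    exact congrArg Finset.card (by ext c; simp only [Finset.mem_filter, Fintype.mem_piFinset])
  rw [e0, e1, e2]
  rw [← Finset.card_filter_add_card_filter_not
    (s := (Fintype.piFinset fun _ : V => Finset.Icc 1 x).filter
      (fun c => (∀ v w', (Gdel G u w).Adj v w' → c v ≠ c w') ∧ ∀ v, c v ∉ r v))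
    (p := fun c => c u ≠ c w)]
  congr 1
  · -- deleted graph with c u ≠ c w  ↔  G-proper
    congr 1
    rw [Finset.filter_filter]
    apply Finset.filter_congr
    intro c hc
    simp only [Fintype.mem_piFinset] at hc
    constructor
    · rintro ⟨⟨hprop, havoid⟩, hneq⟩
      refine ⟨fun a b hadj => ?_, havoid⟩
      by_cases hs : s(a, b) = s(u, w)
      · rw [Sym2.eq_iff] at hs
        rcases hs with ⟨rfl, rfl⟩ | ⟨rfl, rfl⟩
        · exact hneq
        · exact fun h => hneq h.symm
      · exact hprop a b ⟨hadj, hs⟩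
    · rintro ⟨hprop, havoid⟩
      exact ⟨⟨fun a b hadj => hprop a b hadj.1, havoid⟩, hprop u w huw⟩
  · -- contracted graph
    apply Finset.card_bij (fun c _ => fun a : {v : V // v ≠ w} => c ↑a)
    · intro c hc
      simp only [Finset.mem_filter, Fintype.mem_piFinset, not_not] at hc ⊢
      obtain ⟨⟨hmem, hprop, havoid⟩, heq⟩ := hc
      refine ⟨fun a => hmem ↑a, fun a b hadj => ?_, fun a => ?_⟩
      · obtain ⟨hab, h | ⟨h1, h2⟩ | ⟨h1, h2⟩⟩ := hadj
        · refine hprop ↑a ↑b ⟨h, fun hs => ?_⟩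
          rw [Sym2.eq_iff] at hs
          rcases hs with ⟨-, hb'⟩ | ⟨ha', -⟩
          · exact b.2 hb'
          · exact a.2 ha'
        · intro hcc
          have hbu : (↑b : V) ≠ u := fun hbu => hab (Subtype.ext (h1.trans hbu.symm))
          refine hprop w ↑b ⟨h2, fun hs => ?_⟩ ?_
          · rw [Sym2.eq_iff] at hs
            rcases hs with ⟨hwu, -⟩ | ⟨-, hbu'⟩
            · exact hne hwu.symm
            · exact hbu hbu'
          · rw [← heq, ← h1]; exact hcc
        · intro hcc
          have hau : (↑a : V) ≠ u := fun hau => hab (Subtype.ext (hau.trans h1.symm))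
          refine hprop ↑a w ⟨h2, fun hs => ?_⟩ ?_
          · rw [Sym2.eq_iff] at hs
            rcases hs with ⟨hau', -⟩ | ⟨haw', -⟩
            · exact hau hau'
            · exact a.2 haw'
          · rw [h1] at hcc; exact hcc.trans heq
      · unfold rcon
        split_ifs with h
        · rw [Finset.mem_union, h]
          push_neg
          exact ⟨havoid u, heq ▸ havoid w⟩
        · exact havoid ↑a
    · intro c1 h1 c2 h2 himg
      simp only [Finset.mem_filter, not_not] at h1 h2
      funext v
      by_cases hv : v = w
      · subst hv
        rw [← h1.2, ← h2.2]
        exact congrFun himg ⟨u, hne⟩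
      · exact congrFun himg ⟨v, hv⟩
    · intro c' hc'
      simp only [Finset.mem_filter, Fintype.mem_piFinset] at hc'
      obtain ⟨hmem', hprop', havoid'⟩ := hc'
      refine ⟨fun v => if hv : v = w then c' ⟨u, hne⟩ else c' ⟨v, hv⟩, ?_, ?_⟩
      · simp only [Finset.mem_filter, Fintype.mem_piFinset, not_not]
        refine ⟨⟨fun v => ?_, fun a b hadj => ?_, fun v => ?_⟩, ?_⟩
        · split_ifs
          · exact hmem' _
          · exact hmem' _
        · obtain ⟨hGab, hsne⟩ := hadj
          have hab : a ≠ b := G.ne_of_adj hGab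
          by_cases haw : a = w
          · have hbw : b ≠ w := fun h => hab (haw.trans h.symm)
            rw [dif_pos haw, dif_neg hbw]
            have hbu : b ≠ u := by
              intro hbu
              exact hsne (by rw [haw, hbu]; exact Sym2.eq_swap)
            have hGwb : G.Adj w b := haw ▸ hGab
            exact hprop' ⟨u, hne⟩ ⟨b, hbw⟩
              ⟨fun h => hbu (congrArg Subtype.val h).symm, Or.inr (Or.inl ⟨rfl, hGwb⟩)⟩
          · by_cases hbw : b = w
            · rw [dif_neg haw, dif_pos hbw]
              have hau : a ≠ u := by
                intro hau
                exact hsne (by rw [hau, hbw])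
              have hGaw : G.Adj a w := hbw ▸ hGab
              exact hprop' ⟨a, haw⟩ ⟨u, hne⟩
                ⟨fun h => hau (congrArg Subtype.val h), Or.inr (Or.inr ⟨rfl, hGaw⟩)⟩
            · rw [dif_neg haw, dif_neg hbw]
              exact hprop' ⟨a, haw⟩ ⟨b, hbw⟩
                ⟨fun h => hab (congrArg Subtype.val h), Or.inl hGab⟩
        · by_cases hv : v = w
          · subst hv
            rw [dif_pos rfl]
            have := havoid' ⟨u, hne⟩
            unfold rcon at this
            rw [if_pos rfl, Finset.mem_union] at this
            push_neg at this
            exact this.2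
          · rw [dif_neg hv]
            have := havoid' ⟨v, hv⟩
            unfold rcon at this
            by_cases hvu : v = u
            · rw [if_pos hvu, Finset.mem_union] at this
              push_neg at this
              subst hvu
              exact this.1
            · rwa [if_neg hvu] at this
        · simp [hne]
      · funext a
        exact dif_neg a.2

end Rec

section Count
variable {V : Type} [Fintype V] [DecidableEq V] (G : SimpleGraph V) [DecidableRel G.Adj]

lemma gdel_edgeFinset (u w : V) :
    (Gdel G u w).edgeFinset = G.edgeFinset.erase s(u,w) := by
  ext e
  induction e using Sym2.ind with
  | _ a b =>
    rw [mem_edgeFinset, Finset.mem_erase, mem_edgeFinset]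
    rw [mem_edgeSet, mem_edgeSet, gdel_adj]
    tauto

lemma gdel_card_edge {u w : V} (huw : G.Adj u w) :
    (Gdel G u w).edgeFinset.card + 1 = G.edgeFinset.card := by
  rw [gdel_edgeFinset]
  rw [Finset.card_erase_of_mem (by rw [mem_edgeFinset, mem_edgeSet]; exact huw)]
  have : 1 ≤ G.edgeFinset.card := Finset.card_pos.mpr ⟨s(u,w), by
    rw [mem_edgeFinset, mem_edgeSet]; exact huw⟩
  omega

lemma gdel_cliques {u w : V} (huw : G.Adj u w) :
    (G.cliqueFinset 3).card = ((Gdel G u w).cliqueFinset 3).card +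
      (Finset.univ.filter fun v => G.Adj u v ∧ G.Adj w v).card := by
  have hne : u ≠ w := G.ne_of_adj huw
  have h1 : (Gdel G u w).cliqueFinset 3 =
      (G.cliqueFinset 3).filter (fun t => ¬(u ∈ t ∧ w ∈ t)) := by
    ext t
    rw [Finset.mem_filter, mem_cliqueFinset_iff, mem_cliqueFinset_iff]
    constructor
    · intro h
      refine ⟨⟨fun a ha b hb hab => (h.1 ha hb hab).1, h.2⟩, fun ⟨hu, hw⟩ => ?_⟩
      exact (h.1 (Finset.mem_coe.mpr hu) (Finset.mem_coe.mpr hw) hne).2 rfl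
    · rintro ⟨h, hnot⟩
      refine ⟨fun a ha b hb hab => ⟨h.1 ha hb hab, fun hs => ?_⟩, h.2⟩
      rw [Sym2.eq_iff] at hs
      rcases hs with ⟨hau, hbw⟩ | ⟨haw, hbu⟩
      · exact hnot ⟨hau ▸ ha, hbw ▸ hb⟩
      · exact hnot ⟨hbu ▸ hb, haw ▸ ha⟩
  have h2 : ((G.cliqueFinset 3).filter (fun t => u ∈ t ∧ w ∈ t)).card =
      (Finset.univ.filter fun v => G.Adj u v ∧ G.Adj w v).card := by
    symm
    apply Finset.card_bij (fun v _ => ({u, w, v} : Finset V))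
    · intro v hv
      rw [Finset.mem_filter] at hv
      rw [Finset.mem_filter, mem_cliqueFinset_iff]
      refine ⟨is3Clique_triple_iff.mpr ⟨huw, hv.2.1, hv.2.2⟩, by simp, by simp⟩
    · intro v1 h1' v2 h2' heq
      rw [Finset.mem_filter] at h1' h2'
      have hv1 : v1 ∈ ({u, w, v2} : Finset V) := heq ▸ (by simp : v1 ∈ ({u, w, v1} : Finset V))
      simp only [Finset.mem_insert, Finset.mem_singleton] at hv1
      rcases hv1 with h | h | h
      · exact absurd h (G.ne_of_adj h1'.2.1).symm
      · exact absurd h (G.ne_of_adj h1'.2.2).symm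
      · exact h
    · intro t ht
      rw [Finset.mem_filter, mem_cliqueFinset_iff] at ht
      obtain ⟨hcl, hu, hw⟩ := ht
      have hsub : ({u, w} : Finset V) ⊆ t := by
        intro a ha
        simp only [Finset.mem_insert, Finset.mem_singleton] at ha
        rcases ha with rfl | rfl
        · exact hu
        · exact hw
      have hcard2 : ({u, w} : Finset V).card = 2 := by
        rw [Finset.card_insert_of_notMem (by simpa using hne), Finset.card_singleton]
      have hcards : (t \ {u, w}).card = 1 := by
        rw [Finset.card_sdiff_of_subset hsub, hcl.2, hcard2]
      obtain ⟨v, hv⟩ := Finset.card_eq_one.mp hcards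
      have hvmem : v ∈ t ∧ v ∉ ({u, w} : Finset V) := by
        have : v ∈ t \ ({u, w} : Finset V) := hv ▸ Finset.mem_singleton_self v
        exact Finset.mem_sdiff.mp this
      simp only [Finset.mem_insert, Finset.mem_singleton] at hvmem
      have hvu : v ≠ u := fun h => hvmem.2 (Or.inl h)
      have hvw : v ≠ w := fun h => hvmem.2 (Or.inr h)
      refine ⟨v, ?_, ?_⟩
      · rw [Finset.mem_filter]
        exact ⟨Finset.mem_univ v,
          hcl.1 (Finset.mem_coe.mpr hu) (Finset.mem_coe.mpr hvmem.1) hvu.symm,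
          hcl.1 (Finset.mem_coe.mpr hw) (Finset.mem_coe.mpr hvmem.1) hvw.symm⟩
      · have : ({u, w} : Finset V) ∪ (t \ {u, w}) = t := Finset.union_sdiff_of_subset hsub
        rw [hv] at this
        rw [← this]
        ext a
        simp only [Finset.mem_insert, Finset.mem_singleton, Finset.mem_union]
        tauto
  rw [h1, ← h2]
  rw [← Finset.card_filter_add_card_filter_not
    (s := G.cliqueFinset 3) (p := fun t => u ∈ t ∧ w ∈ t)]
  omega

end Count

section ConCount
variable {V : Type} [Fintype V] [DecidableEq V] (G : SimpleGraph V) [DecidableRel G.Adj]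

lemma gcon_card_edge {u w : V} (huw : G.Adj u w) :
    (Gcon G u w).edgeFinset.card + 1 +
      (Finset.univ.filter fun v => G.Adj u v ∧ G.Adj w v).card = G.edgeFinset.card := by
  have hne : u ≠ w := G.ne_of_adj huw
  set k := (Finset.univ.filter fun v => G.Adj u v ∧ G.Adj w v).card with hk
  set k1 := (Finset.univ.filter fun b => b ≠ u ∧ b ≠ w ∧ G.Adj w b ∧ ¬ G.Adj u b).card with hk1
  -- degree of w decomposition : deg w = 1 + k + k1
  have hdegw : (Finset.univ.filter fun b => G.Adj w b).card = 1 + k + k1 := by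
    rw [← Finset.card_filter_add_card_filter_not
      (s := Finset.univ.filter fun b => G.Adj w b) (p := fun b => b = u)]
    rw [Finset.filter_filter, Finset.filter_filter]
    have e1 : Finset.univ.filter (fun b => G.Adj w b ∧ b = u) = {u} := by
      ext b
      simp only [Finset.mem_filter, Finset.mem_univ, true_and, Finset.mem_singleton]
      constructor
      · exact fun h => h.2
      · rintro rfl; exact ⟨huw.symm, rfl⟩
    rw [e1, Finset.card_singleton]
    rw [← Finset.card_filter_add_card_filter_not
      (s := Finset.univ.filter fun b => G.Adj w b ∧ ¬ b = u) (p := fun b => G.Adj u b)]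
    rw [Finset.filter_filter, Finset.filter_filter]
    have e2 : Finset.univ.filter (fun b => (G.Adj w b ∧ ¬ b = u) ∧ G.Adj u b) =
        Finset.univ.filter fun v => G.Adj u v ∧ G.Adj w v := by
      ext b
      simp only [Finset.mem_filter, Finset.mem_univ, true_and]
      constructor
      · exact fun h => ⟨h.2, h.1.1⟩
      · exact fun h => ⟨⟨h.2, fun hbu => G.loopless.irrefl u (hbu ▸ h.1)⟩, h.1⟩
    have e3 : Finset.univ.filter (fun b => (G.Adj w b ∧ ¬ b = u) ∧ ¬ G.Adj u b) =
        Finset.univ.filter fun b => b ≠ u ∧ b ≠ w ∧ G.Adj w b ∧ ¬ G.Adj u b := by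
      ext b
      simp only [Finset.mem_filter, Finset.mem_univ, true_and]
      constructor
      · exact fun h => ⟨h.1.2, fun hbw => G.loopless.irrefl w (hbw ▸ h.1.1), h.1.1, h.2⟩
      · exact fun h => ⟨⟨h.2.2.1, h.1⟩, h.2.2.2⟩
    rw [e2, e3, ← hk, ← hk1]
    omega
  -- adjacent-pair count for G split by touching w
  have hGpairs : #(Finset.univ.filter fun p : V × V => G.Adj p.1 p.2) =
      #(Finset.univ.filter fun p : V × V => G.Adj p.1 p.2 ∧ p.1 ≠ w ∧ p.2 ≠ w) +
      2 * (1 + k + k1) := by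
    rw [← Finset.card_filter_add_card_filter_not
      (s := Finset.univ.filter fun p : V × V => G.Adj p.1 p.2) (p := fun p => p.1 = w)]
    rw [Finset.filter_filter, Finset.filter_filter]
    have e1 : #(Finset.univ.filter fun p : V × V => G.Adj p.1 p.2 ∧ p.1 = w) =
        (Finset.univ.filter fun b => G.Adj w b).card := by
      apply Finset.card_bij (fun p _ => p.2)
      · intro p hp
        rw [Finset.mem_filter] at hp ⊢
        exact ⟨Finset.mem_univ _, hp.2.2 ▸ hp.2.1⟩
      · intro p1 h1 p2 h2 heq
        rw [Finset.mem_filter] at h1 h2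
        exact Prod.ext (h1.2.2.trans h2.2.2.symm) heq
      · intro b hb
        rw [Finset.mem_filter] at hb
        exact ⟨(w, b), Finset.mem_filter.mpr ⟨Finset.mem_univ _, hb.2, rfl⟩, rfl⟩
    rw [← Finset.card_filter_add_card_filter_not
      (s := Finset.univ.filter fun p : V × V => G.Adj p.1 p.2 ∧ ¬ p.1 = w) (p := fun p => p.2 = w)]
    rw [Finset.filter_filter, Finset.filter_filter]
    have e2 : #(Finset.univ.filter fun p : V × V => (G.Adj p.1 p.2 ∧ ¬ p.1 = w) ∧ p.2 = w) =
        (Finset.univ.filter fun b => G.Adj w b).card := by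
      apply Finset.card_bij (fun p _ => p.1)
      · intro p hp
        rw [Finset.mem_filter] at hp ⊢
        exact ⟨Finset.mem_univ _, ((hp.2.2 ▸ hp.2.1.1 : G.Adj p.1 w)).symm⟩
      · intro p1 h1 p2 h2 heq
        rw [Finset.mem_filter] at h1 h2
        exact Prod.ext heq (h1.2.2.trans h2.2.2.symm)
      · intro b hb
        rw [Finset.mem_filter] at hb
        refine ⟨(b, w), Finset.mem_filter.mpr ⟨Finset.mem_univ _,
          ⟨hb.2.symm, G.ne_of_adj hb.2.symm⟩, rfl⟩, rfl⟩
    have e3 : Finset.univ.filter (fun p : V × V => (G.Adj p.1 p.2 ∧ ¬ p.1 = w) ∧ ¬ p.2 = w) =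
        Finset.univ.filter (fun p : V × V => G.Adj p.1 p.2 ∧ p.1 ≠ w ∧ p.2 ≠ w) := by
      ext p
      simp only [Finset.mem_filter, Finset.mem_univ, true_and]
      tauto
    rw [e1, e2, e3, hdegw]
    omega
  -- pair count for Gcon transferred to V
  have hcpairs : #(Finset.univ.filter fun p : {v : V // v ≠ w} × {v : V // v ≠ w} =>
      (Gcon G u w).Adj p.1 p.2) =
      #(Finset.univ.filter fun p : V × V => p.1 ≠ w ∧ p.2 ≠ w ∧ p.1 ≠ p.2 ∧
        (G.Adj p.1 p.2 ∨ (p.1 = u ∧ G.Adj w p.2) ∨ (p.2 = u ∧ G.Adj p.1 w))) := by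
    apply Finset.card_bij (fun p _ => ((↑p.1 : V), (↑p.2 : V)))
    · intro p hp
      rw [Finset.mem_filter] at hp
      rw [Finset.mem_filter]
      obtain ⟨-, hne', hor⟩ := hp
      exact ⟨Finset.mem_univ _, p.1.2, p.2.2, fun h => hne' (Subtype.ext h), hor⟩
    · intro p1 h1 p2 h2 heq
      have h1' := congrArg Prod.fst heq
      have h2' := congrArg Prod.snd heq
      exact Prod.ext (Subtype.ext h1') (Subtype.ext h2')
    · intro q hq
      rw [Finset.mem_filter] at hq
      obtain ⟨-, hq1, hq2, hqne, hor⟩ := hq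
      exact ⟨(⟨q.1, hq1⟩, ⟨q.2, hq2⟩), Finset.mem_filter.mpr ⟨Finset.mem_univ _,
        fun h => hqne (congrArg Subtype.val h), hor⟩, rfl⟩
  -- split the transferred predicate
  have hsplit : #(Finset.univ.filter fun p : V × V => p.1 ≠ w ∧ p.2 ≠ w ∧ p.1 ≠ p.2 ∧
        (G.Adj p.1 p.2 ∨ (p.1 = u ∧ G.Adj w p.2) ∨ (p.2 = u ∧ G.Adj p.1 w))) =
      #(Finset.univ.filter fun p : V × V => G.Adj p.1 p.2 ∧ p.1 ≠ w ∧ p.2 ≠ w) + 2 * k1 := by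
    rw [← Finset.card_filter_add_card_filter_not
      (s := Finset.univ.filter fun p : V × V => p.1 ≠ w ∧ p.2 ≠ w ∧ p.1 ≠ p.2 ∧
        (G.Adj p.1 p.2 ∨ (p.1 = u ∧ G.Adj w p.2) ∨ (p.2 = u ∧ G.Adj p.1 w)))
      (p := fun p => G.Adj p.1 p.2)]
    rw [Finset.filter_filter, Finset.filter_filter]
    have e1 : Finset.univ.filter (fun p : V × V => (p.1 ≠ w ∧ p.2 ≠ w ∧ p.1 ≠ p.2 ∧
        (G.Adj p.1 p.2 ∨ (p.1 = u ∧ G.Adj w p.2) ∨ (p.2 = u ∧ G.Adj p.1 w))) ∧ G.Adj p.1 p.2) =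
        Finset.univ.filter (fun p : V × V => G.Adj p.1 p.2 ∧ p.1 ≠ w ∧ p.2 ≠ w) := by
      ext p
      simp only [Finset.mem_filter, Finset.mem_univ, true_and]
      constructor
      · exact fun h => ⟨h.2, h.1.1, h.1.2.1⟩
      · exact fun h => ⟨⟨h.2.1, h.2.2, G.ne_of_adj h.1, Or.inl h.1⟩, h.1⟩
    -- the non-adjacent part splits into two copies of k1
    have e2 : #(Finset.univ.filter (fun p : V × V => (p.1 ≠ w ∧ p.2 ≠ w ∧ p.1 ≠ p.2 ∧
        (G.Adj p.1 p.2 ∨ (p.1 = u ∧ G.Adj w p.2) ∨ (p.2 = u ∧ G.Adj p.1 w))) ∧ ¬ G.Adj p.1 p.2))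
        = 2 * k1 := by
      rw [← Finset.card_filter_add_card_filter_not
        (s := Finset.univ.filter (fun p : V × V => (p.1 ≠ w ∧ p.2 ≠ w ∧ p.1 ≠ p.2 ∧
          (G.Adj p.1 p.2 ∨ (p.1 = u ∧ G.Adj w p.2) ∨ (p.2 = u ∧ G.Adj p.1 w))) ∧ ¬ G.Adj p.1 p.2))
        (p := fun p => p.1 = u)]
      rw [Finset.filter_filter, Finset.filter_filter]
      have f1 : #(Finset.univ.filter (fun p : V × V => ((p.1 ≠ w ∧ p.2 ≠ w ∧ p.1 ≠ p.2 ∧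
          (G.Adj p.1 p.2 ∨ (p.1 = u ∧ G.Adj w p.2) ∨ (p.2 = u ∧ G.Adj p.1 w))) ∧ ¬ G.Adj p.1 p.2)
          ∧ p.1 = u)) = k1 := by
        rw [hk1]
        symm
        apply Finset.card_bij (fun b _ => ((u, b) : V × V))
        · intro b hb
          rw [Finset.mem_filter] at hb
          obtain ⟨-, hbu, hbw, hwb, hnub⟩ := hb
          rw [Finset.mem_filter]
          refine ⟨Finset.mem_univ _, ⟨⟨hne, hbw, fun h => hbu h.symm,
            Or.inr (Or.inl ⟨rfl, hwb⟩)⟩, hnub⟩, rfl⟩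
        · intro b1 h1 b2 h2 heq
          exact congrArg Prod.snd heq
        · intro p hp
          rw [Finset.mem_filter] at hp
          obtain ⟨-, ⟨⟨hp1w, hp2w, hpne, hor⟩, hnadj⟩, hp1u⟩ := hp
          refine ⟨p.2, ?_, ?_⟩
          · rw [Finset.mem_filter]
            refine ⟨Finset.mem_univ _, fun h => hpne (hp1u.trans h.symm), hp2w, ?_, ?_⟩
            · rcases hor with h | ⟨-, h⟩ | ⟨hp2u, -⟩
              · exact absurd h hnadj
              · exact h
              · exact absurd (hp1u.trans hp2u.symm) hpne
            · rw [← hp1u]; exact hnadj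
          · exact Prod.ext hp1u.symm rfl
      have f2 : #(Finset.univ.filter (fun p : V × V => ((p.1 ≠ w ∧ p.2 ≠ w ∧ p.1 ≠ p.2 ∧
          (G.Adj p.1 p.2 ∨ (p.1 = u ∧ G.Adj w p.2) ∨ (p.2 = u ∧ G.Adj p.1 w))) ∧ ¬ G.Adj p.1 p.2)
          ∧ ¬ p.1 = u)) = k1 := by
        rw [hk1]
        symm
        apply Finset.card_bij (fun b _ => ((b, u) : V × V))
        · intro b hb
          rw [Finset.mem_filter] at hb
          obtain ⟨-, hbu, hbw, hwb, hnub⟩ := hb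
          rw [Finset.mem_filter]
          refine ⟨Finset.mem_univ _, ⟨⟨hbw, hne, hbu, Or.inr (Or.inr ⟨rfl, hwb.symm⟩)⟩,
            fun h => hnub h.symm⟩, hbu⟩
        · intro b1 h1 b2 h2 heq
          exact congrArg Prod.fst heq
        · intro p hp
          rw [Finset.mem_filter] at hp
          obtain ⟨-, ⟨⟨hp1w, hp2w, hpne, hor⟩, hnadj⟩, hp1u⟩ := hp
          have hp2u : p.2 = u := by
            rcases hor with h | ⟨h, -⟩ | ⟨h, -⟩
            · exact absurd h hnadj
            · exact absurd h hp1u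
            · exact h
          refine ⟨p.1, ?_, ?_⟩
          · rw [Finset.mem_filter]
            refine ⟨Finset.mem_univ _, hp1u, hp1w, ?_, ?_⟩
            · rcases hor with h | ⟨h, -⟩ | ⟨-, h⟩
              · exact absurd h hnadj
              · exact absurd h hp1u
              · exact h.symm
            · intro hadj
              rw [← hp2u] at hadj
              exact hnadj hadj.symm
          · exact Prod.ext rfl hp2u.symm
      rw [f1, f2]
      ring
    rw [e1] at *
    omega
  -- assemble
  have htG : 2 * #G.edgeFinset = #(Finset.univ.filter fun p : V × V => G.Adj p.1 p.2) := by
    rw [SimpleGraph.two_mul_card_edgeFinset]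
  have htC : 2 * #(Gcon G u w).edgeFinset =
      #(Finset.univ.filter fun p : {v : V // v ≠ w} × {v : V // v ≠ w} =>
        (Gcon G u w).Adj p.1 p.2) := by
    rw [SimpleGraph.two_mul_card_edgeFinset]
  have hmain : #(Finset.univ.filter fun p : {v : V // v ≠ w} × {v : V // v ≠ w} =>
      (Gcon G u w).Adj p.1 p.2) = #(Finset.univ.filter fun p : V × V => G.Adj p.1 p.2 ∧
      p.1 ≠ w ∧ p.2 ≠ w) + 2 * k1 := hcpairs.trans hsplit
  omega

end ConCount

section Small
variable {V : Type} [Fintype V] [DecidableEq V]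

lemma rcon_sum (r : V → Finset ℕ) {u w : V} (hne : u ≠ w) :
    (∑ a : {v : V // v ≠ w}, ((rcon r u w a).card : ℤ)) + ((r u ∩ r w).card : ℤ) =
      ∑ v : V, ((r v).card : ℤ) := by
  have h1 : ∑ v ∈ Finset.univ.erase w, ((if v = u then r u ∪ r w else r v).card : ℤ) =
      ∑ a : {v : V // v ≠ w}, (((if ↑a = u then r u ∪ r w else r ↑a) : Finset ℕ).card : ℤ) := by
    apply Finset.sum_subtype
    intro v
    simp [Finset.mem_erase]
  simp only [rcon]
  rw [← h1]
  have hu : u ∈ Finset.univ.erase w := Finset.mem_erase.mpr ⟨hne, Finset.mem_univ u⟩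
  rw [← Finset.sum_erase_add _ _ hu, if_pos rfl]
  have h2 : ∑ v ∈ (Finset.univ.erase w).erase u, ((if v = u then r u ∪ r w else r v).card : ℤ) =
      ∑ v ∈ (Finset.univ.erase w).erase u, ((r v).card : ℤ) := by
    apply Finset.sum_congr rfl
    intro v hv
    rw [if_neg (Finset.mem_erase.mp hv).1]
  rw [h2]
  have h3 : ((r u ∪ r w).card : ℤ) + ((r u ∩ r w).card : ℤ) =
      ((r u).card : ℤ) + ((r w).card : ℤ) := by
    have := Finset.card_union_add_card_inter (r u) (r w)
    exact_mod_cast congrArg (Nat.cast : ℕ → ℤ) this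
  have h4 : ∑ v : V, ((r v).card : ℤ) =
      (∑ v ∈ (Finset.univ.erase w).erase u, ((r v).card : ℤ)) +
        ((r u).card : ℤ) + ((r w).card : ℤ) := by
    rw [Finset.sum_erase_add _ _ hu]
    rw [Finset.sum_erase_add _ _ (Finset.mem_univ w)]
  rw [h4]; ring_nf; linarith [h3]

lemma rcon_sup (r : V → Finset ℕ) {u w : V} :
    (Finset.univ.sup fun a : {v : V // v ≠ w} => ((rcon r u w a).sup id)) ≤
      Finset.univ.sup fun v : V => (r v).sup id := by
  apply Finset.sup_le
  intro a _
  unfold rcon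
  split_ifs with h
  · rw [Finset.sup_union]
    exact sup_le_iff.mpr ⟨Finset.le_sup (f := fun v : V => (r v).sup id) (Finset.mem_univ u),
      Finset.le_sup (f := fun v : V => (r v).sup id) (Finset.mem_univ w)⟩
  · exact Finset.le_sup (f := fun v : V => (r v).sup id) (Finset.mem_univ (↑a : V))

lemma rcon_pos (r : V → Finset ℕ) {u w : V} (hpos : ∀ v : V, ∀ c ∈ r v, 1 ≤ c) :
    ∀ a : {v : V // v ≠ w}, ∀ c ∈ rcon r u w a, 1 ≤ c := by
  intro a c hc
  unfold rcon at hc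
  split_ifs at hc with h
  · rcases Finset.mem_union.mp hc with h' | h'
    · exact hpos u c h'
    · exact hpos w c h'
  · exact hpos ↑a c hc

lemma card_subtype_ne' (w : V) :
    Fintype.card {v : V // v ≠ w} + 1 = Fintype.card V := by
  have h1 : Fintype.card {v : V // v ≠ w} = Fintype.card V - Fintype.card {v : V // v = w} :=
    Fintype.card_subtype_compl _
  have h2 : Fintype.card {v : V // v = w} = 1 := Fintype.card_subtype_eq w
  have h3 : 0 < Fintype.card V := Fintype.card_pos_iff.mpr ⟨w⟩
  omega

lemma cliques_of_edgeless (G : SimpleGraph V) [DecidableRel G.Adj]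
    (hE : ∀ a b, ¬ G.Adj a b) : (G.cliqueFinset 3).card = 0 := by
  rw [Finset.card_eq_zero, cliqueFinset_eq_empty_iff]
  intro t ht
  obtain ⟨a, b, c, hab, -, -, -⟩ := is3Clique_iff.mp ht
  exact hE a b hab

end Small

section Aux

lemma aux_base (V : Type) [Fintype V] [LinearOrder V] (G : SimpleGraph V)
    [DecidableRel G.Adj] (r : V → Finset ℕ) (hpos : ∀ v : V, ∀ c ∈ r v, 1 ≤ c)
    (hE : G.edgeFinset.card = 0) :
    ∃ p : Polynomial ℤ,
      (∀ x : ℕ, (Finset.univ.sup fun v : V => (r v).sup id) ≤ x →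
        (rcount G r x : ℤ) = p.eval (x : ℤ)) ∧
      p.natDegree ≤ Fintype.card V ∧
      p.coeff (Fintype.card V) = 1 ∧
      (1 ≤ Fintype.card V → p.coeff (Fintype.card V - 1) =
        -((G.edgeFinset.card : ℤ) + ∑ v : V, ((r v).card : ℤ))) ∧
      (2 ≤ Fintype.card V → p.coeff (Fintype.card V - 2) = Bexpr G r) := by
  classical
  have hE' : ∀ a b : V, ¬ G.Adj a b := by
    intro a b hadj
    have : s(a,b) ∈ G.edgeFinset := by rw [mem_edgeFinset, mem_edgeSet]; exact hadj
    rw [Finset.card_eq_zero] at hE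
    rw [hE] at this
    exact absurd this (Finset.notMem_empty _)
  refine ⟨∏ v : V, (X - C (((r v).card : ℤ))), ?_, ?_, ?_, ?_, ?_⟩
  · intro x hx
    rw [rcount_bot_int G r hE' x (fun v => rsub r hpos hx v), eval_prod]
    refine Finset.prod_congr rfl fun v _ => ?_
    simp
  · obtain ⟨-, hdeg, -, -⟩ := prod_linear_coeffs (fun v : V => ((r v).card : ℤ)) Finset.univ
    rw [hdeg, Finset.card_univ]
  · obtain ⟨hm, hdeg, -, -⟩ := prod_linear_coeffs (fun v : V => ((r v).card : ℤ)) Finset.univ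
    have := hm.coeff_natDegree
    rwa [hdeg, Finset.card_univ] at this
  · intro hn
    obtain ⟨-, -, h1, -⟩ := prod_linear_coeffs (fun v : V => ((r v).card : ℤ)) Finset.univ
    rw [h1 (Fintype.card V - 1) (by rw [Finset.card_univ]; omega), hE]
    push_cast
    ring
  · intro hn
    obtain ⟨-, -, -, h2⟩ := prod_linear_coeffs (fun v : V => ((r v).card : ℤ)) Finset.univ
    rw [h2 (Fintype.card V - 2) (by rw [Finset.card_univ]; omega)]
    unfold Bexpr
    have hEempty : G.edgeFinset = ∅ := Finset.card_eq_zero.mp hE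
    rw [hE, cliques_of_edgeless G hE', hEempty, Finset.sum_empty]
    unfold pairSum
    norm_num

lemma aux : ∀ (N : ℕ) (V : Type) [Fintype V] [LinearOrder V] (G : SimpleGraph V)
    [DecidableRel G.Adj] (r : V → Finset ℕ),
    (∀ v : V, ∀ c ∈ r v, 1 ≤ c) → Fintype.card V + G.edgeFinset.card ≤ N →
    ∃ p : Polynomial ℤ,
      (∀ x : ℕ, (Finset.univ.sup fun v : V => (r v).sup id) ≤ x →
        (rcount G r x : ℤ) = p.eval (x : ℤ)) ∧
      p.natDegree ≤ Fintype.card V ∧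
      p.coeff (Fintype.card V) = 1 ∧
      (1 ≤ Fintype.card V → p.coeff (Fintype.card V - 1) =
        -((G.edgeFinset.card : ℤ) + ∑ v : V, ((r v).card : ℤ))) ∧
      (2 ≤ Fintype.card V → p.coeff (Fintype.card V - 2) = Bexpr G r) := by
  intro N
  induction N with
  | zero =>
    intro V _ _ G _ r hpos hle
    exact aux_base V G r hpos (by omega)
  | succ N ih =>
    intro V _ _ G _ r hpos hle
    by_cases hE : G.edgeFinset.card = 0
    · exact aux_base V G r hpos hE
    · -- pick an edge
      obtain ⟨e, he⟩ := Finset.card_pos.mp (Nat.pos_of_ne_zero hE)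
      obtain ⟨u, w, he⟩ : ∃ u w : V, s(u,w) ∈ G.edgeFinset := by
        induction e using Sym2.ind with
        | _ a b => exact ⟨a, b, he⟩
      have huw : G.Adj u w := by rwa [mem_edgeFinset, mem_edgeSet] at he
      have hne : u ≠ w := G.ne_of_adj huw
      have hmdel : (Gdel G u w).edgeFinset.card + 1 = G.edgeFinset.card :=
        gdel_card_edge G huw
      have hcliq := gdel_cliques G huw
      have hcone := gcon_card_edge G huw
      have hcard : Fintype.card {v : V // v ≠ w} + 1 = Fintype.card V := card_subtype_ne' w
      have hn2 : 2 ≤ Fintype.card V :=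
        Fintype.one_lt_card_iff_nontrivial.mpr ⟨⟨u, w, hne⟩⟩
      obtain ⟨p₁, hp1ev, hp1deg, hp1n, hp1n1, hp1n2⟩ :=
        ih V (Gdel G u w) r hpos (by omega)
      obtain ⟨p₂, hp2ev, hp2deg, hp2n, hp2n1, hp2n2⟩ :=
        ih {v : V // v ≠ w} (Gcon G u w) (rcon r u w) (rcon_pos r hpos) (by omega)
      set n := Fintype.card V with hn
      have hcardV' : Fintype.card {v : V // v ≠ w} = n - 1 := by omega
      refine ⟨p₁ - p₂, ?_, ?_, ?_, ?_, ?_⟩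
      · intro x hx
        have hrec := rcount_rec G r huw x
        have hx2 : (Finset.univ.sup fun a : {v : V // v ≠ w} => ((rcon r u w a).sup id)) ≤ x :=
          le_trans (rcon_sup r) hx
        have e1 := hp1ev x hx
        have e2 := hp2ev x hx2
        have : (rcount G r x : ℤ) = (rcount (Gdel G u w) r x : ℤ) -
            (rcount (Gcon G u w) (rcon r u w) x : ℤ) := by
          have := congrArg (Nat.cast : ℕ → ℤ) hrec
          push_cast at this
          linarith
        rw [this, e1, e2, eval_sub]
      · exact le_trans (natDegree_sub_le p₁ p₂) (by
          rw [max_le_iff]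
          exact ⟨hp1deg, le_trans hp2deg (by omega)⟩)
      · rw [coeff_sub, hp1n, coeff_eq_zero_of_natDegree_lt (by omega : p₂.natDegree < n)]
        ring
      · intro hn1
        rw [coeff_sub, hp1n1 (by omega)]
        have h2 : p₂.coeff (n - 1) = 1 := by
          rw [show n - 1 = Fintype.card {v : V // v ≠ w} from by omega]
          exact hp2n
        rw [h2]
        have hmz : ((Gdel G u w).edgeFinset.card : ℤ) + 1 = (G.edgeFinset.card : ℤ) := by
          exact_mod_cast congrArg (Nat.cast : ℕ → ℤ) hmdel
        linarith
      · intro hn2'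
        rw [coeff_sub, hp1n2 (by omega)]
        have h2 : p₂.coeff (n - 2) =
            -(((Gcon G u w).edgeFinset.card : ℤ) +
              ∑ a : {v : V // v ≠ w}, ((rcon r u w a).card : ℤ)) := by
          rw [show n - 2 = Fintype.card {v : V // v ≠ w} - 1 from by omega]
          exact hp2n1 (by omega)
        rw [h2]
        -- now the combinatorial identity
        unfold Bexpr
        have hSdel : (∑ e ∈ (Gdel G u w).edgeFinset,
            Sym2.lift ⟨fun b c => (((r b) ∩ (r c)).card : ℤ),
              fun b c => by simp [Finset.inter_comm]⟩ e) + ((r u ∩ r w).card : ℤ) =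
            ∑ e ∈ G.edgeFinset,
            Sym2.lift ⟨fun b c => (((r b) ∩ (r c)).card : ℤ),
              fun b c => by simp [Finset.inter_comm]⟩ e := by
          rw [gdel_edgeFinset, ← Finset.sum_erase_add G.edgeFinset _ he]
          congr 1
        have zmd : ((Gdel G u w).edgeFinset.card : ℤ) + 1 = (G.edgeFinset.card : ℤ) := by
          exact_mod_cast congrArg (Nat.cast : ℕ → ℤ) hmdel
        have zt : ((G.cliqueFinset 3).card : ℤ) = (((Gdel G u w).cliqueFinset 3).card : ℤ) +
            ((Finset.univ.filter fun v => G.Adj u v ∧ G.Adj w v).card : ℤ) := by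
          exact_mod_cast congrArg (Nat.cast : ℕ → ℤ) hcliq
        have zm' : ((Gcon G u w).edgeFinset.card : ℤ) + 1 +
            ((Finset.univ.filter fun v => G.Adj u v ∧ G.Adj w v).card : ℤ) =
            (G.edgeFinset.card : ℤ) := by
          exact_mod_cast congrArg (Nat.cast : ℕ → ℤ) hcone
        have zR' := rcon_sum r hne
        have hch : G.edgeFinset.card.choose 2 =
            (Gdel G u w).edgeFinset.card.choose 2 + (Gdel G u w).edgeFinset.card := by
          rw [← hmdel, Nat.choose_succ_succ, Nat.choose_one_right]
          ring
        have zch : ((G.edgeFinset.card.choose 2 : ℕ) : ℤ) =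
            (((Gdel G u w).edgeFinset.card.choose 2 : ℕ) : ℤ) +
            ((Gdel G u w).edgeFinset.card : ℤ) := by
          exact_mod_cast congrArg (Nat.cast : ℕ → ℤ) hch
        have hmul : ((G.edgeFinset.card : ℤ)) * (∑ v : V, ((r v).card : ℤ)) =
            (((Gdel G u w).edgeFinset.card : ℤ)) * (∑ v : V, ((r v).card : ℤ)) +
            (∑ v : V, ((r v).card : ℤ)) := by
          rw [← zmd]; ring
        linarith [hSdel, zmd, zt, zm', zR', zch, hmul]

end Aux

theorem stmt5 {V : Type} [Fintype V] [LinearOrder V] (G : SimpleGraph V) [DecidableRel G.Adj]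
    (r : V → Finset ℕ) (hpos : ∀ v : V, ∀ c ∈ r v, 1 ≤ c)
    (hn : 2 ≤ Fintype.card V) (a : ℕ → ℤ)
    (ha : ∀ x : ℕ, (Finset.univ.sup fun v : V => (r v).sup id) ≤ x →
      (rcount G r x : ℤ) =
        ∑ i ∈ Finset.range (Fintype.card V + 1),
          (-1 : ℤ) ^ (Fintype.card V - i) * a i * (x : ℤ) ^ i) :
    a (Fintype.card V - 2) =
      (G.edgeFinset.card.choose 2 : ℤ) - ((G.cliqueFinset 3).card : ℤ) +
        (∑ u : V, ∑ v ∈ Finset.univ.filter (fun v => u < v), ((r u).card : ℤ) * ((r v).card : ℤ)) +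
        (G.edgeFinset.card : ℤ) * ∑ u : V, ((r u).card : ℤ) -
        ∑ e ∈ G.edgeFinset,
          Sym2.lift ⟨fun b c => (((r b) ∩ (r c)).card : ℤ),
            fun b c => by simp [Finset.inter_comm]⟩ e := by
  classical
  obtain ⟨p, hev, hdeg, hcn, hcn1, hcn2⟩ :=
    aux (Fintype.card V + G.edgeFinset.card) V G r hpos le_rfl
  set n := Fintype.card V with hnn
  set q : Polynomial ℤ :=
    ∑ i ∈ Finset.range (n + 1), monomial i ((-1 : ℤ) ^ (n - i) * a i) with hq
  have hqev : ∀ x : ℕ, (Finset.univ.sup fun v : V => (r v).sup id) ≤ x →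
      (rcount G r x : ℤ) = q.eval (x : ℤ) := by
    intro x hx
    rw [ha x hx, hq, eval_finset_sum]
    refine Finset.sum_congr rfl fun i _ => ?_
    rw [eval_monomial]
  have hpq : p = q := by
    have hdiff : p - q = 0 := by
      apply Polynomial.eq_zero_of_infinite_isRoot
      apply Set.Infinite.mono ?_
        (Set.Ici_infinite (((Finset.univ.sup fun v : V => (r v).sup id) : ℕ) : ℤ))
      intro z hz
      have hzM : (((Finset.univ.sup fun v : V => (r v).sup id) : ℕ) : ℤ) ≤ z := hz
      have hz0 : (0 : ℤ) ≤ z := le_trans (by positivity) hzM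
      have hxz : ((z.toNat : ℕ) : ℤ) = z := Int.toNat_of_nonneg hz0
      have hxM : (Finset.univ.sup fun v : V => (r v).sup id) ≤ z.toNat := by omega
      simp only [Set.mem_setOf_eq, IsRoot, eval_sub]
      rw [← hxz, ← hev z.toNat hxM, ← hqev z.toNat hxM, sub_self]
    have := sub_eq_zero.mp hdiff
    exact this
  have hcoeffq : q.coeff (n - 2) = a (n - 2) := by
    rw [hq, finset_sum_coeff]
    rw [Finset.sum_eq_single (n - 2)]
    · rw [coeff_monomial, if_pos rfl, show n - (n - 2) = 2 from by omega]
      ring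
    · intro b _ hbne
      rw [coeff_monomial, if_neg hbne]
    · intro hnot
      exact absurd (Finset.mem_range.mpr (by omega)) hnot
  have hfin : a (n - 2) = Bexpr G r := by
    rw [← hcoeffq, ← hpq]
    exact hcn2 hn
  exact hfin
end

section
/- Let G be a connected graph of order n and let r be a k-restraint on G that is not equivalent to the constant k-restraint r_c^k (equivalently, r(u) ∩ r(v) is not equal to r(u) for some edge, i.e. Σ_{uv∈E(G)} |r(u)∩r(v)| < k·m_G). Then for all sufficiently large x, π_{r_c^k}(G,x) < π_r(G,x). -/
open Finset

theorem Finset.card_filter_forall_not_eq_sum_powerset {α ι : Type*} [DecidableEq ι]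
    (A : Finset α) (s : Finset ι) (P : ι → α → Prop) [∀ i, DecidablePred (P i)] :
    (#{a ∈ A | ∀ i ∈ s, ¬P i a} : ℤ) =
      ∑ t ∈ s.powerset, (-1 : ℤ) ^ #t * #{a ∈ A | ∀ i ∈ t, P i a} := by
  calc (#{a ∈ A | ∀ i ∈ s, ¬P i a} : ℤ)
      = ∑ a ∈ A, ∏ i ∈ s, (1 - if P i a then 1 else 0 : ℤ) := by
        simp only [natCast_card_filter, ← prod_boole]
        refine sum_congr rfl fun a _ => prod_congr rfl fun i _ => ?_
        split_ifs <;> simp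
    _ = ∑ t ∈ s.powerset, (-1) ^ #t * ∑ a ∈ A, ∏ i ∈ t, (if P i a then 1 else 0 : ℤ) := by
        simp only [prod_sub, prod_const_one, mul_one, mul_sum]
        exact sum_comm
    _ = _ := by simp only [prod_boole, sum_boole]

lemma Finset.mul_card_biUnion_le {ι α : Type*} [DecidableEq α] (s : Finset ι)
    (t : ι → Finset α) {a B : ℕ} (h : ∀ i ∈ s, a * #(t i) ≤ B) :
    a * #(s.biUnion t) ≤ #s * B :=
  calc a * #(s.biUnion t) ≤ a * ∑ i ∈ s, #(t i) := by gcongr; exact card_biUnion_le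
    _ = ∑ i ∈ s, a * #(t i) := mul_sum ..
    _ ≤ ∑ _i ∈ s, B := sum_le_sum h
    _ = #s * B := by rw [sum_const, smul_eq_mul]

lemma Finset.card_Icc_one_sdiff_of_subset {x : ℕ} {t : Finset ℕ} (h : t ⊆ Icc 1 x) :
    #(Icc 1 x \ t) = x - #t := by
  rw [card_sdiff_of_subset h, Nat.card_Icc, Nat.add_sub_cancel]

lemma Nat.mul_pow_lt_mul_sub_pow {a k x n : ℕ} (hk : 2 * k ≤ x) (hx : 2 ^ n * a < x) :
    a * x ^ n < x * (x - k) ^ n := by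
  calc a * x ^ n ≤ a * (2 * (x - k)) ^ n := by gcongr; omega
    _ = 2 ^ n * a * (x - k) ^ n := by ring
    _ < x * (x - k) ^ n := Nat.mul_lt_mul_of_pos_right hx (pow_pos (by omega) n)

lemma Sym2.exists_mem_mem_ne_of_ne {α : Type*} {e f : Sym2 α} (hef : e ≠ f) (he : ¬e.IsDiag)
    (hf : ¬f.IsDiag) (v : α) : ∃ u ∈ e, ∃ w ∈ f, u ≠ v ∧ w ≠ v ∧ u ≠ w := by
  induction e using Sym2.ind with | _ p q =>
  induction f using Sym2.ind with | _ p' q' =>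
  simp only [Sym2.mk_isDiag_iff, Sym2.mem_iff, exists_eq_or_imp, exists_eq_left] at *
  grind

lemma Sym2.eq_of_isDiag_map_of_forall_ne {α β : Type*} {e f : Sym2 α} (hef : e ≠ f)
    (he : ¬e.IsDiag) (hf : ¬f.IsDiag) {u w : α} (hu : u ∈ e) (hw : w ∈ f) (huw : u ≠ w)
    {c d : α → β} (hce : (e.map c).IsDiag) (hcf : (f.map c).IsDiag) (hde : (e.map d).IsDiag)
    (hdf : (f.map d).IsDiag) (hcd : ∀ y, y ≠ u → y ≠ w → c y = d y) : c = d := by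
  obtain ⟨u', rfl⟩ := Sym2.mem_iff_exists.1 hu
  obtain ⟨w', rfl⟩ := Sym2.mem_iff_exists.1 hw
  simp only [Sym2.mk_isDiag_iff, Sym2.map_mk] at *
  -- Since `e ≠ f`, at least one of `u`, `w` has its partner outside `{u, w}`, which fixes its
  -- colour; the other one is then fixed through its own edge.
  have hcdu : c u = d u ∧ c w = d w := by grind
  funext y
  rcases eq_or_ne y u with rfl | hyu
  · exact hcdu.1
  rcases eq_or_ne y w with rfl | hyw
  · exact hcdu.2
  exact hcd y hyu hyw

section Colorings

variable {V : Type*} [Fintype V] [DecidableEq V]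

lemma Fintype.card_le_pow_of_injOn_restrict {β : Type*} (t : Finset β) {K : Finset (V → β)}
    (hK : K ⊆ Fintype.piFinset fun _ => t) (S : Finset V)
    (hS : ∀ c ∈ K, ∀ d ∈ K, (∀ y ∉ S, c y = d y) → c = d) :
    #K ≤ #t ^ (Fintype.card V - #S) := by
  calc #K ≤ #(Fintype.piFinset fun _ : {y // y ∉ S} => t) := by
        refine card_le_card_of_injOn (fun c y => c y) (fun c hc => ?_) fun c hc d hd hcd => ?_
        · simpa using fun y _ => Fintype.mem_piFinset.1 (hK hc) y
        · exact hS c hc d hd fun y hy => congrFun hcd ⟨y, hy⟩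
    _ = #t ^ (Fintype.card V - #S) := by simp

lemma Fintype.card_filter_piFinset_apply_eq_apply {β : Type*} [DecidableEq β] (A : V → Finset β)
    {u v : V} (huv : u ≠ v) :
    #{c ∈ Fintype.piFinset A | c u = c v} =
      #(A u ∩ A v) * ∏ w ∈ (univ.erase u).erase v, #(A w) := by
  rw [card_eq_sum_card_fiberwise (f := fun c => c u) (t := A u ∩ A v)]
  · rw [← smul_eq_mul, ← sum_const]
    refine Finset.sum_congr rfl fun a ha => ?_
    have hfib : {c ∈ {c ∈ Fintype.piFinset A | c u = c v} | c u = a} =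
        {c ∈ Fintype.piFinset (Function.update A u {a}) | c v = a} := by
      ext c
      simp only [mem_filter, Fintype.mem_piFinset]
      constructor
      · rintro ⟨⟨hc, huv⟩, rfl⟩
        refine ⟨fun w => ?_, huv.symm⟩
        rcases eq_or_ne w u with rfl | hw <;> simp [*]
      · rintro ⟨hc, rfl⟩
        have hcu := hc u
        simp only [Function.update_self, mem_singleton] at hcu
        refine ⟨⟨fun w => ?_, hcu⟩, hcu⟩
        rcases eq_or_ne w u with rfl | hw
        · rw [hcu]; exact (mem_inter.1 ha).1
        · simpa [hw] using hc w
    rw [hfib]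
    refine (Fintype.card_filter_piFinset_eq_of_mem _ _
      (by simpa [huv.symm] using (mem_inter.1 ha).2)).trans ?_
    rw [← mul_prod_erase _ _ (mem_erase.2 ⟨huv, mem_univ u⟩), Function.update_self,
      card_singleton, one_mul, erase_right_comm]
    exact Finset.prod_congr rfl fun w hw => by
      rw [Function.update_of_ne (ne_of_mem_erase (mem_of_mem_erase hw))]
  · intro c hc
    simp only [coe_filter, Set.mem_ofPred_eq, Fintype.mem_piFinset] at hc
    exact mem_inter.2 ⟨hc.1 u, by simpa [hc.2] using hc.1 v⟩

-- Pinning `v` leaves three vertices determined by the others, so the count is at most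
-- `#t ^ (n - 3)` with `3 ≤ n`; multiplying by `#t` removes the truncated exponent.
lemma card_mul_card_filter_isDiag_map_le {β : Type*} [DecidableEq β] (t : Finset β)
    {e f : Sym2 V} (hef : e ≠ f) (he : ¬e.IsDiag) (hf : ¬f.IsDiag) (v : V) (a : β) :
    #t * #{c ∈ Fintype.piFinset (fun _ => t) | (e.map c).IsDiag ∧ (f.map c).IsDiag ∧ c v = a} ≤
      #t ^ (Fintype.card V - 2) := by
  obtain ⟨u, hu, w, hw, huv, hwv, huw⟩ := Sym2.exists_mem_mem_ne_of_ne hef he hf v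
  have hS : #{v, u, w} = 3 := card_eq_three.2 ⟨v, u, w, huv.symm, hwv.symm, huw, rfl⟩
  have h3 : 3 ≤ Fintype.card V := hS ▸ card_le_univ _
  set K : Finset (V → β) :=
    {c ∈ Fintype.piFinset (fun _ => t) | (e.map c).IsDiag ∧ (f.map c).IsDiag ∧ c v = a}
  have hK : #K ≤ #t ^ (Fintype.card V - 3) := hS ▸
    Fintype.card_le_pow_of_injOn_restrict t (filter_subset _ _) {v, u, w} fun c hc d hd hcd => by
      simp only [mem_filter] at hc hd
      refine Sym2.eq_of_isDiag_map_of_forall_ne hef he hf hu hw huw hc.2.1 hc.2.2.1 hd.2.1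
        hd.2.2.1 fun y hyu hyw => ?_
      by_cases hyv : y = v
      · rw [hyv, hc.2.2.2, hd.2.2.2]
      · exact hcd y (by simp [hyv, hyu, hyw])
  calc #t * #K ≤ #t * #t ^ (Fintype.card V - 3) := by gcongr
    _ = #t ^ (Fintype.card V - 2) := by rw [← pow_succ']; congr 1; omega

def monoColorings (x : ℕ) (T : Finset (Sym2 V)) : Finset (V → ℕ) :=
  {c ∈ Fintype.piFinset fun _ => Icc 1 x | ∀ e ∈ T, (e.map c).IsDiag}

def restrictedMonoColorings (s : V → Finset ℕ) (x : ℕ) (T : Finset (Sym2 V)) :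
    Finset (V → ℕ) :=
  {c ∈ monoColorings x T | ∀ v, c v ∉ s v}

lemma restrictedMonoColorings_eq_filter (s : V → Finset ℕ) (x : ℕ) (T : Finset (Sym2 V)) :
    restrictedMonoColorings s x T =
      {c ∈ Fintype.piFinset fun v => Icc 1 x \ s v | ∀ e ∈ T, (e.map c).IsDiag} := by
  ext c
  simp only [restrictedMonoColorings, monoColorings, mem_filter, Fintype.mem_piFinset, mem_sdiff]
  grind

lemma card_restrictedMonoColorings_add_card_filter_exists_mem (s : V → Finset ℕ) (x : ℕ)
    (T : Finset (Sym2 V)) :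
    #(restrictedMonoColorings s x T) + #{c ∈ monoColorings x T | ∃ v, c v ∈ s v} =
      #(monoColorings x T) := by
  rw [restrictedMonoColorings, add_comm]
  simpa only [not_exists] using
    card_filter_add_card_filter_not (s := monoColorings x T) (fun c => ∃ v, c v ∈ s v)

lemma mul_card_filter_exists_mem_le {s : V → Finset ℕ} {k : ℕ} (hs : ∀ v, #(s v) ≤ k) (x : ℕ)
    {T : Finset (Sym2 V)} {e f : Sym2 V} (heT : e ∈ T) (hfT : f ∈ T) (hef : e ≠ f)
    (he : ¬e.IsDiag) (hf : ¬f.IsDiag) :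
    x * #{c ∈ monoColorings x T | ∃ v, c v ∈ s v} ≤
      Fintype.card V * (k * x ^ (Fintype.card V - 2)) := by
  set P : V → ℕ → Finset (V → ℕ) := fun v a =>
    {c ∈ Fintype.piFinset (fun _ => Icc 1 x) | (e.map c).IsDiag ∧ (f.map c).IsDiag ∧ c v = a}
  have hsub : {c ∈ monoColorings x T | ∃ v, c v ∈ s v} ⊆
      univ.biUnion fun v => (s v).biUnion (P v) := by
    intro c hc
    simp only [monoColorings, mem_filter] at hc
    obtain ⟨⟨hcx, hcT⟩, v, hv⟩ := hc
    simp only [mem_biUnion, mem_univ, true_and, P, mem_filter]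
    exact ⟨v, c v, hv, hcx, hcT e heT, hcT f hfT, rfl⟩
  calc x * #{c ∈ monoColorings x T | ∃ v, c v ∈ s v}
      ≤ x * #(univ.biUnion fun v => (s v).biUnion (P v)) := by gcongr
    _ ≤ #(univ : Finset V) * (k * x ^ (Fintype.card V - 2)) :=
        mul_card_biUnion_le _ _ fun v _ =>
          (mul_card_biUnion_le _ _ fun a _ => by
            simpa using card_mul_card_filter_isDiag_map_le (Icc 1 x) hef he hf v a).trans
          (by gcongr; exact hs v)
    _ = _ := by rw [card_univ]

lemma card_restrictedMonoColorings_empty {s : V → Finset ℕ} {k x : ℕ}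
    (hs : ∀ v, #(s v) = k ∧ s v ⊆ Icc 1 x) :
    #(restrictedMonoColorings s x ∅) = (x - k) ^ Fintype.card V := by
  simp [restrictedMonoColorings_eq_filter, card_Icc_one_sdiff_of_subset, hs]

lemma card_restrictedMonoColorings_singleton {s : V → Finset ℕ} {k x : ℕ}
    (hs : ∀ v, #(s v) = k ∧ s v ⊆ Icc 1 x) {u v : V} (huv : u ≠ v) :
    #(restrictedMonoColorings s x {s(u, v)}) =
      (x - #(s u ∪ s v)) * (x - k) ^ (Fintype.card V - 2) := by
  simp only [restrictedMonoColorings_eq_filter, mem_singleton, forall_eq, Sym2.map_mk,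
    Sym2.mk_isDiag_iff, Fintype.card_filter_piFinset_apply_eq_apply _ huv, ← sdiff_union_distrib,
    card_Icc_one_sdiff_of_subset (hs _).2, (hs _).1, prod_const,
    card_Icc_one_sdiff_of_subset (union_subset (hs u).2 (hs v).2)]
  rw [card_erase_of_mem (mem_erase.2 ⟨huv.symm, mem_univ v⟩), card_erase_of_mem (mem_univ u),
    card_univ, Nat.sub_sub]

lemma mul_abs_card_restrictedMonoColorings_sub_le {r s : V → Finset ℕ} {k x : ℕ}
    (hr : ∀ v, #(r v) = k ∧ r v ⊆ Icc 1 x) (hs : ∀ v, #(s v) = k ∧ s v ⊆ Icc 1 x)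
    {T : Finset (Sym2 V)} (hT : ∀ e ∈ T, ¬e.IsDiag) (hT1 : #T ≠ 1) :
    (x : ℤ) * |(#(restrictedMonoColorings r x T) : ℤ) - #(restrictedMonoColorings s x T)| ≤
      ((Fintype.card V * (k * x ^ (Fintype.card V - 2)) : ℕ) : ℤ) := by
  obtain rfl | hT2 : T = ∅ ∨ 1 < #T := by
    rcases T.eq_empty_or_nonempty with h | h
    · exact .inl h
    · exact .inr (by have := h.card_pos; omega)
  · simp only [card_restrictedMonoColorings_empty hr, card_restrictedMonoColorings_empty hs,
      sub_self, abs_zero, mul_zero]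
    positivity
  obtain ⟨e, he, f, hf, hef⟩ := one_lt_card.1 hT2
  have hr' := card_restrictedMonoColorings_add_card_filter_exists_mem r x T
  have hs' := card_restrictedMonoColorings_add_card_filter_exists_mem s x T
  have hbr := mul_card_filter_exists_mem_le (fun v => (hr v).1.le) x he hf hef (hT e he) (hT f hf)
  have hbs := mul_card_filter_exists_mem_le (fun v => (hs v).1.le) x he hf hef (hT e he) (hT f hf)
  have hdiff : (x : ℤ) * ((#(restrictedMonoColorings r x T) : ℤ) - #(restrictedMonoColorings s x T))
      = ((x * #{c ∈ monoColorings x T | ∃ v, c v ∈ s v} : ℕ) : ℤ) -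
        ((x * #{c ∈ monoColorings x T | ∃ v, c v ∈ r v} : ℕ) : ℤ) := by
    zify at hr' hs'
    push_cast
    linear_combination (x : ℤ) * hr' - x * hs'
  rw [← Nat.abs_cast x, ← abs_mul, hdiff]
  exact abs_sub_le_of_nonneg_of_le (by positivity) (by exact_mod_cast hbs) (by positivity)
    (by exact_mod_cast hbr)

lemma card_restrictedMonoColorings_const_sub {r : V → Finset ℕ} {k x : ℕ}
    (hr : ∀ v, #(r v) = k ∧ r v ⊆ Icc 1 x) (hk : k ≤ x) {u v : V} (huv : u ≠ v) :
    (#(restrictedMonoColorings (fun _ => Icc 1 k) x {s(u, v)}) : ℤ) -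
        #(restrictedMonoColorings r x {s(u, v)}) =
      ((k : ℤ) - #(r u ∩ r v)) * ((x - k : ℕ) : ℤ) ^ (Fintype.card V - 2) := by
  have hc : ∀ w : V, #((fun _ => Icc 1 k) w) = k ∧ (fun _ => Icc 1 k) w ⊆ Icc 1 x :=
    fun _ => ⟨by simp, Icc_subset_Icc_right hk⟩
  rw [card_restrictedMonoColorings_singleton hc huv, card_restrictedMonoColorings_singleton hr huv,
    union_self, Nat.cast_mul, Nat.cast_mul, Nat.cast_pow, ← sub_mul]
  have hunion := card_union_add_card_inter (r u) (r v)
  have hle : #(r u ∪ r v) ≤ x := by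
    simpa using card_le_card (union_subset (hr u).2 (hr v).2)
  rw [(hr u).1, (hr v).1] at hunion
  congr 1
  simp only [Nat.card_Icc, add_tsub_cancel_right]
  omega

lemma pow_le_sum_card_restrictedMonoColorings_const_sub (G : SimpleGraph V)
    [DecidableRel G.Adj] {r : V → Finset ℕ} {k x : ℕ} (hr : ∀ v, #(r v) = k ∧ r v ⊆ Icc 1 x)
    (hk : k ≤ x)
    (hne : ∑ e ∈ G.edgeFinset, Sym2.lift ⟨fun b c => #(r b ∩ r c),
      fun b c => by simp [Finset.inter_comm]⟩ e < k * #G.edgeFinset) :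
    ((x - k : ℕ) : ℤ) ^ (Fintype.card V - 2) ≤
      ∑ e ∈ G.edgeFinset, ((#(restrictedMonoColorings (fun _ => Icc 1 k) x {e}) : ℤ) -
        #(restrictedMonoColorings r x {e})) := by
  have hsum : ∑ e ∈ G.edgeFinset, ((#(restrictedMonoColorings (fun _ => Icc 1 k) x {e}) : ℤ) -
        #(restrictedMonoColorings r x {e})) =
      ((k * #G.edgeFinset : ℕ) - (∑ e ∈ G.edgeFinset, Sym2.lift ⟨fun b c => #(r b ∩ r c),
          fun b c => by simp [Finset.inter_comm]⟩ e : ℕ) : ℤ) *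
        ((x - k : ℕ) : ℤ) ^ (Fintype.card V - 2) := by
    rw [Nat.cast_sum, mul_comm k, Nat.cast_mul, ← nsmul_eq_mul, ← sum_const, ← sum_sub_distrib,
      sum_mul]
    refine sum_congr rfl fun e he => ?_
    induction e using Sym2.ind with | _ u v =>
    rw [card_restrictedMonoColorings_const_sub hr hk (G.ne_of_adj (G.mem_edgeFinset.1 he)),
      Sym2.lift_mk]
  rw [hsum]
  exact le_mul_of_one_le_left (by positivity) (by omega)

lemma abs_mul_sum_powerset_filter_card_ne_one_le (G : SimpleGraph V) [DecidableRel G.Adj]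
    {r s : V → Finset ℕ} {k x : ℕ} (hr : ∀ v, #(r v) = k ∧ r v ⊆ Icc 1 x)
    (hs : ∀ v, #(s v) = k ∧ s v ⊆ Icc 1 x) :
    |(x : ℤ) * ∑ T ∈ G.edgeFinset.powerset with #T ≠ 1, (-1 : ℤ) ^ #T *
        ((#(restrictedMonoColorings r x T) : ℤ) - #(restrictedMonoColorings s x T))| ≤
      (2 ^ #G.edgeFinset * (Fintype.card V * k) * x ^ (Fintype.card V - 2) : ℕ) := by
  set F := {T ∈ G.edgeFinset.powerset | #T ≠ 1}
  have hF : #F ≤ 2 ^ #G.edgeFinset := (card_filter_le _ _).trans (card_powerset _).le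
  rw [abs_mul, Nat.abs_cast]
  calc (x : ℤ) * |∑ T ∈ F, (-1 : ℤ) ^ #T *
        ((#(restrictedMonoColorings r x T) : ℤ) - #(restrictedMonoColorings s x T))|
      ≤ ∑ T ∈ F, (x : ℤ) *
        |(#(restrictedMonoColorings r x T) : ℤ) - #(restrictedMonoColorings s x T)| := by
        rw [← mul_sum]
        gcongr
        refine (abs_sum_le_sum_abs _ _).trans_eq (sum_congr rfl fun T _ => ?_)
        simp
    _ ≤ ∑ _T ∈ F, ((Fintype.card V * (k * x ^ (Fintype.card V - 2)) : ℕ) : ℤ) := by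
        refine sum_le_sum fun T hT => ?_
        obtain ⟨hTG, hT1⟩ := mem_filter.1 hT
        exact mul_abs_card_restrictedMonoColorings_sub_le hr hs
          (fun e he => G.not_isDiag_of_mem_edgeSet (G.mem_edgeFinset.1 (mem_powerset.1 hTG he)))
          hT1
    _ ≤ _ := by
        rw [sum_const, nsmul_eq_mul]
        push_cast
        have : (#F : ℤ) ≤ 2 ^ #G.edgeFinset := by exact_mod_cast hF
        nlinarith [show (0 : ℤ) ≤ Fintype.card V * (k * x ^ (Fintype.card V - 2)) by positivity]

end Colorings

section Count

variable {V : Type} [Fintype V] [DecidableEq V]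

lemma rcount_eq_sum_powerset (G : SimpleGraph V) [DecidableRel G.Adj] (s : V → Finset ℕ)
    (x : ℕ) :
    (rcount G s x : ℤ) =
      ∑ T ∈ G.edgeFinset.powerset, (-1 : ℤ) ^ #T * #(restrictedMonoColorings s x T) := by
  have hfilter : ∀ T, restrictedMonoColorings s x T =
      {c ∈ restrictedMonoColorings s x ∅ | ∀ e ∈ T, (e.map c).IsDiag} := by
    intro T
    ext c
    simp only [restrictedMonoColorings, monoColorings, mem_filter]
    grind
  convert card_filter_forall_not_eq_sum_powerset (restrictedMonoColorings s x ∅) G.edgeFinset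
    (fun e c => (e.map c).IsDiag) using 1
  · unfold rcount
    congr 2
    ext c
    simp [restrictedMonoColorings, monoColorings, SimpleGraph.mem_edgeFinset, Sym2.forall]
    grind
  · exact sum_congr rfl fun T _ => by rw [hfilter T]; congr!

lemma rcount_sub_rcount_eq (G : SimpleGraph V) [DecidableRel G.Adj] (r s : V → Finset ℕ)
    (x : ℕ) :
    (rcount G r x - rcount G s x : ℤ) =
      ∑ e ∈ G.edgeFinset,
        ((#(restrictedMonoColorings s x {e}) : ℤ) - #(restrictedMonoColorings r x {e})) +
      ∑ T ∈ G.edgeFinset.powerset with #T ≠ 1, (-1 : ℤ) ^ #T *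
        ((#(restrictedMonoColorings r x T) : ℤ) - #(restrictedMonoColorings s x T)) := by
  rw [rcount_eq_sum_powerset, rcount_eq_sum_powerset, ← sum_sub_distrib,
    ← sum_filter_add_sum_filter_not _ (fun T => #T = 1), ← powersetCard_eq_filter,
    powersetCard_one, sum_map]
  congr 1
  · refine sum_congr rfl fun e _ => ?_
    simp only [Function.Embedding.coeFn_mk, card_singleton]
    ring
  · exact sum_congr rfl fun T _ => by ring

end Count

theorem stmt7 {V : Type} [Fintype V] (G : SimpleGraph V) [DecidableRel G.Adj]
    (k : ℕ) (r : V → Finset ℕ)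
    (hr : ∀ v : V, (r v).card = k ∧ r v ⊆ Finset.Icc 1 (k * Fintype.card V))
    (hne : (∑ e ∈ G.edgeFinset,
        Sym2.lift ⟨fun b c => ((r b) ∩ (r c)).card,
          fun b c => by simp [Finset.inter_comm]⟩ e) < k * G.edgeFinset.card) :
    ∃ N : ℕ, ∀ x ≥ N, rcount G (fun _ => Finset.Icc 1 k) x < rcount G r x := by
  classical
  set n := Fintype.card V
  set m := #G.edgeFinset
  refine ⟨k * n + 2 * k + 2 ^ (n - 2) * (2 ^ m * (n * k)) + 1, fun x hx => ?_⟩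
  have hrx : ∀ v, #(r v) = k ∧ r v ⊆ Icc 1 x :=
    fun v => ⟨(hr v).1, (hr v).2.trans (Icc_subset_Icc_right (by omega))⟩
  have hcx : ∀ v : V, #((fun _ => Icc 1 k) v) = k ∧ (fun _ => Icc 1 k) v ⊆ Icc 1 x :=
    fun _ => ⟨by simp, Icc_subset_Icc_right (by omega)⟩
  have hedges := pow_le_sum_card_restrictedMonoColorings_const_sub G hrx (by omega) hne
  have hrest := (abs_le.1 (abs_mul_sum_powerset_filter_card_ne_one_le G hrx hcx)).1
  have hgap : ((2 ^ m * (n * k) * x ^ (n - 2) : ℕ) : ℤ) < x * ((x - k : ℕ) : ℤ) ^ (n - 2) := by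
    exact_mod_cast Nat.mul_pow_lt_mul_sub_pow (by omega) (by omega)
  have hx0 : (0 : ℤ) < x := by exact_mod_cast (show 0 < x by omega)
  suffices h : (0 : ℤ) < x * ((rcount G r x : ℤ) - rcount G (fun _ => Icc 1 k) x) by
    have := pos_of_mul_pos_right h hx0.le
    omega
  rw [rcount_sub_rcount_eq, mul_add]
  linarith [mul_le_mul_of_nonneg_left hedges hx0.le]
end

section
/- Let G be a connected graph and let r, r' be k-restraints on G with Σ_{uv∈E(G)} |r(u)∩r(v)| > Σ_{uv∈E(G)} |r'(u)∩r'(v)|. Then for all sufficiently large x, π_r(G,x) < π_{r'}(G,x). -/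
open Finset Fintype
set_option linter.unusedSectionVars false
set_option maxHeartbeats 1000000

namespace RestraintAux

variable {V : Type} [Fintype V] [DecidableEq V]

/-- `c` is constant on the pair `e`. -/
def ceq (c : V → ℕ) (e : Sym2 V) : Prop := ∀ a ∈ e, ∀ b ∈ e, c a = c b

lemma ceq_mk {c : V → ℕ} {v w : V} : ceq c s(v, w) ↔ c v = c w := by
  constructor
  · intro h; exact h v (by simp) w (by simp)
  · intro h a ha b hb
    rw [Sym2.mem_iff] at ha hb
    rcases ha with rfl | rfl <;> rcases hb with rfl | rfl <;>
      first | rfl | exact h | exact h.symm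

instance (c : V → ℕ) (e : Sym2 V) : Decidable (ceq c e) :=
  inferInstanceAs (Decidable (∀ a ∈ e, ∀ b ∈ e, c a = c b))

/-- Number of colourings in `piFinset T` constant on every pair of `A`. -/
def M (T : V → Finset ℕ) (A : Finset (Sym2 V)) : ℕ :=
  ((piFinset T).filter (fun c => ∀ e ∈ A, ceq c e)).card

lemma M_eq_sum (T : V → Finset ℕ) (A : Finset (Sym2 V)) :
    (M T A : ℤ) = ∑ c ∈ piFinset T, if (∀ e ∈ A, ceq c e) then (1 : ℤ) else 0 := by
  unfold M
  rw [Finset.card_filter]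
  push_cast
  rfl


lemma proper_iff (G : SimpleGraph V) [DecidableRel G.Adj] (c : V → ℕ) :
    (∀ v w, G.Adj v w → c v ≠ c w) ↔ ∀ e ∈ G.edgeFinset, ¬ ceq c e := by
  constructor
  · intro h e he
    induction e using Sym2.ind with
    | _ v w =>
      rw [SimpleGraph.mem_edgeFinset, SimpleGraph.mem_edgeSet] at he
      rw [ceq_mk]
      exact h v w he
  · intro h v w hvw
    have := h s(v, w) (by rw [SimpleGraph.mem_edgeFinset, SimpleGraph.mem_edgeSet]; exact hvw)
    rw [ceq_mk] at this
    exact this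

lemma rcount_expand (G : SimpleGraph V) [DecidableRel G.Adj] (r : V → Finset ℕ) (x : ℕ)
    (hrx : ∀ v, r v ⊆ Finset.Icc 1 x) :
    (rcount G r x : ℤ) = ∑ A ∈ G.edgeFinset.powerset,
      (-1) ^ A.card * (M (fun v => Finset.Icc 1 x \ r v) A : ℤ) := by
  classical
  set T : V → Finset ℕ := fun v => Finset.Icc 1 x \ r v with hT
  have hstep1 : rcount G r x =
      ((piFinset T).filter (fun c => ∀ e ∈ G.edgeFinset, ¬ ceq c e)).card := by
    unfold rcount
    congr 1
    ext c
    simp only [Finset.mem_filter, Fintype.mem_piFinset, hT, Finset.mem_sdiff]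
    constructor
    · rintro ⟨h1, h2, h3⟩
      exact ⟨fun a => ⟨h1 a, h3 a⟩, (proper_iff G c).mp h2⟩
    · rintro ⟨h1, h2⟩
      exact ⟨fun a => (h1 a).1, (proper_iff G c).mpr h2, fun a => (h1 a).2⟩
  have hstep2 : (rcount G r x : ℤ) =
      ∑ c ∈ piFinset T, if (∀ e ∈ G.edgeFinset, ¬ ceq c e) then (1 : ℤ) else 0 := by
    rw [hstep1, Finset.card_filter]
    push_cast
    rfl
  have hstep3 : ∀ c : V → ℕ,
      (if (∀ e ∈ G.edgeFinset, ¬ ceq c e) then (1 : ℤ) else 0) =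
      ∏ e ∈ G.edgeFinset, ((if ceq c e then (-1 : ℤ) else 0) + 1) := by
    intro c
    by_cases hall : ∀ e ∈ G.edgeFinset, ¬ ceq c e
    · rw [if_pos hall]
      rw [Finset.prod_congr rfl (fun e he => by rw [if_neg (hall e he)])]
      simp
    · rw [if_neg hall]
      push_neg at hall
      obtain ⟨e, he, hce⟩ := hall
      refine (Finset.prod_eq_zero he ?_).symm
      rw [if_pos hce]
      ring
  have hstep4 : ∀ c : V → ℕ, ∀ A : Finset (Sym2 V),
      (∏ e ∈ A, (if ceq c e then (-1 : ℤ) else 0)) =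
      (-1) ^ A.card * (if (∀ e ∈ A, ceq c e) then (1 : ℤ) else 0) := by
    intro c A
    by_cases hall : ∀ e ∈ A, ceq c e
    · rw [if_pos hall, Finset.prod_congr rfl (fun e he => by rw [if_pos (hall e he)])]
      simp
    · rw [if_neg hall]
      push_neg at hall
      obtain ⟨e, he, hce⟩ := hall
      rw [Finset.prod_eq_zero he (by rw [if_neg hce])]
      ring
  calc (rcount G r x : ℤ)
      = ∑ c ∈ piFinset T, ∏ e ∈ G.edgeFinset, ((if ceq c e then (-1 : ℤ) else 0) + 1) := by
        rw [hstep2]; exact Finset.sum_congr rfl fun c _ => hstep3 c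
    _ = ∑ c ∈ piFinset T, ∑ A ∈ G.edgeFinset.powerset,
          (∏ e ∈ A, (if ceq c e then (-1 : ℤ) else 0)) * ∏ e ∈ G.edgeFinset \ A, 1 :=
        Finset.sum_congr rfl fun c _ => Finset.prod_add _ _ _
    _ = ∑ A ∈ G.edgeFinset.powerset, ∑ c ∈ piFinset T,
          (-1) ^ A.card * (if (∀ e ∈ A, ceq c e) then (1 : ℤ) else 0) := by
        rw [Finset.sum_comm]
        exact Finset.sum_congr rfl fun A _ => Finset.sum_congr rfl fun c _ => by
          rw [Finset.prod_const_one, mul_one, hstep4]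
    _ = ∑ A ∈ G.edgeFinset.powerset, (-1) ^ A.card * (M T A : ℤ) := by
        refine Finset.sum_congr rfl fun A _ => ?_
        rw [← Finset.mul_sum, M_eq_sum]


section Rep

variable (A : Finset (Sym2 V))

/-- representative of the connected component of `v` in the graph with edge set `A`. -/
noncomputable def rep (v : V) : V :=
  (Quotient.mk (Relation.EqvGen.setoid (fun a b => s(a, b) ∈ A)) v).out

lemma rep_eqvGen (v : V) : Relation.EqvGen (fun a b => s(a, b) ∈ A) (rep A v) v := by
  have h : (Quotient.mk (Relation.EqvGen.setoid (fun a b => s(a, b) ∈ A)) (rep A v)) =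
      Quotient.mk (Relation.EqvGen.setoid (fun a b => s(a, b) ∈ A)) v :=
    Quotient.out_eq _
  exact Quotient.exact h

lemma rep_eq_of_eqvGen {a b : V} (h : Relation.EqvGen (fun a b => s(a, b) ∈ A) a b) :
    rep A a = rep A b :=
  congrArg Quotient.out (Quotient.sound h)

lemma rep_eq_of_mem {a b : V} (h : s(a, b) ∈ A) : rep A a = rep A b :=
  rep_eq_of_eqvGen A (Relation.EqvGen.rel _ _ h)

lemma rep_idem (v : V) : rep A (rep A v) = rep A v :=
  rep_eq_of_eqvGen A (rep_eqvGen A v)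

lemma ceq_const {c : V → ℕ} (hc : ∀ e ∈ A, ceq c e) {a b : V}
    (h : Relation.EqvGen (fun a b => s(a, b) ∈ A) a b) : c a = c b := by
  induction h with
  | rel a b h => exact (ceq_mk.mp (hc _ h))
  | refl => rfl
  | symm a b _ ih => exact ih.symm
  | trans a b c _ _ ih1 ih2 => exact ih1.trans ih2

/-- the set of component representatives -/
noncomputable def repSet : Finset V := Finset.image (rep A) Finset.univ

lemma rep_mem_repSet (v : V) : rep A v ∈ repSet A :=
  Finset.mem_image_of_mem _ (Finset.mem_univ v)

lemma M_le_pow (T : V → Finset ℕ) (x : ℕ) (hT : ∀ v, T v ⊆ Finset.Icc 1 x) :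
    M T A ≤ x ^ (repSet A).card := by
  classical
  have hcard : (piFinset (fun v => if v ∈ repSet A then Finset.Icc 1 x else {0})).card
      = x ^ (repSet A).card := by
    rw [Fintype.card_piFinset]
    calc ∏ v : V, (if v ∈ repSet A then Finset.Icc 1 x else {0}).card
        = ∏ v : V, (if v ∈ repSet A then x else 1) := by
          refine Finset.prod_congr rfl fun v _ => ?_
          split <;> simp [Nat.card_Icc]
      _ = ∏ v ∈ Finset.univ ∩ repSet A, x := by rw [Finset.prod_ite_mem]
      _ = x ^ (repSet A).card := by rw [Finset.univ_inter, Finset.prod_const]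
  rw [← hcard]
  refine Finset.card_le_card_of_injOn
    (fun c v => if v ∈ repSet A then c v else 0) (fun c hc => ?_) ?_
  · rw [Finset.mem_coe, Finset.mem_filter] at hc
    rw [Finset.mem_coe, Fintype.mem_piFinset]
    intro v
    by_cases hv : v ∈ repSet A
    · simp only [if_pos hv]
      exact hT v (Fintype.mem_piFinset.mp hc.1 v)
    · simp [hv]
  · intro c1 h1 c2 h2 heq
    simp only [Finset.coe_filter, Set.mem_setOf_eq] at h1 h2
    funext v
    have e1 : c1 v = c1 (rep A v) := (ceq_const A h1.2 (rep_eqvGen A v)).symm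
    have e2 : c2 v = c2 (rep A v) := (ceq_const A h2.2 (rep_eqvGen A v)).symm
    have := congrFun heq (rep A v)
    simp only [if_pos (rep_mem_repSet A v)] at this
    rw [e1, e2, this]

lemma pow_le_M (T : V → Finset ℕ) (K x : ℕ) (hT : ∀ v, Finset.Icc (K + 1) x ⊆ T v) :
    (x - K) ^ (repSet A).card ≤ M T A := by
  classical
  have hcard : (piFinset (fun v => if v ∈ repSet A then Finset.Icc (K + 1) x else {0})).card
      = (x - K) ^ (repSet A).card := by
    rw [Fintype.card_piFinset]
    calc ∏ v : V, (if v ∈ repSet A then Finset.Icc (K + 1) x else {0}).card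
        = ∏ v : V, (if v ∈ repSet A then x - K else 1) := by
          refine Finset.prod_congr rfl fun v _ => ?_
          split <;> simp [Nat.card_Icc]
      _ = ∏ v ∈ Finset.univ ∩ repSet A, (x - K) := by rw [Finset.prod_ite_mem]
      _ = (x - K) ^ (repSet A).card := by rw [Finset.univ_inter, Finset.prod_const]
  rw [← hcard]
  refine Finset.card_le_card_of_injOn (fun d v => d (rep A v)) (fun d hd => ?_) ?_
  · rw [Finset.mem_coe, Fintype.mem_piFinset] at hd
    rw [Finset.mem_coe, Finset.mem_filter, Fintype.mem_piFinset]
    constructor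
    · intro v
      have := hd (rep A v)
      rw [if_pos (rep_mem_repSet A v)] at this
      exact hT v this
    · intro e he
      induction e using Sym2.ind with
      | _ p q =>
        rw [ceq_mk]
        simp only
        rw [rep_eq_of_mem A he]
  · intro d1 h1 d2 h2 heq
    simp only [Finset.mem_coe, Fintype.mem_piFinset] at h1 h2
    funext v
    by_cases hv : v ∈ repSet A
    · obtain ⟨w, _, rfl⟩ := Finset.mem_image.mp hv
      have := congrFun heq w
      simpa only [rep_idem] using this
    · have e1 := h1 v; have e2 := h2 v
      rw [if_neg hv] at e1 e2
      simp only [Finset.mem_singleton] at e1 e2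
      rw [e1, e2]

lemma repSet_card_le (E : Finset (Sym2 V)) (hE : ∀ e ∈ E, ¬ e.IsDiag) (hAE : A ⊆ E)
    (hA : 2 ≤ A.card) : (repSet A).card ≤ Fintype.card V - 2 := by
  classical
  obtain ⟨e1, he1, e2, he2, hne⟩ := Finset.one_lt_card.mp hA
  -- destructure the two edges
  induction e1 using Sym2.ind with
  | _ a b =>
  induction e2 using Sym2.ind with
  | _ c d =>
  have hab : a ≠ b := by
    intro h; exact hE _ (hAE he1) (by simp [h])
  have hcd : c ≠ d := by
    intro h; exact hE _ (hAE he2) (by simp [h])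
  -- WLOG b ∉ {c, d}
  have key : ∀ a b : V, a ≠ b → s(a, b) ∈ A → ¬ (b = c ∨ b = d) →
      (repSet A).card ≤ Fintype.card V - 2 := by
    intro a b hab habA hb
    push_neg at hb
    have hbd : b ≠ d := hb.2
    have hbc : b ≠ c := hb.1
    have hsub : repSet A ⊆ Finset.image (rep A) (Finset.univ \ {b, d}) := by
      intro y hy
      obtain ⟨v, _, rfl⟩ := Finset.mem_image.mp hy
      have huse : ∀ w : V, w ∉ ({b, d} : Finset V) → rep A w = rep A v →
          rep A v ∈ Finset.image (rep A) (Finset.univ \ {b, d}) := by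
        intro w hw hrw
        exact Finset.mem_image.mpr ⟨w, Finset.mem_sdiff.mpr ⟨Finset.mem_univ _, hw⟩, hrw⟩
      have hcmem : c ∉ ({b, d} : Finset V) := by
        simp only [Finset.mem_insert, Finset.mem_singleton]
        push_neg
        exact ⟨fun h => hbc h.symm, hcd⟩
      by_cases hvb : v = b
      · subst hvb
        by_cases had : a = d
        · -- rep v = rep b = rep a = rep d = rep c
          refine huse c hcmem ?_
          rw [rep_eq_of_mem A he2, ← had, rep_eq_of_mem A habA]
        · refine huse a ?_ (rep_eq_of_mem A habA)
          simp only [Finset.mem_insert, Finset.mem_singleton]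
          push_neg
          exact ⟨hab, had⟩
      · by_cases hvd : v = d
        · subst hvd
          exact huse c hcmem (rep_eq_of_mem A he2)
        · refine huse v ?_ rfl
          simp only [Finset.mem_insert, Finset.mem_singleton]
          push_neg
          exact ⟨hvb, hvd⟩
    calc (repSet A).card ≤ (Finset.image (rep A) (Finset.univ \ {b, d})).card :=
          Finset.card_le_card hsub
      _ ≤ (Finset.univ \ ({b, d} : Finset V)).card := Finset.card_image_le
      _ = Fintype.card V - 2 := by
          rw [Finset.card_sdiff_of_subset (Finset.subset_univ _), Finset.card_univ]
          congr 1
          rw [Finset.card_insert_of_notMem (by simp [hbd]), Finset.card_singleton]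
  by_cases hb : b = c ∨ b = d
  · -- then a ∉ {c, d}, use the swapped edge s(b, a)
    have ha : ¬ (a = c ∨ a = d) := by
      rintro (h | h) <;> rcases hb with h2 | h2
      · exact hab (h.trans h2.symm)
      · exact hne (Sym2.eq_iff.mpr (Or.inl ⟨h, h2⟩))
      · exact hne (Sym2.eq_iff.mpr (Or.inr ⟨h, h2⟩))
      · exact hab (h.trans h2.symm)
    exact key b a hab.symm (by rwa [Sym2.eq_swap]) ha
  · exact key a b hab he1 hb

end Rep

lemma M_empty (T : V → Finset ℕ) : M T (∅ : Finset (Sym2 V)) = ∏ v : V, (T v).card := by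
  unfold M
  rw [Finset.filter_true_of_mem (by intro c _; intro e he; exact absurd he (Finset.notMem_empty e)),
    Fintype.card_piFinset]

lemma M_single (T : V → Finset ℕ) {u w : V} (huw : u ≠ w) :
    M T ({s(u, w)} : Finset (Sym2 V)) =
      (T u ∩ T w).card * ∏ v ∈ (Finset.univ.erase w).erase u, (T v).card := by
  classical
  set T2 : V → Finset ℕ := fun v => if v = w then {0} else if v = u then T u ∩ T w else T v
    with hT2
  have hcard : (piFinset T2).card =
      (T u ∩ T w).card * ∏ v ∈ (Finset.univ.erase w).erase u, (T v).card := by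
    rw [Fintype.card_piFinset]
    have hw : w ∈ (Finset.univ : Finset V) := Finset.mem_univ w
    have hu : u ∈ Finset.univ.erase w := Finset.mem_erase.mpr ⟨huw, Finset.mem_univ u⟩
    rw [← Finset.mul_prod_erase Finset.univ _ hw, ← Finset.mul_prod_erase _ _ hu]
    have e1 : (T2 w).card = 1 := by simp [hT2]
    have e2 : (T2 u).card = (T u ∩ T w).card := by simp [hT2, huw]
    rw [e1, e2, one_mul]
    congr 1
    refine Finset.prod_congr rfl fun v hv => ?_
    rw [Finset.mem_erase, Finset.mem_erase] at hv
    simp [hT2, hv.1, hv.2.1]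
  rw [← hcard]
  unfold M
  refine Finset.card_bij' (fun c _ => Function.update c w 0)
    (fun d _ => Function.update d w (d u)) ?_ ?_ ?_ ?_
  · intro c hc
    rw [Finset.mem_filter, Fintype.mem_piFinset] at hc
    obtain ⟨h1, h2⟩ := hc
    have hcuw : c u = c w := ceq_mk.mp (h2 _ (Finset.mem_singleton_self _))
    rw [Fintype.mem_piFinset]
    intro z
    show Function.update c w 0 z ∈ T2 z
    by_cases hzw : z = w
    · subst hzw; simp [hT2, Function.update_self]
    · rw [Function.update_of_ne hzw]
      by_cases hzu : z = u
      · rw [hT2]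
        simp only [if_neg hzw, if_pos hzu, Finset.mem_inter]
        rw [hzu]
        exact ⟨h1 u, by rw [hcuw]; exact h1 w⟩
      · simp only [hT2, if_neg hzw, if_neg hzu]
        exact h1 z
  · intro d hd
    rw [Fintype.mem_piFinset] at hd
    have hdu : d u ∈ T u ∩ T w := by
      have := hd u
      simpa [hT2, huw] using this
    rw [Finset.mem_filter, Fintype.mem_piFinset]
    constructor
    · intro z
      show Function.update d w (d u) z ∈ T z
      by_cases hzw : z = w
      · subst hzw
        rw [Function.update_self]
        exact (Finset.mem_inter.mp hdu).2
      · rw [Function.update_of_ne hzw]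
        by_cases hzu : z = u
        · subst hzu
          exact (Finset.mem_inter.mp hdu).1
        · have := hd z
          simpa [hT2, hzw, hzu] using this
    · intro e he
      rw [Finset.mem_singleton] at he
      subst he
      rw [ceq_mk]
      show Function.update d w (d u) u = Function.update d w (d u) w
      rw [Function.update_of_ne huw, Function.update_self]
  · intro c hc
    rw [Finset.mem_filter, Fintype.mem_piFinset] at hc
    have hcuw : c u = c w := ceq_mk.mp (hc.2 _ (Finset.mem_singleton_self _))
    funext z
    show Function.update (Function.update c w 0) w (Function.update c w 0 u) z = c z
    by_cases hzw : z = w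
    · subst hzw
      rw [Function.update_self, Function.update_of_ne huw, ← hcuw]
    · rw [Function.update_of_ne hzw, Function.update_of_ne hzw]
  · intro d hd
    rw [Fintype.mem_piFinset] at hd
    have hdw : d w = 0 := by
      have := hd w
      simpa [hT2] using this
    funext z
    show Function.update (Function.update d w (d u)) w 0 z = d z
    by_cases hzw : z = w
    · subst hzw
      rw [Function.update_self, hdw]
    · rw [Function.update_of_ne hzw, Function.update_of_ne hzw]

/-- arithmetic: `a^c - b^c` is monotone in the exponent. -/
lemma pow_sub_pow_mono {a b : ℤ} (hb : 0 ≤ b) (hba : b ≤ a) (ha : 1 ≤ a) :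
    ∀ {c c' : ℕ}, c ≤ c' → a ^ c - b ^ c ≤ a ^ c' - b ^ c' := by
  intro c c' h
  induction c' , h using Nat.le_induction with
  | base => exact le_refl _
  | succ s hs ih =>
    have hbs : b ^ s ≤ a ^ s := pow_le_pow_left₀ hb hba s
    have h1 : a ^ s - b ^ s ≤ a * a ^ s - a * b ^ s := by nlinarith
    have h2 : a * b ^ s ≥ b * b ^ s := by nlinarith [pow_nonneg hb s]
    calc a ^ c - b ^ c ≤ a ^ s - b ^ s := ih
      _ ≤ a * a ^ s - a * b ^ s := h1
      _ ≤ a * a ^ s - b * b ^ s := by linarith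
      _ = a ^ (s + 1) - b ^ (s + 1) := by ring

/-- arithmetic: difference of powers bound. -/
lemma pow_sub_pow_le {a b : ℤ} (hb : 0 ≤ b) (hba : b ≤ a) :
    ∀ s : ℕ, a ^ (s + 1) - b ^ (s + 1) ≤ (s + 1) * (a - b) * a ^ s := by
  intro s
  induction s with
  | zero => simp
  | succ s ih =>
    have hbs : b ^ (s + 1) ≤ a ^ (s + 1) := pow_le_pow_left₀ hb hba (s + 1)
    have ha : 0 ≤ a := hb.trans hba
    have has : 0 ≤ a ^ s := pow_nonneg ha s
    have has1 : 0 ≤ a ^ (s + 1) := pow_nonneg ha (s + 1)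
    have key : a ^ (s + 2) - b ^ (s + 2) =
        a * (a ^ (s + 1) - b ^ (s + 1)) + b ^ (s + 1) * (a - b) := by ring
    have h2 : a * (a ^ (s + 1) - b ^ (s + 1)) ≤ a * ((s + 1) * (a - b) * a ^ s) := by
      apply mul_le_mul_of_nonneg_left ih ha
    have h3 : b ^ (s + 1) * (a - b) ≤ a ^ (s + 1) * (a - b) :=
      mul_le_mul_of_nonneg_right hbs (by linarith)
    calc a ^ (s + 2) - b ^ (s + 2)
        ≤ a * ((s + 1) * (a - b) * a ^ s) + a ^ (s + 1) * (a - b) := by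
          rw [key]; exact add_le_add h2 h3
      _ = ((s : ℤ) + 2) * (a - b) * a ^ (s + 1) := by ring
      _ = ((s + 1 : ℕ) + 1) * (a - b) * a ^ (s + 1) := by push_cast; ring

lemma M_single_int (r : V → Finset ℕ) (x k : ℕ) (hx : ∀ v, r v ⊆ Finset.Icc 1 x)
    (hk : ∀ v, (r v).card = k) (hkx : k ≤ x) {u w : V} (huw : u ≠ w) :
    (M (fun v => Finset.Icc 1 x \ r v) ({s(u, w)} : Finset (Sym2 V)) : ℤ) =
      ((x : ℤ) - 2 * k + ((r u ∩ r w).card : ℤ)) *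
        ((x : ℤ) - k) ^ (Fintype.card V - 2) := by
  classical
  rw [M_single _ huw]
  have hIcc : (Finset.Icc 1 x).card = x := by rw [Nat.card_Icc]; omega
  have hTcard : ∀ v : V, (Finset.Icc 1 x \ r v).card = x - k := by
    intro v
    rw [Finset.card_sdiff_of_subset (hx v), hIcc, hk]
  have huniv : u ∈ Finset.univ.erase w := Finset.mem_erase.mpr ⟨huw, Finset.mem_univ u⟩
  have hcard2 : ((Finset.univ.erase w).erase u).card = Fintype.card V - 2 := by
    rw [Finset.card_erase_of_mem huniv, Finset.card_erase_of_mem (Finset.mem_univ w),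
      Finset.card_univ, Nat.sub_sub]
  have hprod : ∏ v ∈ (Finset.univ.erase w).erase u, (Finset.Icc 1 x \ r v).card
      = (x - k) ^ (Fintype.card V - 2) := by
    rw [Finset.prod_congr rfl (fun v _ => hTcard v), Finset.prod_const, hcard2]
  have hinter : (Finset.Icc 1 x \ r u) ∩ (Finset.Icc 1 x \ r w)
      = Finset.Icc 1 x \ (r u ∪ r w) := by
    ext y
    simp only [Finset.mem_inter, Finset.mem_sdiff, Finset.mem_union]
    tauto
  have hunion_sub : r u ∪ r w ⊆ Finset.Icc 1 x := Finset.union_subset (hx u) (hx w)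
  have hunion_le : (r u ∪ r w).card ≤ x := hIcc ▸ Finset.card_le_card hunion_sub
  have hcap : (r u ∪ r w).card + (r u ∩ r w).card = k + k := by
    rw [Finset.card_union_add_card_inter, hk, hk]
  have hfirst : ((Finset.Icc 1 x \ r u) ∩ (Finset.Icc 1 x \ r w)).card
      = x - (r u ∪ r w).card := by
    rw [hinter, Finset.card_sdiff_of_subset hunion_sub, hIcc]
  rw [hprod, hfirst]
  push_cast [Nat.cast_sub hunion_le, Nat.cast_sub hkx]
  have : ((r u ∪ r w).card : ℤ) = 2 * k - ((r u ∩ r w).card : ℤ) := by omega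
  rw [this]
  ring

end RestraintAux

open RestraintAux in
theorem stmt8 {V : Type} [Fintype V] [DecidableEq V] (G : SimpleGraph V) [DecidableRel G.Adj]
    (hconn : G.Connected) (k : ℕ) (r r' : V → Finset ℕ)
    (hr : ∀ v : V, (r v).card = k ∧ r v ⊆ Finset.Icc 1 (k * Fintype.card V))
    (hr' : ∀ v : V, (r' v).card = k ∧ r' v ⊆ Finset.Icc 1 (k * Fintype.card V))
    (hlt : (∑ e ∈ G.edgeFinset,
        Sym2.lift ⟨fun b c => ((r' b) ∩ (r' c)).card,
          fun b c => by simp [Finset.inter_comm]⟩ e) <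
      ∑ e ∈ G.edgeFinset,
        Sym2.lift ⟨fun b c => ((r b) ∩ (r c)).card,
          fun b c => by simp [Finset.inter_comm]⟩ e) :
    ∃ N : ℕ, ∀ x ≥ N, rcount G r x < rcount G r' x := by
  classical
  set n := Fintype.card V with hn
  set m := G.edgeFinset.card with hm
  set K := k * n with hK
  set L : (V → Finset ℕ) → Sym2 V → ℕ := fun ρ => Sym2.lift ⟨fun b c => ((ρ b) ∩ (ρ c)).card,
    fun b c => by simp [Finset.inter_comm]⟩ with hL
  have hlt' : (∑ e ∈ G.edgeFinset, L r' e) < ∑ e ∈ G.edgeFinset, L r e := hlt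
  have hEne : G.edgeFinset.Nonempty := by
    rcases Finset.eq_empty_or_nonempty G.edgeFinset with h | h
    · rw [h] at hlt'; simp at hlt'
    · exact h
  have hn2 : 2 ≤ n := by
    obtain ⟨e0, he0⟩ := hEne
    induction e0 using Sym2.ind with
    | _ u w =>
      have huw : u ≠ w := by
        intro h
        exact (SimpleGraph.not_isDiag_of_mem_edgeSet G
          (SimpleGraph.mem_edgeFinset.mp he0)) (by simp [h])
      exact Fintype.one_lt_card_iff.mpr ⟨u, w, huw⟩
  set C : ℕ := 2 ^ n * 2 ^ m * n * K with hC
  refine ⟨C + K + 2 * k + 2, fun x hx => ?_⟩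
  have hKx : K + 1 ≤ x := by omega
  have h2kx : 2 * k ≤ x := by omega
  have hkx : k ≤ x := by omega
  have h1x : 1 ≤ x := by omega
  have hklt : k < x := by omega
  have hCx : C < x := by omega
  have hrx : ∀ v, r v ⊆ Finset.Icc 1 x := fun v =>
    (hr v).2.trans (Finset.Icc_subset_Icc_right (by omega))
  have hr'x : ∀ v, r' v ⊆ Finset.Icc 1 x := fun v =>
    (hr' v).2.trans (Finset.Icc_subset_Icc_right (by omega))
  rw [← Nat.cast_lt (α := ℤ), rcount_expand G r x hrx, rcount_expand G r' x hr'x]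
  set P := G.edgeFinset.powerset with hP
  set g : Finset (Sym2 V) → ℤ := fun A =>
    (-1) ^ A.card * ((M (fun v => Finset.Icc 1 x \ r' v) A : ℤ) -
      (M (fun v => Finset.Icc 1 x \ r v) A : ℤ)) with hg
  have hsum : ∑ A ∈ P, (-1) ^ A.card * (M (fun v => Finset.Icc 1 x \ r' v) A : ℤ) -
      ∑ A ∈ P, (-1) ^ A.card * (M (fun v => Finset.Icc 1 x \ r v) A : ℤ) = ∑ A ∈ P, g A := by
    rw [← Finset.sum_sub_distrib]
    exact Finset.sum_congr rfl fun A _ => (mul_sub _ _ _).symm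
  rw [← sub_pos, hsum, ← Finset.sum_filter_add_sum_filter_not P (fun A => A.card ≤ 1) g]
  -- the low part
  have hfilter1 : P.filter (fun A => A.card ≤ 1) =
      insert ∅ (G.edgeFinset.image fun e => ({e} : Finset (Sym2 V))) := by
    ext A
    simp only [Finset.mem_filter, Finset.mem_powerset, Finset.mem_insert, Finset.mem_image, hP]
    constructor
    · rintro ⟨hsub, hcard⟩
      rcases Nat.le_one_iff_eq_zero_or_eq_one.mp hcard with h0 | h1
      · exact Or.inl (Finset.card_eq_zero.mp h0)
      · obtain ⟨e, rfl⟩ := Finset.card_eq_one.mp h1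
        exact Or.inr ⟨e, hsub (Finset.mem_singleton_self e), rfl⟩
    · rintro (rfl | ⟨e, he, rfl⟩)
      · exact ⟨Finset.empty_subset _, by simp⟩
      · exact ⟨Finset.singleton_subset_iff.mpr he, by simp⟩
  have hempty_notmem : (∅ : Finset (Sym2 V)) ∉
      G.edgeFinset.image (fun e => ({e} : Finset (Sym2 V))) := by
    simp only [Finset.mem_image]
    rintro ⟨e, _, h⟩
    exact Finset.singleton_ne_empty e h
  have hg0 : g ∅ = 0 := by
    have h1 : M (fun v => Finset.Icc 1 x \ r v) (∅ : Finset (Sym2 V))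
        = M (fun v => Finset.Icc 1 x \ r' v) (∅ : Finset (Sym2 V)) := by
      rw [M_empty, M_empty]
      refine Finset.prod_congr rfl fun v _ => ?_
      rw [Finset.card_sdiff_of_subset (hrx v), Finset.card_sdiff_of_subset (hr'x v), (hr v).1, (hr' v).1]
    rw [hg]
    simp [h1]
  have hgsingle : ∀ e ∈ G.edgeFinset,
      g {e} = (((L r e : ℤ)) - (L r' e : ℤ)) * ((x : ℤ) - k) ^ (n - 2) := by
    intro e he
    induction e using Sym2.ind with
    | _ u w =>
      have huw : u ≠ w := by
        intro h
        exact (SimpleGraph.not_isDiag_of_mem_edgeSet G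
          (SimpleGraph.mem_edgeFinset.mp he)) (by simp [h])
      have h1 := M_single_int r x k hrx (fun v => (hr v).1) hkx huw
      have h2 := M_single_int r' x k hr'x (fun v => (hr' v).1) hkx huw
      rw [hg]
      simp only [Finset.card_singleton, pow_one, h1, h2, hL, Sym2.lift_mk]
      ring
  have hS1 : ∑ A ∈ P.filter (fun A => A.card ≤ 1), g A =
      (((∑ e ∈ G.edgeFinset, L r e : ℕ) : ℤ) - ((∑ e ∈ G.edgeFinset, L r' e : ℕ) : ℤ)) *
        ((x : ℤ) - k) ^ (n - 2) := by
    rw [hfilter1, Finset.sum_insert hempty_notmem, hg0, zero_add,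
      Finset.sum_image (fun e _ e' _ h => Finset.singleton_inj.mp h),
      Finset.sum_congr rfl hgsingle, ← Finset.sum_mul, Finset.sum_sub_distrib]
    push_cast
    ring
  -- the high part
  set B : ℤ := (x : ℤ) ^ (n - 2) - ((x : ℤ) - K) ^ (n - 2) with hB
  have hxK0 : (0 : ℤ) ≤ (x : ℤ) - K := by
    have : (K : ℤ) ≤ x := by exact_mod_cast (by omega : K ≤ x)
    linarith
  have hxKx : (x : ℤ) - K ≤ (x : ℤ) := by
    have : (0 : ℤ) ≤ (K : ℤ) := by positivity
    linarith
  have h1xZ : (1 : ℤ) ≤ (x : ℤ) := by exact_mod_cast h1x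
  have hBnn : 0 ≤ B := sub_nonneg.mpr (pow_le_pow_left₀ hxK0 hxKx _)
  have hgabs : ∀ A ∈ P.filter (fun A => ¬ A.card ≤ 1), |g A| ≤ B := by
    intro A hA
    rw [Finset.mem_filter, hP, Finset.mem_powerset] at hA
    obtain ⟨hAE, hcard⟩ := hA
    push_neg at hcard
    have hcA : (repSet A).card ≤ n - 2 :=
      repSet_card_le A G.edgeFinset
        (fun e he => SimpleGraph.not_isDiag_of_mem_edgeSet G (SimpleGraph.mem_edgeFinset.mp he))
        hAE hcard
    have key : ∀ ρ : V → Finset ℕ, (∀ v, ρ v ⊆ Finset.Icc 1 x) →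
        (∀ v, ρ v ⊆ Finset.Icc 1 K) →
        ((x : ℤ) - K) ^ (repSet A).card ≤ (M (fun v => Finset.Icc 1 x \ ρ v) A : ℤ) ∧
        (M (fun v => Finset.Icc 1 x \ ρ v) A : ℤ) ≤ (x : ℤ) ^ (repSet A).card := by
      intro ρ hρx hρK
      constructor
      · have h := pow_le_M A (fun v => Finset.Icc 1 x \ ρ v) K x ?_
        · have hcast : ((x - K : ℕ) : ℤ) = (x : ℤ) - K := by
            rw [Nat.cast_sub (by omega : K ≤ x)]
          calc ((x : ℤ) - K) ^ (repSet A).card = (((x - K : ℕ) : ℤ)) ^ (repSet A).card := by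
                rw [hcast]
            _ ≤ (M (fun v => Finset.Icc 1 x \ ρ v) A : ℤ) := by exact_mod_cast h
        · intro v y hy
          rw [Finset.mem_Icc] at hy
          rw [Finset.mem_sdiff, Finset.mem_Icc]
          refine ⟨⟨by omega, hy.2⟩, fun hmem => ?_⟩
          have := hρK v hmem
          rw [Finset.mem_Icc] at this
          omega
      · exact_mod_cast M_le_pow A _ x (fun v => Finset.sdiff_subset)
    obtain ⟨l1, u1⟩ := key r hrx (fun v => (hr v).2)
    obtain ⟨l2, u2⟩ := key r' hr'x (fun v => (hr' v).2)
    have hmono : (x : ℤ) ^ (repSet A).card - ((x : ℤ) - K) ^ (repSet A).card ≤ B :=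
      pow_sub_pow_mono hxK0 hxKx h1xZ hcA
    rw [hg]
    simp only [abs_mul, abs_pow, abs_neg, abs_one, one_pow, one_mul]
    rw [abs_le]
    constructor <;> linarith
  have hS2 : |∑ A ∈ P.filter (fun A => ¬ A.card ≤ 1), g A| ≤ (2 ^ m : ℤ) * B := by
    calc |∑ A ∈ P.filter (fun A => ¬ A.card ≤ 1), g A|
        ≤ ∑ A ∈ P.filter (fun A => ¬ A.card ≤ 1), |g A| := Finset.abs_sum_le_sum_abs _ _
      _ ≤ ∑ _A ∈ P.filter (fun A => ¬ A.card ≤ 1), B := Finset.sum_le_sum hgabs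
      _ = ((P.filter (fun A => ¬ A.card ≤ 1)).card : ℤ) * B := by
          rw [Finset.sum_const, nsmul_eq_mul]
      _ ≤ (2 ^ m : ℤ) * B := by
          refine mul_le_mul_of_nonneg_right ?_ hBnn
          have h1 : (P.filter (fun A => ¬ A.card ≤ 1)).card ≤ P.card :=
            Finset.card_filter_le _ _
          have h2 : P.card = 2 ^ m := by rw [hP, Finset.card_powerset, hm]
          exact_mod_cast h2 ▸ h1
  -- final arithmetic
  have hfin : (2 ^ m : ℤ) * B < ((x : ℤ) - k) ^ (n - 2) := by
    cases hd : n - 2 with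
    | zero =>
      rw [hB, hd]
      simp
    | succ d' =>
      have hble : B ≤ ((d' : ℤ) + 1) * K * (x : ℤ) ^ d' := by
        have h := pow_sub_pow_le hxK0 hxKx d'
        have e : ((d' : ℤ) + 1) * ((x : ℤ) - ((x : ℤ) - K)) * (x : ℤ) ^ d'
            = ((d' : ℤ) + 1) * K * (x : ℤ) ^ d' := by ring
        rw [hB, hd]
        push_cast at h ⊢
        linarith [e ▸ h]
      have hx0 : (0 : ℤ) ≤ (x : ℤ) := by positivity
      have hxd : (0 : ℤ) < (x : ℤ) ^ d' := pow_pos (by linarith) d'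
      have e4 : (2 : ℤ) ^ (d' + 1) * 2 ^ m * (((d' : ℤ) + 1) * K) < (x : ℤ) := by
        have hnat : 2 ^ (d' + 1) * 2 ^ m * ((d' + 1) * K) ≤ C := by
          rw [hC]
          have h1 : 2 ^ (d' + 1) ≤ 2 ^ n := Nat.pow_le_pow_right (by norm_num) (by omega)
          have h2 : d' + 1 ≤ n := by omega
          calc 2 ^ (d' + 1) * 2 ^ m * ((d' + 1) * K) ≤ 2 ^ n * 2 ^ m * (n * K) :=
                Nat.mul_le_mul (Nat.mul_le_mul h1 (le_refl _)) (Nat.mul_le_mul h2 (le_refl _))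
            _ = 2 ^ n * 2 ^ m * n * K := by ring
        calc (2 : ℤ) ^ (d' + 1) * 2 ^ m * (((d' : ℤ) + 1) * K)
            = ((2 ^ (d' + 1) * 2 ^ m * ((d' + 1) * K) : ℕ) : ℤ) := by push_cast; ring
          _ ≤ (C : ℤ) := by exact_mod_cast hnat
          _ < (x : ℤ) := by exact_mod_cast hCx
      have e2 : (x : ℤ) ^ (d' + 1) ≤ (2 * ((x : ℤ) - k)) ^ (d' + 1) := by
        refine pow_le_pow_left₀ hx0 ?_ _
        have : (2 * k : ℤ) ≤ x := by exact_mod_cast h2kx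
        linarith
      have hkey : (2 : ℤ) ^ (d' + 1) * ((2 : ℤ) ^ m * B) <
          (2 : ℤ) ^ (d' + 1) * ((x : ℤ) - k) ^ (d' + 1) := by
        have e3 : (2 : ℤ) ^ (d' + 1) * (2 ^ m * B) ≤
            (2 : ℤ) ^ (d' + 1) * 2 ^ m * (((d' : ℤ) + 1) * K * (x : ℤ) ^ d') := by
          have hpos : (0 : ℤ) ≤ (2 : ℤ) ^ (d' + 1) * 2 ^ m := by positivity
          calc (2 : ℤ) ^ (d' + 1) * (2 ^ m * B) = ((2 : ℤ) ^ (d' + 1) * 2 ^ m) * B := by ring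
            _ ≤ ((2 : ℤ) ^ (d' + 1) * 2 ^ m) * (((d' : ℤ) + 1) * K * (x : ℤ) ^ d') :=
              mul_le_mul_of_nonneg_left hble hpos
        calc (2 : ℤ) ^ (d' + 1) * ((2 : ℤ) ^ m * B)
            ≤ (2 : ℤ) ^ (d' + 1) * 2 ^ m * (((d' : ℤ) + 1) * K * (x : ℤ) ^ d') := e3
          _ = ((2 : ℤ) ^ (d' + 1) * 2 ^ m * (((d' : ℤ) + 1) * K)) * (x : ℤ) ^ d' := by ring
          _ < (x : ℤ) * (x : ℤ) ^ d' := mul_lt_mul_of_pos_right e4 hxd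
          _ = (x : ℤ) ^ (d' + 1) := by rw [pow_succ]; ring
          _ ≤ (2 * ((x : ℤ) - k)) ^ (d' + 1) := e2
          _ = (2 : ℤ) ^ (d' + 1) * ((x : ℤ) - k) ^ (d' + 1) := by rw [mul_pow]
      exact lt_of_mul_lt_mul_left hkey (by positivity : (0 : ℤ) ≤ (2 : ℤ) ^ (d' + 1))
  have hd1 : (1 : ℤ) ≤ ((∑ e ∈ G.edgeFinset, L r e : ℕ) : ℤ) -
      ((∑ e ∈ G.edgeFinset, L r' e : ℕ) : ℤ) := by omega
  have hpowpos : (0 : ℤ) < ((x : ℤ) - k) ^ (n - 2) := by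
    have : (k : ℤ) < x := by exact_mod_cast hklt
    exact pow_pos (by linarith) _
  have hS1ge : ((x : ℤ) - k) ^ (n - 2) ≤ ∑ A ∈ P.filter (fun A => A.card ≤ 1), g A := by
    rw [hS1]
    nlinarith
  have habs := (abs_le.mp hS2).1
  linarith
end

section
/- Let G be a graph and k ≥ 1. If r* is a k-restraint on G maximizing π_r(G,x) for all sufficiently large x over all k-restraints r, then r* is a proper restraint, i.e. r*(u) ∩ r*(v) = ∅ for every edge uv of G. -/
open Finset

open scoped Classical

theorem disjoint_Ioc_add_mul {K m i j : ℕ} (hij : i ≠ j) :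
    Disjoint (Ioc (K + i * m) (K + (i + 1) * m)) (Ioc (K + j * m) (K + (j + 1) * m)) := by
  wlog h : i < j generalizing i j
  · exact (this hij.symm (by omega)).symm
  have := Nat.mul_le_mul_right m (show i + 1 ≤ j by omega)
  simp only [disjoint_left, mem_Ioc]
  omega

theorem sub_one_mul_sub_two_mul_pow_lt {n K m : ℕ} (hm : n ^ 2 * (K + n) ^ n < m) :
    (n - 1) * (n - 2) * (K + n * m) ^ (n - 3) < m ^ (n - 2) := by
  rcases lt_or_ge n 3 with hn | hn
  · interval_cases n <;> simp
  obtain ⟨j, rfl⟩ := Nat.exists_eq_add_of_le' hn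
  simp only [Nat.add_sub_cancel, show j + 3 - 1 = j + 2 by omega, show j + 3 - 2 = j + 1 by omega]
  have hm0 : 0 < m := lt_of_le_of_lt (Nat.zero_le _) hm
  have hKm : K + (j + 3) * m ≤ (K + (j + 3)) * m := by nlinarith
  have hpow : (K + (j + 3)) ^ j ≤ (K + (j + 3)) ^ (j + 3) :=
    Nat.pow_le_pow_right (by omega) (by omega)
  calc (j + 2) * (j + 1) * (K + (j + 3) * m) ^ j
      ≤ (j + 3) ^ 2 * ((K + (j + 3)) ^ j * m ^ j) := by
        rw [← mul_pow]
        gcongr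
        nlinarith
    _ = ((j + 3) ^ 2 * (K + (j + 3)) ^ j) * m ^ j := by ring
    _ < m * m ^ j :=
        mul_lt_mul_of_pos_right (lt_of_le_of_lt (Nat.mul_le_mul_left _ hpow) hm) (pow_pos hm0 j)
    _ = m ^ (j + 1) := by ring

section

variable {V : Type} [Fintype V]

theorem card_piFinset_ite_singleton (s : Finset V) (f : V → ℕ) (t : V → Finset ℕ) {m : ℕ}
    (ht : ∀ y, #(t y) = m) :
    #(Fintype.piFinset fun y => if y ∈ s then {f y} else t y) = m ^ (Fintype.card V - #s) := by
  rw [Fintype.card_piFinset, ← card_compl]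
  calc _ = ∏ y, if y ∈ s then 1 else m := prod_congr rfl fun y _ => by split_ifs <;> simp [ht]
    _ = m ^ #sᶜ := by rw [prod_ite]; simp [filter_notMem_eq_sdiff, compl_eq_univ_sdiff]

theorem injective_of_mem_piFinset {g : V → Finset ℕ}
    (hg : ∀ y z, y ≠ z → Disjoint (g y) (g z)) {c : V → ℕ} (hc : c ∈ Fintype.piFinset g) :
    c.Injective := by
  rw [Fintype.mem_piFinset] at hc
  intro y z hyz
  by_contra hne
  exact disjoint_left.1 (hg y z hne) (hc y) (hyz ▸ hc z)

def IsRestraint (k : ℕ) (r : V → Finset ℕ) : Prop :=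
  ∀ v, #(r v) = k ∧ r v ⊆ Icc 1 (k * Fintype.card V)

theorem card_biUnion_lt_of_not_disjoint {k : ℕ} {r : V → Finset ℕ} (hr : ∀ w, #(r w) = k)
    {u v : V} (huv : u ≠ v) (h : ¬Disjoint (r u) (r v)) :
    #(univ.biUnion r) < k * Fintype.card V := by
  obtain ⟨a, hau, hav⟩ := not_disjoint_iff.1 h
  have hsplit : univ.biUnion r = (univ.erase v).biUnion r ∪ r v := by
    rw [union_comm, ← biUnion_insert, insert_erase (mem_univ v)]
  have hinter : 0 < #((univ.erase v).biUnion r ∩ r v) :=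
    card_pos.2 ⟨a, mem_inter.2 ⟨mem_biUnion.2 ⟨u, mem_erase.2 ⟨huv, mem_univ u⟩, hau⟩, hav⟩⟩
  have hrest : #((univ.erase v).biUnion r) ≤ (Fintype.card V - 1) * k := by
    simpa using card_biUnion_le_card_mul (univ.erase v) r k fun w _ => (hr w).le
  have hunion := card_union_add_card_inter ((univ.erase v).biUnion r) (r v)
  have hk : k ≤ Fintype.card V * k := Nat.le_mul_of_pos_left k (Fintype.card_pos_iff.2 ⟨u⟩)
  calc #(univ.biUnion r) = #((univ.erase v).biUnion r ∪ r v) := by rw [hsplit]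
    _ < #((univ.erase v).biUnion r) + k := by rw [← hr v]; omega
    _ ≤ (Fintype.card V - 1) * k + k := by gcongr
    _ = k * Fintype.card V := by rw [Nat.sub_one_mul, Nat.sub_add_cancel hk, mul_comm]

theorem exists_notMem_of_not_disjoint {k : ℕ} {r : V → Finset ℕ} (hr : IsRestraint k r)
    {u v : V} (huv : u ≠ v) (h : ¬Disjoint (r u) (r v)) :
    ∃ b ∈ Icc 1 (k * Fintype.card V), ∀ w, b ∉ r w := by
  obtain ⟨b, hb, hbr⟩ := exists_mem_notMem_of_card_lt_card (s := univ.biUnion r)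
    (t := Icc 1 (k * Fintype.card V))
    (by simpa using card_biUnion_lt_of_not_disjoint (fun w => (hr w).1) huv h)
  exact ⟨b, hb, fun w hw => hbr (mem_biUnion.2 ⟨w, mem_univ w, hw⟩)⟩

theorem IsRestraint.update_insert_erase {k : ℕ} {r : V → Finset ℕ} (hr : IsRestraint k r) {u : V}
    {a b : ℕ} (ha : a ∈ r u) (hb : b ∉ r u) (hbK : b ∈ Icc 1 (k * Fintype.card V)) :
    IsRestraint k (Function.update r u (insert b ((r u).erase a))) := by
  intro w
  rcases eq_or_ne w u with rfl | hw
  · rw [Function.update_self, card_insert_of_notMem fun h => hb (mem_of_mem_erase h),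
      card_erase_add_one ha]
    exact ⟨(hr w).1, insert_subset hbK ((erase_subset a _).trans (hr w).2)⟩
  · rw [Function.update_of_ne hw]
    exact hr w

noncomputable def rfiber (G : SimpleGraph V) (r : V → Finset ℕ) (u : V) (x t : ℕ) :
    Finset (V → ℕ) :=
  {c ∈ Fintype.piFinset fun _ => Icc 1 x |
    (∀ v w, G.Adj v w → c v ≠ c w) ∧ (∀ w, w ≠ u → c w ∉ r w) ∧ c u = t}

theorem rcount_eq_sum_card_rfiber (G : SimpleGraph V) (r : V → Finset ℕ) (u : V) (x : ℕ) :
    rcount G r x = ∑ t ∈ Icc 1 x \ r u, #(rfiber G r u x t) := by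
  unfold rcount
  rw [card_eq_sum_card_fiberwise (f := fun c => c u) (t := Icc 1 x \ r u)]
  · refine sum_congr rfl fun t ht => congrArg card ?_
    ext c
    simp only [rfiber, mem_filter, ← and_forall_ne (p := fun w => c w ∉ r w) u]
    constructor
    · rintro ⟨⟨hc, hp, -, hr⟩, rfl⟩
      exact ⟨hc, hp, hr, rfl⟩
    · rintro ⟨hc, hp, hr, rfl⟩
      exact ⟨⟨hc, hp, (mem_sdiff.1 ht).2, hr⟩, rfl⟩
  · intro c hc
    simp only [coe_filter, Set.mem_ofPred_eq, Fintype.mem_piFinset] at hc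
    exact mem_sdiff.2 ⟨hc.1 u, hc.2.2 u⟩

theorem rfiber_update (G : SimpleGraph V) (r : V → Finset ℕ) (u : V) (s : Finset ℕ) (x t : ℕ) :
    rfiber G (Function.update r u s) u x t = rfiber G r u x t := by
  ext c
  simp +contextual only [rfiber, mem_filter, ne_eq, not_false_eq_true, Function.update_of_ne]

theorem rcount_update_add_card_rfiber (G : SimpleGraph V) (r : V → Finset ℕ) {u : V} {x a b : ℕ}
    (ha : a ∈ r u) (hb : b ∉ r u) (hax : a ∈ Icc 1 x) (hbx : b ∈ Icc 1 x) :
    rcount G (Function.update r u (insert b ((r u).erase a))) x + #(rfiber G r u x b) =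
      rcount G r x + #(rfiber G r u x a) := by
  have hab : a ≠ b := by rintro rfl; exact hb ha
  have hset : Icc 1 x \ insert b ((r u).erase a) = insert a ((Icc 1 x \ r u).erase b) := by
    ext t
    simp only [mem_sdiff, mem_insert, mem_erase]
    by_cases hta : t = a <;> by_cases htb : t = b <;> simp_all
  simp only [rcount_eq_sum_card_rfiber G _ u, rfiber_update, Function.update_self, hset]
  rw [sum_insert (by simp [ha]), add_assoc, sum_erase_add _ _ (mem_sdiff.2 ⟨hbx, hb⟩), add_comm]

-- Colourings drawn from these sets are injective and avoid every restraint inside `Icc 1 K`.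
noncomputable def blockSets (u v : V) (a b K m : ℕ) : V → Finset ℕ := fun y =>
  if y ∈ ({u, v} : Finset V) then {if y = u then a else b}
  else Ioc (K + Fintype.equivFin V y * m) (K + (Fintype.equivFin V y + 1) * m)

noncomputable def recolour (G : SimpleGraph V) (u : V) (a b : ℕ) (c : V → ℕ) : V → ℕ :=
  if ∃ z, G.Adj u z ∧ c z = a then Equiv.swap a b ∘ c else Function.update c u a

variable {G : SimpleGraph V} {r : V → Finset ℕ} {u v : V} {x a b t K m : ℕ} {c : V → ℕ}

theorem mem_rfiber :
    c ∈ rfiber G r u x t ↔ (∀ y, c y ∈ Icc 1 x) ∧ (∀ v w, G.Adj v w → c v ≠ c w) ∧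
      (∀ w, w ≠ u → c w ∉ r w) ∧ c u = t := by
  simp only [rfiber, mem_filter, Fintype.mem_piFinset]

theorem update_mem_rfiber (hc : c ∈ rfiber G r u x t) (hax : a ∈ Icc 1 x)
    (hnbr : ∀ z, G.Adj u z → c z ≠ a) : Function.update c u a ∈ rfiber G r u x a := by
  simp only [rfiber, mem_filter, Fintype.mem_piFinset] at hc ⊢
  obtain ⟨hcx, hprop, hr, -⟩ := hc
  refine ⟨fun y => ?_, fun y z hyz => ?_, fun w hw => ?_, Function.update_self ..⟩
  · rcases eq_or_ne y u with rfl | hy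
    · simpa using hax
    · simpa [hy] using hcx y
  · rcases eq_or_ne y u with rfl | hy
    · simpa [hyz.ne'] using (hnbr z hyz).symm
    rcases eq_or_ne z u with rfl | hz
    · simpa [hy] using hnbr y hyz.symm
    · simpa [hy, hz] using hprop y z hyz
  · simpa [hw] using hr w hw

theorem update_injOn_rfiber :
    Set.InjOn (Function.update · u a) (rfiber G r u x t : Set (V → ℕ)) := by
  intro c₁ hc₁ c₂ hc₂ h
  funext y
  rcases eq_or_ne y u with rfl | hy
  · rw [(mem_rfiber.1 hc₁).2.2.2, (mem_rfiber.1 hc₂).2.2.2]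
  · simpa [hy] using congrFun h y

theorem swap_comp_mem_rfiber (hc : c ∈ rfiber G r u x t) (hax : a ∈ Icc 1 x) (hbx : b ∈ Icc 1 x)
    (hb : ∀ w, b ∉ r w) (hadm : ∀ w, w ≠ u → c w = b → a ∉ r w) :
    Equiv.swap a b ∘ c ∈ rfiber G r u x (Equiv.swap a b t) := by
  simp only [mem_rfiber, Function.comp_apply] at hc ⊢
  obtain ⟨hcx, hprop, hr, rfl⟩ := hc
  refine ⟨fun y => ?_, fun y z hyz => (Equiv.swap a b).injective.ne (hprop y z hyz),
    fun w hw => ?_, rfl⟩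
  · rw [Equiv.swap_apply_def]
    split_ifs
    exacts [hbx, hax, hcx y]
  · rw [Equiv.swap_apply_def]
    split_ifs with h1 h2
    · exact hb w
    · exact hadm w hw h2
    · exact hr w hw

theorem ne_of_adj_of_mem_rfiber (hc : c ∈ rfiber G r u x t) {z : V} (hz : G.Adj u z) :
    c z ≠ t :=
  (mem_rfiber.1 hc).2.2.2 ▸ ((mem_rfiber.1 hc).2.1 u z hz).symm

theorem exists_adj_recolour_eq_iff (hc : c ∈ rfiber G r u x b) :
    (∃ z, G.Adj u z ∧ recolour G u a b c z = b) ↔ ∃ z, G.Adj u z ∧ c z = a := by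
  by_cases h : ∃ z, G.Adj u z ∧ c z = a
  · simp only [recolour, if_pos h, Function.comp_apply, Equiv.swap_apply_eq_iff,
      Equiv.swap_apply_right]
  · refine iff_of_false (fun ⟨z, hz, hzb⟩ => ne_of_adj_of_mem_rfiber hc hz ?_) h
    simpa [recolour, if_neg h, Function.update_of_ne hz.ne'] using hzb

theorem recolour_mem_rfiber (huv : G.Adj u v) (hav : a ∈ r v) (hb : ∀ w, b ∉ r w)
    (hax : a ∈ Icc 1 x) (hbx : b ∈ Icc 1 x) (hc : c ∈ rfiber G r u x b)
    (hgood : ¬((∃ z, G.Adj u z ∧ c z = a) ∧ ∃ w, w ≠ u ∧ c w = b ∧ a ∈ r w)) :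
    recolour G u a b c ∈ rfiber G r u x a ∧ recolour G u a b c v ≠ b := by
  by_cases hnbr : ∃ z, G.Adj u z ∧ c z = a
  · have hcv : c v ≠ a := fun h => (mem_rfiber.1 hc).2.2.1 v huv.ne' (h ▸ hav)
    have := swap_comp_mem_rfiber hc hax hbx hb fun w hw hwb haw => hgood ⟨hnbr, w, hw, hwb, haw⟩
    rw [Equiv.swap_apply_right] at this
    simp only [recolour, if_pos hnbr, Function.comp_apply, ne_eq, Equiv.swap_apply_eq_iff,
      Equiv.swap_apply_right]
    exact ⟨this, hcv⟩
  · simp only [recolour, if_neg hnbr]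
    refine ⟨update_mem_rfiber hc hax fun z hz hza => hnbr ⟨z, hz, hza⟩, ?_⟩
    rw [Function.update_of_ne huv.ne']
    exact ne_of_adj_of_mem_rfiber hc huv

theorem recolour_injOn : Set.InjOn (recolour G u a b) (rfiber G r u x b : Set (V → ℕ)) := by
  intro c₁ hc₁ c₂ hc₂ h
  -- the two branches of `recolour` are told apart by whether a neighbour of `u` gets colour `b`
  have hiff := (exists_adj_recolour_eq_iff hc₁).symm.trans (h ▸ exists_adj_recolour_eq_iff hc₂)
  by_cases h₁ : ∃ z, G.Adj u z ∧ c₁ z = a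
  · exact (Equiv.swap a b).injective.comp_left
      (by simpa [recolour, if_pos h₁, if_pos (hiff.1 h₁)] using h)
  · exact update_injOn_rfiber hc₁ hc₂
      (by simpa [recolour, if_neg h₁, if_neg (hiff.not.1 h₁)] using h)

theorem card_filter_rfiber_le (huv : G.Adj u v) (hav : a ∈ r v) (hb : ∀ w, b ∉ r w)
    (hax : a ∈ Icc 1 x) (hbx : b ∈ Icc 1 x) :
    #{c ∈ rfiber G r u x b | ¬((∃ z, G.Adj u z ∧ c z = a) ∧ ∃ w, w ≠ u ∧ c w = b ∧ a ∈ r w)} ≤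
      #{c ∈ rfiber G r u x a | c v ≠ b} := by
  refine card_le_card_of_injOn (recolour G u a b) (fun c hc => ?_)
    (recolour_injOn.mono (coe_subset.2 (filter_subset _ _)))
  simp only [coe_filter, Set.mem_ofPred_eq] at hc ⊢
  exact recolour_mem_rfiber huv hav hb hax hbx hc.1 hc.2

theorem card_filter_rfiber_le_pow (hab : a ≠ b) :
    #{c ∈ rfiber G r u x b | (∃ z, G.Adj u z ∧ c z = a) ∧ ∃ w, w ≠ u ∧ c w = b ∧ a ∈ r w} ≤
      (Fintype.card V - 1) * (Fintype.card V - 2) * x ^ (Fintype.card V - 3) := by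
  let pinned : V × V → Finset (V → ℕ) := fun p => Fintype.piFinset fun y =>
    if y ∈ ({u, p.1, p.2} : Finset V) then {if y = p.1 then a else b} else Icc 1 x
  have hsub : {c ∈ rfiber G r u x b | (∃ z, G.Adj u z ∧ c z = a) ∧
      ∃ w, w ≠ u ∧ c w = b ∧ a ∈ r w} ⊆ (univ.erase u).offDiag.biUnion pinned := by
    intro c hc
    simp only [mem_filter, mem_rfiber] at hc
    obtain ⟨⟨hcx, -, -, hcu⟩, ⟨z, hz, hcz⟩, w, hw, hcw, -⟩ := hc
    have hzw : z ≠ w := fun h => hab (by rw [← hcz, ← hcw, h])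
    refine mem_biUnion.2 ⟨(z, w), by simp [hz.ne', hw, hzw], ?_⟩
    simp only [pinned, Fintype.mem_piFinset]
    intro y
    split_ifs with hy hyz
    · simp [hyz, hcz]
    · simp only [mem_insert, mem_singleton] at hy
      rcases hy with rfl | rfl | rfl
      · simp [hcu]
      · exact absurd rfl hyz
      · simp [hcw]
    · exact hcx y
  have hpinned : ∀ p ∈ (univ.erase u).offDiag, #(pinned p) = x ^ (Fintype.card V - 3) := by
    intro p hp
    simp only [mem_offDiag, mem_erase] at hp
    rw [card_piFinset_ite_singleton _ _ _ (m := x) fun _ => by simp]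
    rw [card_insert_of_notMem (by simp [Ne.symm hp.1.1, Ne.symm hp.2.1.1]),
      card_pair hp.2.2]
  calc _ ≤ #((univ.erase u).offDiag.biUnion pinned) := card_le_card hsub
    _ ≤ ∑ p ∈ (univ.erase u).offDiag, #(pinned p) := card_biUnion_le
    _ = _ := by
      rw [sum_congr rfl hpinned, sum_const, offDiag_card, card_erase_of_mem (mem_univ u),
        card_univ, smul_eq_mul, ← Nat.mul_sub_one, Nat.sub_sub]

theorem blockSets_disjoint (hab : a ≠ b) (haK : a ≤ K) (hbK : b ≤ K) {y z : V} (hyz : y ≠ z) :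
    Disjoint (blockSets u v a b K m y) (blockSets u v a b K m z) := by
  have hpin : ∀ w, (if w = u then a else b) ≤ K := fun w => by split_ifs <;> assumption
  unfold blockSets
  by_cases hy : y ∈ ({u, v} : Finset V) <;> by_cases hz : z ∈ ({u, v} : Finset V)
  · rw [if_pos hy, if_pos hz, disjoint_singleton]
    simp only [mem_insert, mem_singleton] at hy hz
    split_ifs <;> grind
  · rw [if_pos hy, if_neg hz, disjoint_singleton_left, mem_Ioc]
    have := hpin y
    omega
  · rw [if_neg hy, if_pos hz, disjoint_singleton_right, mem_Ioc]
    have := hpin z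
    omega
  · rw [if_neg hy, if_neg hz]
    exact disjoint_Ioc_add_mul (Fin.val_injective.ne ((Fintype.equivFin V).injective.ne hyz))

theorem card_piFinset_blockSets (huv : u ≠ v) :
    #(Fintype.piFinset (blockSets u v a b K m)) = m ^ (Fintype.card V - 2) := by
  unfold blockSets
  rw [card_piFinset_ite_singleton (m := m) _ _ _ fun y => by
    rw [Nat.card_Ioc, add_one_mul]; omega, card_pair huv]

theorem piFinset_blockSets_subset (huv : G.Adj u v) (hbv : b ∉ r v) (hab : a ≠ b)
    (haK : a ∈ Icc 1 K) (hbK : b ∈ Icc 1 K) (hrK : ∀ w, r w ⊆ Icc 1 K)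
    (hx : K + Fintype.card V * m ≤ x) :
    Fintype.piFinset (blockSets u v a b K m) ⊆ {c ∈ rfiber G r u x a | c v = b} := by
  intro c hc
  have hcg := Fintype.mem_piFinset.1 hc
  have hcu : c u = a := by simpa [blockSets] using hcg u
  have hcv : c v = b := by simpa [blockSets, huv.ne'] using hcg v
  have habove : ∀ y, y ≠ u → y ≠ v → K < c y ∧ c y ≤ x := fun y hyu hyv => by
    have hy := hcg y
    simp only [blockSets, mem_insert, mem_singleton, hyu, hyv, or_self, if_false, mem_Ioc] at hy
    have := Nat.mul_le_mul_right m
      (show (Fintype.equivFin V y : ℕ) + 1 ≤ Fintype.card V from (Fintype.equivFin V y).isLt)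
    exact ⟨by omega, by omega⟩
  have hinj := injective_of_mem_piFinset
    (fun y z => blockSets_disjoint hab (mem_Icc.1 haK).2 (mem_Icc.1 hbK).2) hc
  refine mem_filter.2 ⟨mem_rfiber.2 ⟨fun y => ?_, fun y z hyz => hinj.ne hyz.ne,
    fun w hwu => ?_, hcu⟩, hcv⟩
  · have hKx : Icc 1 K ⊆ Icc 1 x := Icc_subset_Icc_right (by omega)
    rcases eq_or_ne y u with rfl | hyu
    · exact hcu ▸ hKx haK
    rcases eq_or_ne y v with rfl | hyv
    · exact hcv ▸ hKx hbK
    exact mem_Icc.2 ⟨by have := habove y hyu hyv; omega, (habove y hyu hyv).2⟩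
  · rcases eq_or_ne w v with rfl | hwv
    · exact hcv ▸ hbv
    · exact fun h => absurd (mem_Icc.1 (hrK w h)).2 (by have := habove w hwu hwv; omega)

theorem pow_le_card_filter_rfiber (huv : G.Adj u v) (hbv : b ∉ r v) (hab : a ≠ b)
    (haK : a ∈ Icc 1 K) (hbK : b ∈ Icc 1 K) (hrK : ∀ w, r w ⊆ Icc 1 K)
    (hx : K + Fintype.card V * m ≤ x) :
    m ^ (Fintype.card V - 2) ≤ #{c ∈ rfiber G r u x a | c v = b} :=
  card_piFinset_blockSets (a := a) (b := b) (K := K) huv.ne ▸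
    card_le_card (piFinset_blockSets_subset huv hbv hab haK hbK hrK hx)

theorem card_rfiber_lt_card_rfiber (huv : G.Adj u v) (hav : a ∈ r v)
    (hb : ∀ w, b ∉ r w) (haK : a ∈ Icc 1 K) (hbK : b ∈ Icc 1 K) (hrK : ∀ w, r w ⊆ Icc 1 K)
    (hm : Fintype.card V ^ 2 * (K + Fintype.card V) ^ Fintype.card V < m) :
    #(rfiber G r u (K + Fintype.card V * m) b) < #(rfiber G r u (K + Fintype.card V * m) a) := by
  have hab : a ≠ b := by rintro rfl; exact hb v hav
  have hKx : Icc 1 K ⊆ Icc 1 (K + Fintype.card V * m) := Icc_subset_Icc_right (Nat.le_add_right _ _)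
  rw [← card_filter_add_card_filter_not (s := rfiber G r u _ b)
      (fun c => ¬((∃ z, G.Adj u z ∧ c z = a) ∧ ∃ w, w ≠ u ∧ c w = b ∧ a ∈ r w)),
    ← card_filter_add_card_filter_not (s := rfiber G r u _ a) (fun c => c v ≠ b)]
  refine add_lt_add_of_le_of_lt (card_filter_rfiber_le huv hav hb (hKx haK) (hKx hbK)) ?_
  simp only [not_not]
  calc _ ≤ _ := card_filter_rfiber_le_pow hab
    _ < m ^ (Fintype.card V - 2) := sub_one_mul_sub_two_mul_pow_lt hm
    _ ≤ _ := pow_le_card_filter_rfiber huv (hb v) hab haK hbK hrK le_rfl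

end

theorem stmt9_general {V : Type} [Fintype V] (G : SimpleGraph V) (k : ℕ)
    (rstar : V → Finset ℕ)
    (hrstar : ∀ v : V, (rstar v).card = k ∧ rstar v ⊆ Finset.Icc 1 (k * Fintype.card V))
    (hmax : ∃ N : ℕ, ∀ x ≥ N, ∀ r : V → Finset ℕ,
      (∀ v : V, (r v).card = k ∧ r v ⊆ Finset.Icc 1 (k * Fintype.card V)) →
      rcount G r x ≤ rcount G rstar x) :
    ∀ u v : V, G.Adj u v → Disjoint (rstar u) (rstar v) := by
  obtain ⟨N, hmax⟩ := hmax
  intro u v huv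
  by_contra hoverlap
  obtain ⟨a, hau, hav⟩ := not_disjoint_iff.1 hoverlap
  obtain ⟨b, hbK, hb⟩ := exists_notMem_of_not_disjoint hrstar huv.ne hoverlap
  have hn : 0 < Fintype.card V := Fintype.card_pos_iff.2 ⟨u⟩
  let m := Fintype.card V ^ 2 * (k * Fintype.card V + Fintype.card V) ^ Fintype.card V + N + 1
  let x := k * Fintype.card V + Fintype.card V * m
  have hN : N ≤ x := le_add_left (le_mul_of_one_le_of_le hn (by omega))
  have hKx : Icc 1 (k * Fintype.card V) ⊆ Icc 1 x := Icc_subset_Icc_right (Nat.le_add_right _ _)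
  have hlt : #(rfiber G rstar u x b) < #(rfiber G rstar u x a) :=
    card_rfiber_lt_card_rfiber huv hav hb ((hrstar u).2 hau) hbK (fun w => (hrstar w).2)
      (by omega)
  have hexchange := rcount_update_add_card_rfiber G rstar hau (hb u) (hKx ((hrstar u).2 hau))
    (hKx hbK)
  have hle := hmax x hN _ (IsRestraint.update_insert_erase hrstar hau (hb u) hbK)
  omega

theorem stmt9 {V : Type} [Fintype V] (G : SimpleGraph V) (k : ℕ) (hk : 1 ≤ k)
    (rstar : V → Finset ℕ)
    (hrstar : ∀ v : V, (rstar v).card = k ∧ rstar v ⊆ Finset.Icc 1 (k * Fintype.card V))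
    (hmax : ∃ N : ℕ, ∀ x ≥ N, ∀ r : V → Finset ℕ,
      (∀ v : V, (r v).card = k ∧ r v ⊆ Finset.Icc 1 (k * Fintype.card V)) →
      rcount G r x ≤ rcount G rstar x) :
    ∀ u v : V, G.Adj u v → Disjoint (rstar u) (rstar v) :=
  stmt9_general G k rstar hrstar hmax
end

section
/- For the path P_4 with vertices v_1,v_2,v_3,v_4 and edges v_1v_2, v_2v_3, v_3v_4, the simple restraints r = [{1},{2},{2},{1}] and r' = [{1},{2},{3},{3}] satisfy π_r(P_4,x) = π_{r'}(P_4,x) = x^4 − 7x^3 + 20x^2 − 28x + 16 for all x ≥ 4, even though r and r' are not equivalent. -/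
/-- Two restraints on `G` are equivalent if one arises from the other via a graph automorphism
together with a bijection between the sets of used restraint colours. -/
def restraintEquiv {V : Type} [Fintype V] [DecidableEq V] (G : SimpleGraph V)
    (r r' : V → Finset ℕ) : Prop :=
  ∃ φ : G ≃g G, ∃ f : ℕ → ℕ,
    Set.InjOn f ↑(Finset.univ.biUnion r) ∧ ∀ u : V, (r u).image f = r' (φ u)

/-- The path `P₄` with vertices `0,1,2,3` and edges `01, 12, 23`. -/
def P4 : SimpleGraph (Fin 4) := SimpleGraph.fromRel (fun i j => j.val = i.val + 1)

/-!
Cut a colouring of `P₄` at its middle edge `v₂v₃`. Once `v₂` and `v₃` carry colours `b ≠ c`,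
the end vertex `v₁` may take any colour except `b` and its forbidden colour: `x - 2` choices, or
`x - 1` when `b` is that forbidden colour; likewise for `v₄` and `c`. Summing over `c` and then
over `b`, the summand is constant away from the restraint colours, and both restraints give
`(x - 2)² ((x - 2)² + (x - 2) + 2)`.

An equivalence of restraints maps the set of colours used by one injectively onto the set used by
the other, but `r` uses two colours and `r'` three.
-/

open Finset

lemma forall_P4_adj_ne {α : Type} (c : Fin 4 → α) :
    (∀ v w, P4.Adj v w → c v ≠ c w) ↔ c 0 ≠ c 1 ∧ c 1 ≠ c 2 ∧ c 2 ≠ c 3 := by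
  have adj : ∀ {v w : Fin 4}, P4.Adj v w ↔ v ≠ w ∧ (w.val = v.val + 1 ∨ v.val = w.val + 1) :=
    Iff.rfl
  refine ⟨fun h => ⟨h 0 1 (by simp [adj]), h 1 2 (by simp [adj]), h 2 3 (by simp [adj])⟩, ?_⟩
  rintro ⟨h01, h12, h23⟩ v w hvw
  fin_cases v <;> fin_cases w <;> simp_all [Ne.symm]

lemma rcount_P4_singleton_eq_sum (x e₀ e₁ e₂ e₃ : ℕ) :
    rcount P4 ![{e₀}, {e₁}, {e₂}, {e₃}] x =
      ∑ b ∈ (Icc 1 x).erase e₁, ∑ c ∈ ((Icc 1 x).erase e₂).erase b,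
        #(((Icc 1 x).erase e₀).erase b) * #(((Icc 1 x).erase e₃).erase c) := by
  simp only [← card_product, ← card_sigma]
  refine card_nbij' (fun c => ⟨c 1, c 2, c 0, c 3⟩) (fun p => ![p.2.2.1, p.1, p.2.1, p.2.2.2])
    ?_ ?_ ?_ ?_
  · intro c hc
    simp only [coe_filter, Fintype.mem_piFinset, forall_P4_adj_ne, Set.mem_ofPred_eq] at hc
    obtain ⟨hI, ⟨h01, h12, h23⟩, hr⟩ := hc
    simp only [Fin.forall_fin_succ, Fin.succ_zero_eq_one, Fin.succ_one_eq_two, Fin.reduceSucc,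
      mem_Icc, Matrix.cons_val_zero, Matrix.cons_val_succ, mem_singleton] at hI hr
    simp [hI, hr, h01, Ne.symm h12, Ne.symm h23]
  · intro p hp
    simp only [coe_sigma, Set.mem_sigma_iff, coe_product, Set.mem_prod, coe_erase, Set.mem_sdiff,
      coe_Icc, Set.mem_Icc, Set.mem_singleton_iff] at hp
    simp only [coe_filter, Fintype.mem_piFinset, forall_P4_adj_ne, Set.mem_ofPred_eq]
    simp [Fin.forall_fin_succ, hp, Ne.symm hp.2.1.2, Ne.symm hp.2.2.2.2]
  · intro c _
    funext v
    fin_cases v <;> rfl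
  · intro p _
    rfl

lemma card_erase_erase_of_mem {α : Type*} [DecidableEq α] {s : Finset α} {e p : α}
    (he : e ∈ s) (hp : p ∈ s) :
    (#((s.erase e).erase p) : ℤ) = #s - 2 + if p = e then 1 else 0 := by
  rw [← card_erase_add_one he]
  split_ifs with h
  · rw [h, erase_idem]
    push_cast
    ring
  · rw [← card_erase_add_one (mem_erase.2 ⟨h, hp⟩)]
    push_cast
    ring

lemma rcount_P4_singleton (x e₀ e₁ e₂ e₃ : ℕ) (h₀ : e₀ ∈ Icc 1 x) (h₂ : e₂ ∈ Icc 1 x)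
    (h₃ : e₃ ∈ Icc 1 x) :
    (rcount P4 ![{e₀}, {e₁}, {e₂}, {e₃}] x : ℤ) =
      ∑ b ∈ (Icc 1 x).erase e₁, ((x - 2 + if b = e₀ then 1 else 0) *
        ((x - 2) * (x - 2 + if b = e₂ then 1 else 0) + if b ≠ e₃ ∧ e₂ ≠ e₃ then 1 else 0) : ℤ) := by
  rw [rcount_P4_singleton_eq_sum]
  push_cast
  refine sum_congr rfl fun b hb => ?_
  have hb : b ∈ Icc 1 x := mem_of_mem_erase hb
  have hright : ∀ c ∈ ((Icc 1 x).erase e₂).erase b,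
      (#(((Icc 1 x).erase e₃).erase c) : ℤ) = x - 2 + if c = e₃ then 1 else 0 := fun c hc => by
    rw [card_erase_erase_of_mem h₃ (mem_of_mem_erase (mem_of_mem_erase hc)), Nat.card_Icc]
    push_cast
    ring
  rw [← mul_sum, sum_congr rfl hright, sum_add_distrib, sum_const, nsmul_eq_mul, sum_ite_eq',
    card_erase_erase_of_mem h₀ hb, card_erase_erase_of_mem h₂ hb, Nat.card_Icc]
  simp only [mem_erase, h₃, and_true, Nat.add_sub_cancel, ne_comm (a := e₃)]
  ring

lemma sum_Icc_erase_two {x : ℕ} (hx : 3 ≤ x) (g : ℕ → ℤ) (G : ℤ)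
    (hg : ∀ b, b ≠ 1 → b ≠ 2 → b ≠ 3 → g b = G) :
    ∑ b ∈ (Icc 1 x).erase 2, g b = g 1 + g 3 + (x - 3) * G := by
  have hT : ({1, 3} : Finset ℕ) ⊆ (Icc 1 x).erase 2 := by
    intro b hb
    simp only [mem_insert, mem_singleton] at hb
    simp only [mem_erase, mem_Icc]
    omega
  have hcard : #((Icc 1 x).erase 2 \ {1, 3}) = x - 3 := by
    rw [card_sdiff_of_subset hT, card_erase_of_mem (mem_Icc.2 ⟨by norm_num, by omega⟩),
      Nat.card_Icc, card_pair (by decide)]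
    omega
  rw [← sum_sdiff hT, sum_pair (by decide), sum_congr rfl fun b hb => hg b ?_ ?_ ?_, sum_const,
    hcard, nsmul_eq_mul, Nat.cast_sub hx]
  · push_cast
    ring
  all_goals
    simp only [mem_sdiff, mem_erase, mem_insert, mem_singleton] at hb
    tauto

lemma rcount_P4_1221 {x : ℕ} (hx : 3 ≤ x) :
    (rcount P4 ![{1}, {2}, {2}, {1}] x : ℤ) =
      (x : ℤ) ^ 4 - 7 * (x : ℤ) ^ 3 + 20 * (x : ℤ) ^ 2 - 28 * (x : ℤ) + 16 := by
  have h₁ : 1 ∈ Icc 1 x := mem_Icc.2 ⟨le_rfl, by omega⟩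
  have h₂ : 2 ∈ Icc 1 x := mem_Icc.2 ⟨by norm_num, by omega⟩
  rw [rcount_P4_singleton x 1 2 2 1 h₁ h₂ h₁,
    sum_Icc_erase_two hx _ ((x - 2) * ((x - 2) * (x - 2) + 1))
      fun b hb₁ hb₂ _ => by simp [hb₁, hb₂]]
  simp only [↓reduceIte, OfNat.one_ne_ofNat, OfNat.ofNat_ne_one, Nat.succ_ne_self, ne_eq,
    not_true_eq_false, not_false_eq_true, and_true, and_self, add_zero]
  ring

lemma rcount_P4_1233 {x : ℕ} (hx : 3 ≤ x) :
    (rcount P4 ![{1}, {2}, {3}, {3}] x : ℤ) =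
      (x : ℤ) ^ 4 - 7 * (x : ℤ) ^ 3 + 20 * (x : ℤ) ^ 2 - 28 * (x : ℤ) + 16 := by
  have h₁ : 1 ∈ Icc 1 x := mem_Icc.2 ⟨le_rfl, by omega⟩
  have h₃ : 3 ∈ Icc 1 x := mem_Icc.2 ⟨by norm_num, hx⟩
  rw [rcount_P4_singleton x 1 2 3 3 h₁ h₃ h₃,
    sum_Icc_erase_two hx _ ((x - 2) * ((x - 2) * (x - 2)))
      fun b hb₁ _ hb₃ => by simp [hb₁, hb₃]]
  simp only [↓reduceIte, OfNat.one_ne_ofNat, OfNat.ofNat_ne_one, ne_eq, not_true_eq_false,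
    not_false_eq_true, and_false, and_self, add_zero]
  ring

lemma restraintEquiv.card_biUnion_eq {V : Type} [Fintype V] [DecidableEq V] {G : SimpleGraph V}
    {r r' : V → Finset ℕ} (h : restraintEquiv G r r') :
    #(univ.biUnion r') = #(univ.biUnion r) := by
  obtain ⟨φ, f, hf, hr⟩ := h
  have himage : univ.biUnion r' = (univ.biUnion r).image f := by
    simp only [biUnion_image, hr]
    rw [← image_biUnion (f := φ), image_univ_of_surjective φ.surjective]
  rw [himage, card_image_of_injOn hf]

theorem stmt12 :
    (∀ x : ℕ, 4 ≤ x →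
        (rcount P4 ![({1} : Finset ℕ), {2}, {2}, {1}] x : ℤ) =
          (x : ℤ) ^ 4 - 7 * (x : ℤ) ^ 3 + 20 * (x : ℤ) ^ 2 - 28 * (x : ℤ) + 16 ∧
        (rcount P4 ![({1} : Finset ℕ), {2}, {3}, {3}] x : ℤ) =
          (x : ℤ) ^ 4 - 7 * (x : ℤ) ^ 3 + 20 * (x : ℤ) ^ 2 - 28 * (x : ℤ) + 16) ∧
      ¬ restraintEquiv P4 ![({1} : Finset ℕ), {2}, {2}, {1}]
          ![({1} : Finset ℕ), {2}, {3}, {3}] :=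
  ⟨fun _ hx => ⟨rcount_P4_1221 (by omega), rcount_P4_1233 (by omega)⟩,
    fun h => absurd h.card_biUnion_eq (by decide)⟩
end
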